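/- arXiv:2209.09948 — 8 statements merged into one kernel-verified Lean document; each statement's English description precedes it below -/
import Mathlib

section
/- Let k > 2 with k ≤ n, and let g₁,…,g_k be pseudomonomials g_j = ∏_{i∈σ_j}xᵢ·∏_{i∈τ_j}(1−xᵢ) with σ_j, τ_j ⊆ {k+1,…,n} (so none involves the indices 1,…,k), such that no two distinct g_j share an index. For i ≠ j in {1,…,k} let C(i,j) be the cyclic interval {i+1, i+2, …, j} of {1,…,k} taken modulo k (i.e., C(i,j) = {i+1,…,j} if i < j and C(i,j) = {i+1,…,k} ∪ {1,…,j} if j < i), and let G(i,j) be the pseudomonomial ∏_{ℓ∈⋃_{m∈C(i,j)}σ_m} x_ℓ · ∏_{ℓ∈⋃_{m∈C(i,j)}τ_m} (1−x_ℓ). Let J be the ideal of R generated by x₁(1−x_k)g₁ and by x_j(1−x_{j−1})g_j for 2 ≤ j ≤ k. Then CF(J) = {x_j·(1−x_i)·G(i,j) : 1 ≤ i, j ≤ k, i ≠ j}. In particular J is not in canonical form as presented. -/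
open MvPolynomial

/-- The pseudomonomial `∏_{i∈σ} xᵢ · ∏_{i∈τ} (1 - xᵢ)` in `F₂[x₁,…,xₙ]`. -/
noncomputable def psm (n : ℕ) (σ τ : Finset (Fin n)) : MvPolynomial (Fin n) (ZMod 2) :=
  (∏ i ∈ σ, X i) * ∏ i ∈ τ, (1 - X i)

/-- A polynomial of `F₂[x₁,…,xₙ]` is a pseudomonomial if it has the form
`∏_{i∈σ} xᵢ · ∏_{i∈τ} (1 - xᵢ)` for disjoint `σ τ`. -/
def IsPseudomonomial {n : ℕ} (f : MvPolynomial (Fin n) (ZMod 2)) : Prop :=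
  ∃ σ τ : Finset (Fin n), Disjoint σ τ ∧ f = psm n σ τ

/-- The canonical form of an ideal `J`: the set of minimal pseudomonomials of `J`,
i.e. pseudomonomials `f ∈ J` such that no pseudomonomial `g ≠ f` dividing `f` lies in `J`. -/
def CF {n : ℕ} (J : Ideal (MvPolynomial (Fin n) (ZMod 2))) :
    Set (MvPolynomial (Fin n) (ZMod 2)) :=
  {f | IsPseudomonomial f ∧ f ∈ J ∧
    ∀ g : MvPolynomial (Fin n) (ZMod 2), IsPseudomonomial g → g ∣ f → g ≠ f → g ∉ J}
namespace CFAux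

lemma zmod2_ne_zero (x : ZMod 2) : x ≠ 0 ↔ x = 1 := by revert x; decide

lemma zmod2_one_sub_ne_zero (x : ZMod 2) : 1 - x ≠ 0 ↔ x = 0 := by revert x; decide

lemma zmod2_one_sub_eq_one (x : ZMod 2) : 1 - x = 1 ↔ x = 0 := by revert x; decide

variable {n : ℕ}

lemma eval_psm (pt : Fin n → ZMod 2) (S T : Finset (Fin n)) :
    eval pt (psm n S T) = (∏ i ∈ S, pt i) * ∏ i ∈ T, (1 - pt i) := by
  simp [psm]

lemma eval_psm_ne_zero {pt : Fin n → ZMod 2} {S T : Finset (Fin n)} :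
    eval pt (psm n S T) ≠ 0 ↔ (∀ i ∈ S, pt i = 1) ∧ (∀ i ∈ T, pt i = 0) := by
  rw [eval_psm, mul_ne_zero_iff, Finset.prod_ne_zero_iff, Finset.prod_ne_zero_iff]
  simp only [zmod2_ne_zero, zmod2_one_sub_eq_one]

lemma psm_split {S' S T' T : Finset (Fin n)} (hS : S' ⊆ S) (hT : T' ⊆ T) :
    psm n S T = psm n S' T' * psm n (S \ S') (T \ T') := by
  unfold psm
  rw [← Finset.prod_sdiff hS, ← Finset.prod_sdiff (f := fun i => (1 : MvPolynomial (Fin n) (ZMod 2)) - X i) hT]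
  ring

lemma psm_dvd_of_subset {S' S T' T : Finset (Fin n)} (hS : S' ⊆ S) (hT : T' ⊆ T) :
    psm n S' T' ∣ psm n S T := ⟨_, psm_split hS hT⟩

/-- divisibility between pseudomonomials forces inclusion of index sets. -/
lemma subset_of_psm_dvd {A B S T : Finset (Fin n)} (hST : Disjoint S T)
    (hdvd : psm n A B ∣ psm n S T) : A ⊆ S ∧ B ⊆ T := by
  obtain ⟨h, hh⟩ := hdvd
  constructor
  · intro a ha
    by_contra haS
    have key : eval (fun v => if v ∈ S then (1 : ZMod 2) else 0) (psm n S T) = 0 := by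
      rw [hh, map_mul, eval_psm]
      have : (∏ i ∈ A, (fun v => if v ∈ S then (1 : ZMod 2) else 0) i) = 0 :=
        Finset.prod_eq_zero ha (by simp [haS])
      rw [this, zero_mul, zero_mul]
    have : eval (fun v => if v ∈ S then (1 : ZMod 2) else 0) (psm n S T) ≠ 0 := by
      rw [eval_psm_ne_zero]
      refine ⟨fun i hi => by simp [hi], fun i hi => ?_⟩
      have : i ∉ S := fun hiS => (Finset.disjoint_left.mp hST) hiS hi
      simp [this]
    exact this key
  · intro b hb
    by_contra hbT
    have key : eval (fun v => if v ∈ S ∨ v = b then (1 : ZMod 2) else 0) (psm n S T) = 0 := by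
      rw [hh, map_mul, eval_psm]
      have : (∏ i ∈ B, (1 - (fun v => if v ∈ S ∨ v = b then (1 : ZMod 2) else 0) i)) = 0 :=
        Finset.prod_eq_zero hb (by simp)
      rw [this, mul_zero, zero_mul]
    have : eval (fun v => if v ∈ S ∨ v = b then (1 : ZMod 2) else 0) (psm n S T) ≠ 0 := by
      rw [eval_psm_ne_zero]
      refine ⟨fun i hi => by simp [hi], fun i hi => ?_⟩
      have h1 : i ∉ S := fun hiS => (Finset.disjoint_left.mp hST) hiS hi
      have h2 : i ≠ b := fun h => hbT (h ▸ hi)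
      simp [h1, h2]
    exact this key

lemma psm_inj {A B S T : Finset (Fin n)} (hAB : Disjoint A B) (hST : Disjoint S T)
    (h : psm n A B = psm n S T) : A = S ∧ B = T := by
  obtain ⟨h1, h2⟩ := subset_of_psm_dvd hST (show psm n A B ∣ psm n S T from ⟨1, by rw [← h, mul_one]⟩)
  obtain ⟨h3, h4⟩ := subset_of_psm_dvd hAB (show psm n S T ∣ psm n A B from ⟨1, by rw [h, mul_one]⟩)
  exact ⟨Finset.Subset.antisymm h1 h3, Finset.Subset.antisymm h2 h4⟩

lemma X_mul_psm {S T : Finset (Fin n)} {a b : Fin n} (ha : a ∉ S) (hb : b ∉ T) :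
    X a * (1 - X b) * psm n S T = psm n (insert a S) (insert b T) := by
  unfold psm
  rw [Finset.prod_insert ha, Finset.prod_insert hb]
  ring

lemma eval_zero_of_mem_span {Gs : Set (MvPolynomial (Fin n) (ZMod 2))} {pt : Fin n → ZMod 2}
    (hG : ∀ f ∈ Gs, eval pt f = 0) {p : MvPolynomial (Fin n) (ZMod 2)}
    (hp : p ∈ Ideal.span Gs) : eval pt p = 0 := by
  have hle : Ideal.span Gs ≤ RingHom.ker (eval pt) :=
    Ideal.span_le.mpr (fun f hf => hG f hf)
  exact hle hp

end CFAux

namespace CFAux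

/-- cyclic predecessor mod `k` -/
def pk (k x : ℕ) : ℕ := (x + k - 1) % k

/-- the cyclic interval `(i, j]` in `{0,…,k-1}` -/
def cycI (k i j : ℕ) : Finset ℕ :=
  if i < j then Finset.Icc (i + 1) j else Finset.Icc (i + 1) (k - 1) ∪ Finset.Icc 0 j

lemma pk_lt {k : ℕ} (hk : 0 < k) (x : ℕ) : pk k x < k := Nat.mod_lt _ hk

lemma pk_eq {k : ℕ} (hk : 0 < k) {x : ℕ} (hx : x < k) :
    pk k x = if x = 0 then k - 1 else x - 1 := by
  unfold pk
  split_ifs with h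
  · subst h; rw [Nat.zero_add, Nat.mod_eq_of_lt (by omega)]
  · have : x + k - 1 = (x - 1) + k := by omega
    rw [this, Nat.add_mod_right, Nat.mod_eq_of_lt (by omega)]

lemma mem_cycI {k i j m : ℕ} :
    m ∈ cycI k i j ↔
      (i < j ∧ i + 1 ≤ m ∧ m ≤ j) ∨ (¬ i < j ∧ (i + 1 ≤ m ∧ m ≤ k - 1 ∨ m ≤ j)) := by
  unfold cycI
  split_ifs with h <;> simp [Finset.mem_Icc, Finset.mem_union, h]

lemma cycI_self_mem {k i j : ℕ} (hi : i < k) (hj : j < k) (hij : i ≠ j) :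
    j ∈ cycI k i j := by
  rw [mem_cycI]; omega

lemma cycI_notMem {k i j : ℕ} (hi : i < k) (hj : j < k) (hij : i ≠ j) :
    i ∉ cycI k i j := by
  rw [mem_cycI]; omega

lemma cycI_lt {k i j : ℕ} (hj : j < k) {m : ℕ} (hm : m ∈ cycI k i j) : m < k := by
  rw [mem_cycI] at hm; omega

lemma cycI_base {k j : ℕ} (hk : 1 < k) (hj : j < k) : cycI k (pk k j) j = {j} := by
  ext m
  rw [Finset.mem_singleton, mem_cycI, pk_eq (by omega) hj]
  split_ifs with h <;> omega

lemma cycI_step {k i j : ℕ} (hk : 1 < k) (hi : i < k) (hj : j < k) (hij : i ≠ j)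
    (hpj : i ≠ pk k j) :
    cycI k i j = insert j (cycI k i (pk k j)) ∧ j ∉ cycI k i (pk k j) := by
  rw [pk_eq (by omega) hj] at hpj ⊢
  by_cases hj0 : j = 0
  · rw [if_pos hj0] at hpj ⊢
    constructor
    · ext m
      rw [Finset.mem_insert, mem_cycI, mem_cycI]
      omega
    · rw [mem_cycI]; omega
  · rw [if_neg hj0] at hpj ⊢
    constructor
    · ext m
      rw [Finset.mem_insert, mem_cycI, mem_cycI]
      omega
    · rw [mem_cycI]; omega

lemma cycI_sub {k i j m₀ : ℕ} (hi : i < k) (hj : j < k) (hij : i ≠ j)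
    (hm₀ : m₀ ∈ cycI k i j) (hm₀j : m₀ ≠ j) : cycI k m₀ j ⊆ cycI k i j := by
  intro m hm
  rw [mem_cycI] at hm₀ hm ⊢
  omega

lemma cycI_pred_mem {k j m₀ m : ℕ} (hk : 1 < k) (hj : j < k) (hm₀ : m₀ < k) (hm₀j : m₀ ≠ j)
    (hm : m ∈ cycI k m₀ j) : m ≠ m₀ ∧ (pk k m = m₀ ∨ pk k m ∈ cycI k m₀ j) := by
  have hmk : m < k := cycI_lt hj hm
  rw [mem_cycI] at hm
  rw [pk_eq (by omega) hmk]
  constructor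
  · omega
  · rw [mem_cycI]
    split_ifs with h <;> omega

lemma pk_iter {k : ℕ} (hk : 0 < k) {j : ℕ} (hj : j < k) :
    ∀ s, s ≤ k → (pk k)^[s] j = (j + (k - s)) % k := by
  intro s
  induction s with
  | zero =>
    intro _
    rw [Function.iterate_zero_apply, Nat.sub_zero, Nat.add_mod_right, Nat.mod_eq_of_lt hj]
  | succ s ih =>
    intro hs
    rw [Function.iterate_succ_apply', ih (by omega)]
    unfold pk
    have h1 : (j + (k - s)) % k + k - 1 = (j + (k - s)) % k + (k - 1) := by omega
    rw [h1, Nat.mod_add_mod]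
    have h2 : j + (k - s) + (k - 1) = (j + (k - (s + 1))) + k := by omega
    rw [h2, Nat.add_mod_right]

lemma pk_iter_inj {k : ℕ} (hk : 0 < k) {j : ℕ} (hj : j < k) {s t : ℕ}
    (hs : s < k) (ht : t < k) (h : (pk k)^[s] j = (pk k)^[t] j) : s = t := by
  rw [pk_iter hk hj s (by omega), pk_iter hk hj t (by omega)] at h
  rcases Nat.le_total s t with hle | hle
  · by_contra hne
    have hba : j + (k - t) ≤ j + (k - s) := by omega
    have := (Nat.modEq_iff_dvd' hba).mp h.symm
    have heq : j + (k - s) - (j + (k - t)) = t - s := by omega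
    rw [heq] at this
    have := Nat.le_of_dvd (by omega) this
    omega
  · by_contra hne
    have hba : j + (k - s) ≤ j + (k - t) := by omega
    have := (Nat.modEq_iff_dvd' hba).mp h
    have heq : j + (k - t) - (j + (k - s)) = s - t := by omega
    rw [heq] at this
    have := Nat.le_of_dvd (by omega) this
    omega

lemma pk_iter_surj {k : ℕ} (hk : 0 < k) {j b : ℕ} (hj : j < k) (hb : b < k) :
    ∃ s < k, (pk k)^[s] j = b := by
  rcases Nat.le_total b j with h | h
  · refine ⟨j - b, by omega, ?_⟩
    rw [pk_iter hk hj _ (by omega)]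
    have : j + (k - (j - b)) = b + k := by omega
    rw [this, Nat.add_mod_right, Nat.mod_eq_of_lt hb]
  · rcases Nat.eq_or_lt_of_le h with h' | h'
    · exact ⟨0, hk, by simpa using h'⟩
    · refine ⟨j + k - b, by omega, ?_⟩
      rw [pk_iter hk hj _ (by omega)]
      have : j + (k - (j + k - b)) = b := by omega
      rw [this, Nat.mod_eq_of_lt hb]

/-- the backward run `{j, pk j, …, pk^[t] j}` is the cyclic interval `(pk^[t+1] j, j]`. -/
lemma cycI_run {k : ℕ} (hk : 0 < k) :
    ∀ t, t + 1 < k → ∀ j, j < k →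
      cycI k ((pk k)^[t+1] j) j = (Finset.range (t + 1)).image (fun s => (pk k)^[s] j) := by
  intro t
  induction t with
  | zero =>
    intro ht j hj
    rw [Function.iterate_one, cycI_base (by omega) hj]
    ext m; simp
  | succ t ih =>
    intro ht j hj
    have hj1 : pk k j < k := pk_lt hk j
    have ihe := ih (by omega) (pk k j) hj1
    have hiter : (pk k)^[t + 1 + 1] j = (pk k)^[t + 1] (pk k j) := Function.iterate_succ_apply _ _ _
    have hik : (pk k)^[t+1+1] j < k := by
      rw [pk_iter hk hj _ (by omega)]; exact Nat.mod_lt _ hk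
    have hij : (pk k)^[t+1+1] j ≠ j := by
      intro h
      have := pk_iter_inj hk hj (by omega) hk (h.trans (Function.iterate_zero_apply (pk k) j).symm)
      omega
    have hipj : (pk k)^[t+1+1] j ≠ pk k j := by
      intro h
      have : (pk k)^[1] j = pk k j := Function.iterate_one _ ▸ rfl
      have := pk_iter_inj hk hj (s := t+1+1) (t := 1) (by omega) (by omega)
        (by rw [Function.iterate_one]; exact h)
      omega
    obtain ⟨hstep, hnm⟩ := cycI_step (by omega) hik hj hij hipj
    rw [hstep, hiter, ihe]
    ext m
    simp only [Finset.mem_insert, Finset.mem_image, Finset.mem_range]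
    constructor
    · rintro (rfl | ⟨s, hs, rfl⟩)
      · exact ⟨0, by omega, rfl⟩
      · exact ⟨s + 1, by omega, by rw [Function.iterate_succ_apply]⟩
    · rintro ⟨s, hs, rfl⟩
      rcases Nat.eq_zero_or_pos s with rfl | hpos
      · left; rfl
      · right
        exact ⟨s - 1, by omega, by rw [← Function.iterate_succ_apply]; congr 1; omega⟩

end CFAux

namespace CFAux

lemma cyc_key {k : ℕ} (hk : 0 < k) (S Al Bl : Finset ℕ)
    (hS : ∀ m ∈ S, m < k) (hAl : ∀ m ∈ Al, m < k) (hBl : ∀ m ∈ Bl, m < k)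
    (hAB : ∀ m, m ∈ Al → m ∉ Bl)
    (H : ∀ c : ℕ → Bool, (∀ m ∈ Al, c m = true) → (∀ m ∈ Bl, c m = false) →
      ∃ m ∈ S, c m = true ∧ c (pk k m) = false) :
    ∃ i ∈ Bl, ∃ j ∈ Al, i ≠ j ∧ cycI k i j ⊆ S := by
  by_cases hall : ∀ m, m < k → m ∈ S
  · -- everything survives
    obtain ⟨j, hjS, hj1, -⟩ := H (fun m => decide (m ∈ Al))
      (fun m hm => by simp [hm]) (fun m hm => by simp only [decide_eq_false_iff_not]; exact fun hmAl => hAB m hmAl hm)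
    obtain ⟨m', -, -, hi⟩ := H (fun m => decide (m ∉ Bl))
      (fun m hm => by simp [hAB m hm]) (fun m hm => by simp [hm])
    have hjAl : j ∈ Al := by simpa using hj1
    have hiBl : pk k m' ∈ Bl := by simpa using hi
    refine ⟨pk k m', hiBl, j, hjAl, fun h => hAB j hjAl (h ▸ hiBl), fun m hm => ?_⟩
    exact hall m (cycI_lt (hAl j hjAl) hm)
  · push_neg at hall
    obtain ⟨b0, hb0k, hb0S⟩ := hall
    -- blocker distance
    have hex : ∀ j, j < k → ∃ t, (pk k)^[t] j ∉ S := by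
      intro j hj
      obtain ⟨s, hs, hss⟩ := pk_iter_surj hk hj hb0k
      exact ⟨s, hss ▸ hb0S⟩
    classical
    set β : ℕ → ℕ := fun j => if h : ∃ t, (pk k)^[t] j ∉ S then Nat.find h else 0 with hβ
    have hβ1 : ∀ j, j < k → (pk k)^[β j] j ∉ S := by
      intro j hj
      rw [hβ]; simp only [dif_pos (hex j hj)]
      exact Nat.find_spec (hex j hj)
    have hβ2 : ∀ j, j < k → ∀ s, s < β j → (pk k)^[s] j ∈ S := by
      intro j hj s hs
      rw [hβ] at hs; simp only [dif_pos (hex j hj)] at hs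
      by_contra hcon
      exact absurd (Nat.find_min (hex j hj) hs) (by simpa using hcon)
    have hβ3 : ∀ j, j < k → β j < k := by
      intro j hj
      obtain ⟨s, hs, hss⟩ := pk_iter_surj hk hj hb0k
      have : β j ≤ s := by
        rw [hβ]; simp only [dif_pos (hex j hj)]
        exact Nat.find_min' (hex j hj) (hss ▸ hb0S)
      omega
    set Run : Finset ℕ :=
      Al.biUnion (fun j => (Finset.range (β j + 1)).image (fun s => (pk k)^[s] j)) with hRun
    obtain ⟨m, hmS, hc1, hc2⟩ := H (fun m => decide (m ∈ Run ∧ m ∉ Bl))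
      (fun m hm => by
        simp only [decide_eq_true_eq]
        refine ⟨Finset.mem_biUnion.mpr ⟨m, hm, Finset.mem_image.mpr ⟨0, by simp, rfl⟩⟩, hAB m hm⟩)
      (fun m hm => by simp [hm])
    simp only [decide_eq_true_eq] at hc1
    obtain ⟨hmRun, hmBl⟩ := hc1
    obtain ⟨j, hjAl, hj2⟩ := Finset.mem_biUnion.mp hmRun
    obtain ⟨s, hs, hsm⟩ := Finset.mem_image.mp hj2
    rw [Finset.mem_range] at hs
    have hjk : j < k := hAl j hjAl
    have hsβ : s < β j := by
      rcases Nat.lt_or_ge s (β j) with h | h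
      · exact h
      · exfalso
        have : s = β j := by omega
        exact hβ1 j hjk (by rw [← this, hsm]; exact hmS)
    have hpkm : pk k m = (pk k)^[s+1] j := by
      rw [Function.iterate_succ_apply', hsm]
    have hpRun : pk k m ∈ Run := by
      rw [hpkm]
      exact Finset.mem_biUnion.mpr ⟨j, hjAl,
        Finset.mem_image.mpr ⟨s + 1, Finset.mem_range.mpr (by omega), rfl⟩⟩
    have hpBl : pk k m ∈ Bl := by
      by_contra hcon
      rw [decide_eq_false_iff_not] at hc2
      exact hc2 ⟨hpRun, hcon⟩
    have hβjk := hβ3 j hjk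
    have hrun := cycI_run hk s (by omega) j hjk
    refine ⟨pk k m, hpBl, j, hjAl, fun h => hAB j hjAl (h ▸ hpBl), ?_⟩
    intro m' hm'
    rw [hpkm, hrun] at hm'
    obtain ⟨r, hr, hrm⟩ := Finset.mem_image.mp hm'
    rw [Finset.mem_range] at hr
    exact hrm ▸ hβ2 j hjk r (by omega)

end CFAux

namespace CFAux

open MvPolynomial

def fm (n : ℕ) (hn : 0 < n) (m : ℕ) : Fin n := ⟨m % n, Nat.mod_lt m hn⟩

lemma fm_val {n : ℕ} (hn : 0 < n) {m : ℕ} (h : m < n) : ((fm n hn m : Fin n) : ℕ) = m :=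
  Nat.mod_eq_of_lt h

lemma fm_eq {n : ℕ} (hn : 0 < n) {m : ℕ} (h : m < n) : fm n hn m = ⟨m, h⟩ := by
  apply Fin.ext; exact fm_val hn h

noncomputable def elemP (n k : ℕ) (hn : 0 < n) (σ τ : ℕ → Finset (Fin n)) (i j : ℕ) :
    MvPolynomial (Fin n) (ZMod 2) :=
  psm n (insert (fm n hn j) ((cycI k i j).biUnion σ)) (insert (fm n hn i) ((cycI k i j).biUnion τ))

noncomputable def genP (n k : ℕ) (hn : 0 < n) (σ τ : ℕ → Finset (Fin n)) (j : ℕ) :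
    MvPolynomial (Fin n) (ZMod 2) :=
  psm n (insert (fm n hn j) (σ j)) (insert (fm n hn (pk k j)) (τ j))

def goodPt (n k : ℕ) (hn : 0 < n) (σ τ : ℕ → Finset (Fin n)) (pt : Fin n → ZMod 2) : Prop :=
  ∀ m, m < k → ¬(pt (fm n hn m) = 1 ∧ pt (fm n hn (pk k m)) = 0 ∧
    (∀ v ∈ σ m, pt v = 1) ∧ (∀ v ∈ τ m, pt v = 0))

section Setup

variable {n k : ℕ} {σ τ : ℕ → Finset (Fin n)}

/-- any σ-set is disjoint from any τ-set -/
lemma disj2 (hdisj : ∀ j < k, Disjoint (σ j) (τ j))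
    (hshare : ∀ j₁ < k, ∀ j₂ < k, j₁ ≠ j₂ → ∀ i : Fin n, i ∉ (σ j₁ ∩ τ j₂) ∪ (σ j₂ ∩ τ j₁))
    {a b : ℕ} (ha : a < k) (hb : b < k) : Disjoint (σ a) (τ b) := by
  rcases eq_or_ne a b with rfl | hab
  · exact hdisj a ha
  · rw [Finset.disjoint_left]
    intro v hv1 hv2
    exact hshare a ha b hb hab v (Finset.mem_union_left _ (Finset.mem_inter.mpr ⟨hv1, hv2⟩))

lemma biUnion_high (hkn : k ≤ n) (hhigh : ∀ j < k, ∀ i ∈ σ j ∪ τ j, k ≤ (i : ℕ))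
    {i j : ℕ} (hj : j < k) {v : Fin n} :
    (v ∈ (cycI k i j).biUnion σ → k ≤ (v : ℕ)) ∧ (v ∈ (cycI k i j).biUnion τ → k ≤ (v : ℕ)) := by
  constructor <;>
  · intro hv
    obtain ⟨m, hm, hvm⟩ := Finset.mem_biUnion.mp hv
    have hmk : m < k := cycI_lt hj hm
    first
      | exact hhigh m hmk v (Finset.mem_union_left _ hvm)
      | exact hhigh m hmk v (Finset.mem_union_right _ hvm)

lemma biUnion_disj (hdisj : ∀ j < k, Disjoint (σ j) (τ j))
    (hshare : ∀ j₁ < k, ∀ j₂ < k, j₁ ≠ j₂ → ∀ i : Fin n, i ∉ (σ j₁ ∩ τ j₂) ∪ (σ j₂ ∩ τ j₁))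
    {i j i' j' : ℕ} (hj : j < k) (hj' : j' < k) :
    Disjoint ((cycI k i j).biUnion σ) ((cycI k i' j').biUnion τ) := by
  rw [Finset.disjoint_left]
  intro v hv1 hv2
  obtain ⟨a, haI, hva⟩ := Finset.mem_biUnion.mp hv1
  obtain ⟨b, hbI, hvb⟩ := Finset.mem_biUnion.mp hv2
  exact Finset.disjoint_left.mp
    (disj2 hdisj hshare (cycI_lt hj haI) (cycI_lt hj' hbI)) hva hvb

/-- disjointness of the two index sets of `elemP i j` -/
lemma elemP_disj (hn : 0 < n) (hkn : k ≤ n)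
    (hdisj : ∀ j < k, Disjoint (σ j) (τ j))
    (hshare : ∀ j₁ < k, ∀ j₂ < k, j₁ ≠ j₂ → ∀ i : Fin n, i ∉ (σ j₁ ∩ τ j₂) ∪ (σ j₂ ∩ τ j₁))
    (hhigh : ∀ j < k, ∀ i ∈ σ j ∪ τ j, k ≤ (i : ℕ))
    {i j : ℕ} (hi : i < k) (hj : j < k) (hij : i ≠ j) :
    Disjoint (insert (fm n hn j) ((cycI k i j).biUnion σ))
             (insert (fm n hn i) ((cycI k i j).biUnion τ)) := by
  have hjv : ((fm n hn j : Fin n) : ℕ) = j := fm_val hn (by omega)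
  have hiv : ((fm n hn i : Fin n) : ℕ) = i := fm_val hn (by omega)
  rw [Finset.disjoint_left]
  intro v hv1 hv2
  rw [Finset.mem_insert] at hv1 hv2
  rcases hv1 with rfl | hv1 <;> rcases hv2 with h | hv2
  · exact hij (by rw [← hiv, ← h, hjv])
  · have := (biUnion_high hkn hhigh hj (i := i) (v := fm n hn j)).2 hv2
    omega
  · have := (biUnion_high hkn hhigh hj (i := i) (v := v)).1 hv1
    rw [h] at this; omega
  · exact Finset.disjoint_left.mp (biUnion_disj hdisj hshare hj hj) hv1 hv2

end Setup

end CFAux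

namespace CFAux

open MvPolynomial

def GSet (n k : ℕ) (hn : 0 < n) (σ τ : ℕ → Finset (Fin n)) :
    Set (MvPolynomial (Fin n) (ZMod 2)) :=
  {f | ∃ j, j < k ∧ f = genP n k hn σ τ j}

section Setup

variable {n k : ℕ} {σ τ : ℕ → Finset (Fin n)}

lemma genP_eq_elemP (hn : 0 < n) (hk : 2 < k) {j : ℕ} (hj : j < k) :
    genP n k hn σ τ j = elemP n k hn σ τ (pk k j) j := by
  unfold genP elemP
  rw [cycI_base (by omega) hj, Finset.singleton_biUnion, Finset.singleton_biUnion]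

lemma elemP_form (hn : 0 < n) (hkn : k ≤ n)
    (hhigh : ∀ j < k, ∀ i ∈ σ j ∪ τ j, k ≤ (i : ℕ))
    {i j : ℕ} (hi : i < k) (hj : j < k) :
    elemP n k hn σ τ i j = X (fm n hn j) * (1 - X (fm n hn i)) *
      psm n ((cycI k i j).biUnion σ) ((cycI k i j).biUnion τ) := by
  unfold elemP
  rw [X_mul_psm]
  · intro hmem
    have := (biUnion_high hkn hhigh hj (i := i) (v := fm n hn j)).1 hmem
    rw [fm_val hn (by omega)] at this; omega
  · intro hmem
    have := (biUnion_high hkn hhigh hj (i := i) (v := fm n hn i)).2 hmem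
    rw [fm_val hn (by omega)] at this; omega

lemma genP_form (hn : 0 < n) (hk : 2 < k) (hkn : k ≤ n)
    (hhigh : ∀ j < k, ∀ i ∈ σ j ∪ τ j, k ≤ (i : ℕ))
    {j : ℕ} (hj : j < k) :
    genP n k hn σ τ j = X (fm n hn j) * (1 - X (fm n hn (pk k j))) * psm n (σ j) (τ j) := by
  unfold genP
  rw [X_mul_psm]
  · intro hmem
    have := hhigh j hj _ (Finset.mem_union_left _ hmem)
    rw [fm_val hn (by omega)] at this; omega
  · intro hmem
    have hpkj : pk k j < k := pk_lt (by omega) j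
    have := hhigh j hj _ (Finset.mem_union_right _ hmem)
    rw [fm_val hn (by omega)] at this
    omega

lemma elemP_mem_span (hn : 0 < n) (hk : 2 < k) (hkn : k ≤ n)
    (hdisj : ∀ j < k, Disjoint (σ j) (τ j))
    (hshare : ∀ j₁ < k, ∀ j₂ < k, j₁ ≠ j₂ → ∀ i : Fin n, i ∉ (σ j₁ ∩ τ j₂) ∪ (σ j₂ ∩ τ j₁))
    (hhigh : ∀ j < k, ∀ i ∈ σ j ∪ τ j, k ≤ (i : ℕ)) :
    ∀ i j, i < k → j < k → i ≠ j →
      elemP n k hn σ τ i j ∈ Ideal.span (GSet n k hn σ τ) := by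
  suffices main : ∀ d i j, i < k → j < k → i ≠ j → (cycI k i j).card ≤ d →
      elemP n k hn σ τ i j ∈ Ideal.span (GSet n k hn σ τ) by
    exact fun i j h1 h2 h3 => main (cycI k i j).card i j h1 h2 h3 le_rfl
  intro d
  induction d with
  | zero =>
    intro i j hi hj hij hcard
    exfalso
    have : j ∈ cycI k i j := cycI_self_mem hi hj hij
    have := Finset.card_pos.mpr ⟨j, this⟩
    omega
  | succ d ih =>
    intro i j hi hj hij hcard
    by_cases hbase : i = pk k j
    · rw [hbase, ← genP_eq_elemP hn hk hj]
      exact Ideal.subset_span ⟨j, hj, rfl⟩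
    · set j' := pk k j with hj'def
      have hj'k : j' < k := pk_lt (by omega) j
      have hj'j : j' ≠ j := by
        intro h
        have h0 : (pk k)^[1] j = (pk k)^[0] j := by
          simpa [Function.iterate_one, Function.iterate_zero_apply] using h
        have := pk_iter_inj (k := k) (by omega) hj (by omega) (by omega) h0
        omega
      obtain ⟨hstep, hjnot⟩ := cycI_step (k := k) (by omega) hi hj hij (fun h => hbase h)
      have hsub' : cycI k i j' ⊆ cycI k i j := by
        rw [hstep]; exact Finset.subset_insert _ _
      have hcard' : (cycI k i j').card ≤ d := by
        rw [hstep, Finset.card_insert_of_notMem hjnot, ← hj'def] at hcard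
        omega
      -- notation
      set Uσ := (cycI k i j).biUnion σ with hUσ
      set Uτ := (cycI k i j).biUnion τ with hUτ
      set Uσ' := (cycI k i j').biUnion σ with hUσ'
      set Uτ' := (cycI k i j').biUnion τ with hUτ'
      have hσsub : σ j ⊆ Uσ := Finset.subset_biUnion_of_mem σ (cycI_self_mem hi hj hij)
      have hτsub : τ j ⊆ Uτ := Finset.subset_biUnion_of_mem τ (cycI_self_mem hi hj hij)
      have hUσ'sub : Uσ' ⊆ Uσ := Finset.biUnion_subset_biUnion_of_subset_left σ hsub'
      have hUτ'sub : Uτ' ⊆ Uτ := Finset.biUnion_subset_biUnion_of_subset_left τ hsub'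
      have e1 : psm n Uσ Uτ = psm n (σ j) (τ j) * psm n (Uσ \ σ j) (Uτ \ τ j) :=
        psm_split hσsub hτsub
      have e2 : psm n Uσ Uτ = psm n Uσ' Uτ' * psm n (Uσ \ Uσ') (Uτ \ Uτ') :=
        psm_split hUσ'sub hUτ'sub
      have key : X (fm n hn j) * (1 - X (fm n hn i)) * psm n Uσ Uτ
          = (X (fm n hn j) * (1 - X (fm n hn j')) * psm n (σ j) (τ j)) *
              ((1 - X (fm n hn i)) * psm n (Uσ \ σ j) (Uτ \ τ j))
            + (X (fm n hn j') * (1 - X (fm n hn i)) * psm n Uσ' Uτ') *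
              (X (fm n hn j) * psm n (Uσ \ Uσ') (Uτ \ Uτ')) := by
        linear_combination (X (fm n hn j) * (1 - X (fm n hn j')) * (1 - X (fm n hn i))) * e1
          + (X (fm n hn j) * X (fm n hn j') * (1 - X (fm n hn i))) * e2
      rw [elemP_form hn hkn hhigh hi hj, key]
      apply Ideal.add_mem
      · apply Ideal.mul_mem_right
        rw [← genP_form hn hk hkn hhigh hj]
        exact Ideal.subset_span ⟨j, hj, rfl⟩
      · apply Ideal.mul_mem_right
        rw [← elemP_form hn hkn hhigh hi hj'k]
        exact ih i j' hi hj'k (fun h => hbase h) hcard'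

end Setup

end CFAux

namespace CFAux

open MvPolynomial

section Setup

variable {n k : ℕ} {σ τ : ℕ → Finset (Fin n)}

lemma goodPt_eval_gen (hn : 0 < n) {pt : Fin n → ZMod 2}
    (hgood : goodPt n k hn σ τ pt) :
    ∀ f ∈ GSet n k hn σ τ, eval pt f = 0 := by
  rintro f ⟨j, hj, rfl⟩
  by_contra h
  obtain ⟨h1, h2⟩ := eval_psm_ne_zero.mp h
  exact hgood j hj ⟨h1 _ (Finset.mem_insert_self _ _), h2 _ (Finset.mem_insert_self _ _),
    fun v hv => h1 v (Finset.mem_insert_of_mem hv),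
    fun v hv => h2 v (Finset.mem_insert_of_mem hv)⟩

lemma key_structure (hn : 0 < n) (hk : 2 < k) (hkn : k ≤ n)
    (hdisj : ∀ j < k, Disjoint (σ j) (τ j))
    (hshare : ∀ j₁ < k, ∀ j₂ < k, j₁ ≠ j₂ → ∀ i : Fin n, i ∉ (σ j₁ ∩ τ j₂) ∪ (σ j₂ ∩ τ j₁))
    (hhigh : ∀ j < k, ∀ i ∈ σ j ∪ τ j, k ≤ (i : ℕ))
    {A B : Finset (Fin n)} (hAB : Disjoint A B)
    (Hvan : ∀ pt, goodPt n k hn σ τ pt → eval pt (psm n A B) = 0) :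
    ∃ i j, i < k ∧ j < k ∧ i ≠ j ∧ fm n hn j ∈ A ∧ fm n hn i ∈ B ∧
      ∀ m ∈ cycI k i j, σ m ⊆ A ∧ τ m ⊆ B := by
  classical
  set S : Finset ℕ := (Finset.range k).filter (fun m => σ m ⊆ A ∧ τ m ⊆ B) with hSdef
  set Al : Finset ℕ := (Finset.range k).filter (fun m => fm n hn m ∈ A) with hAldef
  set Bl : Finset ℕ := (Finset.range k).filter (fun m => fm n hn m ∈ B) with hBldef
  have hfm_low : ∀ v : Fin n, (v : ℕ) < k → fm n hn (v : ℕ) = v :=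
    fun v hv => Fin.ext (fm_val hn v.2)
  have Hc : ∀ c : ℕ → Bool, (∀ m ∈ Al, c m = true) → (∀ m ∈ Bl, c m = false) →
      ∃ m ∈ S, c m = true ∧ c (pk k m) = false := by
    intro c hcA hcB
    set pt : Fin n → ZMod 2 := fun v =>
      if (v : ℕ) < k then (if c (v : ℕ) then 1 else 0)
      else (if v ∈ A ∪ ((Finset.range k).biUnion τ \ B) then 1 else 0) with hptdef
    have hpat1 : ∀ v ∈ A, pt v = 1 := by
      intro v hv
      by_cases hvk : (v : ℕ) < k
      · have hmem2 : fm n hn ((v : Fin n) : ℕ) ∈ A := by rw [hfm_low v hvk]; exact hv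
        have hAl : (v : ℕ) ∈ Al := Finset.mem_filter.mpr
          ⟨Finset.mem_range.mpr hvk, hmem2⟩
        have := hcA _ hAl
        simp [hptdef, hvk, this]
      · simp [hptdef, hvk, Finset.mem_union, hv]
    have hpat2 : ∀ v ∈ B, pt v = 0 := by
      intro v hv
      by_cases hvk : (v : ℕ) < k
      · have hmem2 : fm n hn ((v : Fin n) : ℕ) ∈ B := by rw [hfm_low v hvk]; exact hv
        have hBl : (v : ℕ) ∈ Bl := Finset.mem_filter.mpr
          ⟨Finset.mem_range.mpr hvk, hmem2⟩
        have := hcB _ hBl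
        simp [hptdef, hvk, this]
      · have hvA : v ∉ A := Finset.disjoint_right.mp hAB hv
        simp [hptdef, hvk, Finset.mem_union, hvA, Finset.mem_sdiff, hv]
    have hne : eval pt (psm n A B) ≠ 0 := eval_psm_ne_zero.mpr ⟨hpat1, hpat2⟩
    have hng : ¬ goodPt n k hn σ τ pt := fun hg => hne (Hvan pt hg)
    unfold goodPt at hng
    push_neg at hng
    obtain ⟨m, hm, h1, h2, h3, h4⟩ := hng
    have hfmm : ((fm n hn m : Fin n) : ℕ) = m := fm_val hn (by omega)
    have hfmp : ((fm n hn (pk k m) : Fin n) : ℕ) = pk k m := by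
      have := pk_lt (k := k) (by omega) m
      exact fm_val hn (by omega)
    have hcm : c m = true := by
      by_contra hc
      rw [Bool.not_eq_true] at hc
      rw [hptdef] at h1
      simp only [hfmm, hm, if_pos, hc] at h1
      exact absurd h1 (by decide)
    have hcpm : c (pk k m) = false := by
      have hpkm : pk k m < k := pk_lt (by omega) m
      by_contra hc
      rw [Bool.not_eq_false] at hc
      rw [hptdef] at h2
      simp only [hfmp, hpkm, if_pos, hc] at h2
      exact absurd h2 (by decide)
    refine ⟨m, ?_, hcm, hcpm⟩
    rw [hSdef, Finset.mem_filter]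
    refine ⟨Finset.mem_range.mpr hm, ?_, ?_⟩
    · intro v hv
      have hvhigh : k ≤ (v : ℕ) := hhigh m hm v (Finset.mem_union_left _ hv)
      have this2 : (if (v : ℕ) < k then (if c (v : ℕ) then (1 : ZMod 2) else 0)
          else (if v ∈ A ∪ ((Finset.range k).biUnion τ \ B) then 1 else 0)) = 1 := h3 v hv
      rw [if_neg (not_lt.mpr hvhigh)] at this2
      by_contra hvA
      have hvmem : v ∈ A ∪ ((Finset.range k).biUnion τ \ B) := by
        by_contra hnm
        rw [if_neg hnm] at this2
        exact absurd this2 (by decide)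
      rcases Finset.mem_union.mp hvmem with h | h
      · exact hvA h
      · obtain ⟨b, hb, hvb⟩ := Finset.mem_biUnion.mp (Finset.mem_sdiff.mp h).1
        exact Finset.disjoint_left.mp
          (disj2 hdisj hshare hm (Finset.mem_range.mp hb)) hv hvb
    · intro v hv
      have hvhigh : k ≤ (v : ℕ) := hhigh m hm v (Finset.mem_union_right _ hv)
      have this2 : (if (v : ℕ) < k then (if c (v : ℕ) then (1 : ZMod 2) else 0)
          else (if v ∈ A ∪ ((Finset.range k).biUnion τ \ B) then 1 else 0)) = 0 := h4 v hv
      rw [if_neg (not_lt.mpr hvhigh)] at this2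
      have hvnm : v ∉ A ∪ ((Finset.range k).biUnion τ \ B) := by
        by_contra hmem
        rw [if_pos hmem] at this2
        exact absurd this2 (by decide)
      rw [Finset.mem_union, Finset.mem_sdiff] at hvnm
      push_neg at hvnm
      exact hvnm.2 (Finset.mem_biUnion.mpr ⟨m, Finset.mem_range.mpr hm, hv⟩)
  obtain ⟨i, hiB, j, hjA, hij, hsub⟩ := cyc_key (k := k) (by omega) S Al Bl
    (fun m hm => Finset.mem_range.mp (Finset.mem_filter.mp hm).1)
    (fun m hm => Finset.mem_range.mp (Finset.mem_filter.mp hm).1)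
    (fun m hm => Finset.mem_range.mp (Finset.mem_filter.mp hm).1)
    (fun m hmA hmB => Finset.disjoint_left.mp hAB
      (Finset.mem_filter.mp hmA).2 (Finset.mem_filter.mp hmB).2)
    Hc
  obtain ⟨hik, hiBmem⟩ := Finset.mem_filter.mp hiB
  obtain ⟨hjk, hjAmem⟩ := Finset.mem_filter.mp hjA
  refine ⟨i, j, Finset.mem_range.mp hik, Finset.mem_range.mp hjk, hij, hjAmem, hiBmem, ?_⟩
  intro m hm
  exact (Finset.mem_filter.mp (hsub hm)).2

end Setup

end CFAux

namespace CFAux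

open MvPolynomial

section Setup

variable {n k : ℕ} {σ τ : ℕ → Finset (Fin n)}

lemma min_point (hn : 0 < n) (hk : 2 < k) (hkn : k ≤ n)
    (hdisj : ∀ j < k, Disjoint (σ j) (τ j))
    (hshare : ∀ j₁ < k, ∀ j₂ < k, j₁ ≠ j₂ → ∀ i : Fin n, i ∉ (σ j₁ ∩ τ j₂) ∪ (σ j₂ ∩ τ j₁))
    (hhigh : ∀ j < k, ∀ i ∈ σ j ∪ τ j, k ≤ (i : ℕ))
    {i j : ℕ} (hi : i < k) (hj : j < k) (hij : i ≠ j)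
    {A B : Finset (Fin n)}
    (hA : A ⊆ insert (fm n hn j) ((cycI k i j).biUnion σ))
    (hB : B ⊆ insert (fm n hn i) ((cycI k i j).biUnion τ))
    {i₀ : Fin n}
    (hi₀ : i₀ ∈ insert (fm n hn j) ((cycI k i j).biUnion σ) ∪
           insert (fm n hn i) ((cycI k i j).biUnion τ))
    (hi₀A : i₀ ∉ A) (hi₀B : i₀ ∉ B) :
    ∃ pt : Fin n → ZMod 2, goodPt n k hn σ τ pt ∧ (∀ v ∈ A, pt v = 1) ∧ (∀ v ∈ B, pt v = 0) := by
  classical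
  set Uσ := (cycI k i j).biUnion σ with hUσdef
  set Uτ := (cycI k i j).biUnion τ with hUτdef
  have hlow : ∀ m, m < k → ((fm n hn m : Fin n) : ℕ) = m := fun m hm => fm_val hn (by omega)
  have hUσ_high : ∀ v ∈ Uσ, k ≤ (v : ℕ) :=
    fun v hv => (biUnion_high hkn hhigh hj (i := i) (v := v)).1 hv
  have hUτ_high : ∀ v ∈ Uτ, k ≤ (v : ℕ) :=
    fun v hv => (biUnion_high hkn hhigh hj (i := i) (v := v)).2 hv
  have hdisjU : Disjoint Uσ Uτ := biUnion_disj hdisj hshare hj hj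
  rcases Finset.mem_union.mp hi₀ with hc1 | hc2
  · rcases Finset.mem_insert.mp hc1 with rfl | hc1b
    · -- i₀ = fm j : all-low-zero point
      refine ⟨fun v => if (v : ℕ) < k then 0 else (if v ∈ Uσ then 1 else 0), ?_, ?_, ?_⟩
      · intro m hm hcon
        beta_reduce at hcon
        have := hcon.1
        rw [if_pos (by rw [hlow m hm]; omega)] at this
        exact absurd this (by decide)
      · intro v hv
        beta_reduce
        rcases Finset.mem_insert.mp (hA hv) with rfl | hvU
        · exact absurd hv hi₀A
        · rw [if_neg (by have := hUσ_high v hvU; omega), if_pos hvU]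
      · intro v hv
        beta_reduce
        rcases Finset.mem_insert.mp (hB hv) with rfl | hvU
        · rw [if_pos (by rw [hlow i hi]; omega)]
        · rw [if_neg (by have := hUτ_high v hvU; omega),
            if_neg (fun h => Finset.disjoint_left.mp hdisjU h hvU)]
    · -- i₀ ∈ Uσ
      obtain ⟨m₀, hm₀I, hi₀σ⟩ := Finset.mem_biUnion.mp hc1b
      have hm₀k : m₀ < k := cycI_lt hj hm₀I
      set Lset : Finset ℕ := if m₀ = j then {j} else insert m₀ (cycI k m₀ j) with hLdef
      have hLj : j ∈ Lset := by
        rw [hLdef]; split_ifs with h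
        · exact Finset.mem_singleton_self j
        · exact Finset.mem_insert_of_mem (cycI_self_mem hm₀k hj h)
      have hLi : i ∉ Lset := by
        rw [hLdef]; split_ifs with h
        · rw [Finset.mem_singleton]; exact hij
        · rw [Finset.mem_insert]
          rintro (rfl | hmem)
          · exact cycI_notMem hi hj hij hm₀I
          · exact cycI_notMem hi hj hij (cycI_sub hi hj hij hm₀I h hmem)
      have hLstep : ∀ m ∈ Lset, m ≠ m₀ → pk k m ∈ Lset := by
        intro m hm hne
        by_cases h : m₀ = j
        · rw [hLdef, if_pos h] at hm ⊢
          rw [Finset.mem_singleton] at hm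
          exact absurd (hm.trans h.symm) hne
        · rw [hLdef, if_neg h] at hm ⊢
          rcases Finset.mem_insert.mp hm with rfl | hm2
          · exact absurd rfl hne
          · obtain ⟨-, h2⟩ := cycI_pred_mem (k := k) (by omega) hj hm₀k h hm2
            rcases h2 with h2 | h2
            · exact Finset.mem_insert.mpr (Or.inl h2)
            · exact Finset.mem_insert_of_mem h2
      refine ⟨fun v => if (v : ℕ) < k then (if (v : ℕ) ∈ Lset then 1 else 0)
        else (if v ∈ Uσ.erase i₀ then 1 else 0), ?_, ?_, ?_⟩
      · intro m hm hcon
        beta_reduce at hcon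
        obtain ⟨hx1, hx2, hx3, hx4⟩ := hcon
        by_cases hmm₀ : m = m₀
        · subst hmm₀
          have := hx3 i₀ hi₀σ
          have hhi : k ≤ (i₀ : ℕ) := hhigh m hm i₀ (Finset.mem_union_left _ hi₀σ)
          rw [if_neg (by omega), if_neg (fun h => (Finset.mem_erase.mp h).1 rfl)] at this
          exact absurd this (by decide)
        · rw [if_pos (by rw [hlow m hm]; omega)] at hx1
          have hmL : m ∈ Lset := by
            by_contra hno
            rw [hlow m hm, if_neg hno] at hx1
            exact absurd hx1 (by decide)
          have hpkk : pk k m < k := pk_lt (by omega) m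
          rw [if_pos (by rw [hlow _ hpkk]; omega), hlow _ hpkk,
            if_pos (hLstep m hmL hmm₀)] at hx2
          exact absurd hx2 (by decide)
      · intro v hv
        beta_reduce
        rcases Finset.mem_insert.mp (hA hv) with rfl | hvU
        · rw [if_pos (by rw [hlow j hj]; omega), hlow j hj, if_pos hLj]
        · have hne : v ≠ i₀ := fun h => hi₀A (h ▸ hv)
          rw [if_neg (by have := hUσ_high v hvU; omega),
            if_pos (Finset.mem_erase.mpr ⟨hne, hvU⟩)]
      · intro v hv
        beta_reduce
        rcases Finset.mem_insert.mp (hB hv) with rfl | hvU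
        · rw [if_pos (by rw [hlow i hi]; omega), hlow i hi, if_neg hLi]
        · rw [if_neg (by have := hUτ_high v hvU; omega),
            if_neg (fun h => Finset.disjoint_left.mp hdisjU (Finset.mem_erase.mp h).2 hvU)]
  · rcases Finset.mem_insert.mp hc2 with rfl | hc2b
    · -- i₀ = fm i : all-low-one point
      refine ⟨fun v => if (v : ℕ) < k then 1 else (if v ∈ Uσ then 1 else 0), ?_, ?_, ?_⟩
      · intro m hm hcon
        beta_reduce at hcon
        have := hcon.2.1
        have hpkk : pk k m < k := pk_lt (by omega) m
        rw [if_pos (by rw [hlow _ hpkk]; omega)] at this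
        exact absurd this (by decide)
      · intro v hv
        beta_reduce
        rcases Finset.mem_insert.mp (hA hv) with rfl | hvU
        · rw [if_pos (by rw [hlow j hj]; omega)]
        · rw [if_neg (by have := hUσ_high v hvU; omega), if_pos hvU]
      · intro v hv
        beta_reduce
        rcases Finset.mem_insert.mp (hB hv) with rfl | hvU
        · exact absurd hv hi₀B
        · rw [if_neg (by have := hUτ_high v hvU; omega),
            if_neg (fun h => Finset.disjoint_left.mp hdisjU h hvU)]
    · -- i₀ ∈ Uτ
      obtain ⟨m₀, hm₀I, hi₀τ⟩ := Finset.mem_biUnion.mp hc2b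
      have hm₀k : m₀ < k := cycI_lt hj hm₀I
      set Lset : Finset ℕ := if m₀ = j then {j} else insert m₀ (cycI k m₀ j) with hLdef
      have hLj : j ∈ Lset := by
        rw [hLdef]; split_ifs with h
        · exact Finset.mem_singleton_self j
        · exact Finset.mem_insert_of_mem (cycI_self_mem hm₀k hj h)
      have hLi : i ∉ Lset := by
        rw [hLdef]; split_ifs with h
        · rw [Finset.mem_singleton]; exact hij
        · rw [Finset.mem_insert]
          rintro (rfl | hmem)
          · exact cycI_notMem hi hj hij hm₀I
          · exact cycI_notMem hi hj hij (cycI_sub hi hj hij hm₀I h hmem)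
      have hLstep : ∀ m ∈ Lset, m ≠ m₀ → pk k m ∈ Lset := by
        intro m hm hne
        by_cases h : m₀ = j
        · rw [hLdef, if_pos h] at hm ⊢
          rw [Finset.mem_singleton] at hm
          exact absurd (hm.trans h.symm) hne
        · rw [hLdef, if_neg h] at hm ⊢
          rcases Finset.mem_insert.mp hm with rfl | hm2
          · exact absurd rfl hne
          · obtain ⟨-, h2⟩ := cycI_pred_mem (k := k) (by omega) hj hm₀k h hm2
            rcases h2 with h2 | h2
            · exact Finset.mem_insert.mpr (Or.inl h2)
            · exact Finset.mem_insert_of_mem h2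
      refine ⟨fun v => if (v : ℕ) < k then (if (v : ℕ) ∈ Lset then 1 else 0)
        else (if v ∈ insert i₀ Uσ then 1 else 0), ?_, ?_, ?_⟩
      · intro m hm hcon
        beta_reduce at hcon
        obtain ⟨hx1, hx2, hx3, hx4⟩ := hcon
        by_cases hmm₀ : m = m₀
        · subst hmm₀
          have := hx4 i₀ hi₀τ
          have hhi : k ≤ (i₀ : ℕ) := hhigh m hm i₀ (Finset.mem_union_right _ hi₀τ)
          rw [if_neg (by omega), if_pos (Finset.mem_insert_self _ _)] at this
          exact absurd this (by decide)
        · rw [if_pos (by rw [hlow m hm]; omega)] at hx1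
          have hmL : m ∈ Lset := by
            by_contra hno
            rw [hlow m hm, if_neg hno] at hx1
            exact absurd hx1 (by decide)
          have hpkk : pk k m < k := pk_lt (by omega) m
          rw [if_pos (by rw [hlow _ hpkk]; omega), hlow _ hpkk,
            if_pos (hLstep m hmL hmm₀)] at hx2
          exact absurd hx2 (by decide)
      · intro v hv
        beta_reduce
        rcases Finset.mem_insert.mp (hA hv) with rfl | hvU
        · rw [if_pos (by rw [hlow j hj]; omega), hlow j hj, if_pos hLj]
        · rw [if_neg (by have := hUσ_high v hvU; omega),
            if_pos (Finset.mem_insert_of_mem hvU)]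
      · intro v hv
        beta_reduce
        rcases Finset.mem_insert.mp (hB hv) with rfl | hvU
        · rw [if_pos (by rw [hlow i hi]; omega), hlow i hi, if_neg hLi]
        · have hne : v ≠ i₀ := fun h => hi₀B (h ▸ hv)
          rw [if_neg (by have := hUτ_high v hvU; omega)]
          rw [if_neg (by
            rw [Finset.mem_insert]
            rintro (h | h)
            · exact hne h
            · exact Finset.disjoint_left.mp hdisjU h hvU)]
  
end Setup

end CFAux

open CFAux in
/-- Theorem 7.3 (cycle), 0-based indices (paper index `j` ↦ `j-1`): the canonical form of
`(x₁(1-x_k)g₁, x₂(1-x₁)g₂, …, x_k(1-x_{k-1})g_k)` is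
`{x_j(1-x_i)G(i,j) : i ≠ j}`, and the given presentation is not canonical. -/
theorem stmt7 {n k : ℕ} (hn : 0 < n) (hk : 2 < k) (hkn : k ≤ n)
    (σ τ : ℕ → Finset (Fin n))
    (hdisj : ∀ j < k, Disjoint (σ j) (τ j))
    (hhigh : ∀ j < k, ∀ i ∈ σ j ∪ τ j, k ≤ (i : ℕ))
    (hshare : ∀ j₁ < k, ∀ j₂ < k, j₁ ≠ j₂ →
      ∀ i : Fin n, i ∉ (σ j₁ ∩ τ j₂) ∪ (σ j₂ ∩ τ j₁))
    (g : ℕ → MvPolynomial (Fin n) (ZMod 2))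
    (hg : ∀ j < k, g j = psm n (σ j) (τ j))
    (xv yv : ℕ → MvPolynomial (Fin n) (ZMod 2))
    (hxv : ∀ j (h : j < n), xv j = X (⟨j, h⟩ : Fin n))
    (hyv : ∀ j (h : j < n), yv j = 1 - X (⟨j, h⟩ : Fin n))
    (G2 : ℕ → ℕ → MvPolynomial (Fin n) (ZMod 2))
    (hG2lt : ∀ i j : ℕ, i < j → j < k → G2 i j =
      psm n ((Finset.Icc (i + 1) j).biUnion σ) ((Finset.Icc (i + 1) j).biUnion τ))
    (hG2gt : ∀ i j : ℕ, j < i → i < k → G2 i j =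
      psm n ((Finset.Icc (i + 1) (k - 1) ∪ Finset.Icc 0 j).biUnion σ)
            ((Finset.Icc (i + 1) (k - 1) ∪ Finset.Icc 0 j).biUnion τ))
    (Gens : Set (MvPolynomial (Fin n) (ZMod 2)))
    (hGens : Gens = {f | ∃ j < k, f = xv j * yv ((j + k - 1) % k) * g j}) :
    CF (Ideal.span Gens) =
      {f | ∃ i j : ℕ, i < k ∧ j < k ∧ i ≠ j ∧ f = xv j * yv i * G2 i j} ∧
    Gens ≠ CF (Ideal.span Gens) := by
  -- conversion lemmas between the statement's encodings and ours
  have hgen_eq : ∀ j, j < k → xv j * yv ((j + k - 1) % k) * g j = genP n k hn σ τ j := by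
    intro j hj
    have hpk : pk k j < k := pk_lt (by omega) j
    have hpkv : (j + k - 1) % k = pk k j := rfl
    rw [hpkv, genP_form hn hk hkn hhigh hj, hxv j (by omega), hyv (pk k j) (by omega), hg j hj]
    rw [fm_eq hn (show j < n by omega), fm_eq hn (show pk k j < n by omega)]
  have helem_eq : ∀ i j, i < k → j < k → i ≠ j →
      xv j * yv i * G2 i j = elemP n k hn σ τ i j := by
    intro i j hi hj hij
    have hG2 : G2 i j = psm n ((cycI k i j).biUnion σ) ((cycI k i j).biUnion τ) := by
      rcases lt_or_gt_of_ne hij with h | h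
      · rw [hG2lt i j h hj]
        unfold cycI
        rw [if_pos h]
      · rw [hG2gt i j h hi]
        unfold cycI
        rw [if_neg (by omega)]
    rw [elemP_form hn hkn hhigh hi hj, hxv j (by omega), hyv i (by omega), hG2]
    rw [fm_eq hn (show j < n by omega), fm_eq hn (show i < n by omega)]
  have hsets : Gens = GSet n k hn σ τ := by
    rw [hGens]
    ext f
    constructor
    · rintro ⟨j, hj, rfl⟩
      exact ⟨j, hj, hgen_eq j hj⟩
    · rintro ⟨j, hj, rfl⟩
      exact ⟨j, hj, (hgen_eq j hj).symm⟩
  have hpk_ne : ∀ m, m < k → pk k m ≠ m := by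
    intro m hm
    rw [pk_eq (by omega) hm]
    split_ifs with h <;> omega
  -- the two directions of the CF identity
  have hCF : CF (Ideal.span Gens) =
      {f | ∃ i j : ℕ, i < k ∧ j < k ∧ i ≠ j ∧ f = xv j * yv i * G2 i j} := by
    rw [hsets]
    ext f
    constructor
    · rintro ⟨⟨A, B, hABd, rfl⟩, hfJ, hmin⟩
      have Hvan : ∀ pt, goodPt n k hn σ τ pt → eval pt (psm n A B) = 0 :=
        fun pt hgpt => eval_zero_of_mem_span (goodPt_eval_gen hn hgpt) hfJ
      obtain ⟨i, j, hik, hjk, hij, hjA, hiB, hsub⟩ :=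
        key_structure hn hk hkn hdisj hshare hhigh hABd Hvan
      have hr : elemP n k hn σ τ i j ∣ psm n A B := by
        apply psm_dvd_of_subset
        · exact Finset.insert_subset hjA (Finset.biUnion_subset.mpr (fun m hm => (hsub m hm).1))
        · exact Finset.insert_subset hiB (Finset.biUnion_subset.mpr (fun m hm => (hsub m hm).2))
      have hrJ := elemP_mem_span hn hk hkn hdisj hshare hhigh i j hik hjk hij
      have heq : elemP n k hn σ τ i j = psm n A B := by
        by_contra hne
        exact hmin (elemP n k hn σ τ i j)
          ⟨_, _, elemP_disj hn hkn hdisj hshare hhigh hik hjk hij, rfl⟩ hr hne hrJ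
      exact ⟨i, j, hik, hjk, hij, by rw [helem_eq i j hik hjk hij]; exact heq.symm⟩
    · rintro ⟨i, j, hik, hjk, hij, rfl⟩
      rw [helem_eq i j hik hjk hij]
      refine ⟨⟨_, _, elemP_disj hn hkn hdisj hshare hhigh hik hjk hij, rfl⟩,
        elemP_mem_span hn hk hkn hdisj hshare hhigh i j hik hjk hij, ?_⟩
      rintro q ⟨A, B, hABd, rfl⟩ hdvd hne hqJ
      have hdisjE := elemP_disj hn hkn hdisj hshare hhigh hik hjk hij
      have hsub := subset_of_psm_dvd hdisjE hdvd
      -- find a missing index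
      have hproper : A ≠ insert (fm n hn j) ((cycI k i j).biUnion σ) ∨
          B ≠ insert (fm n hn i) ((cycI k i j).biUnion τ) := by
        by_contra hcon
        push_neg at hcon
        obtain ⟨h1, h2⟩ := hcon
        exact hne (by rw [h1, h2]; rfl)
      have hpt : ∃ pt : Fin n → ZMod 2, goodPt n k hn σ τ pt ∧
          (∀ v ∈ A, pt v = 1) ∧ (∀ v ∈ B, pt v = 0) := by
        rcases hproper with hp | hp
        · obtain ⟨i₀, hi₀S, hi₀A⟩ := Finset.exists_of_ssubset (ssubset_of_subset_of_ne hsub.1 hp)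
          have hi₀B : i₀ ∉ B := fun h =>
            Finset.disjoint_left.mp hdisjE hi₀S (hsub.2 h)
          exact min_point hn hk hkn hdisj hshare hhigh hik hjk hij hsub.1 hsub.2
            (Finset.mem_union_left _ hi₀S) hi₀A hi₀B
        · obtain ⟨i₀, hi₀S, hi₀B⟩ := Finset.exists_of_ssubset (ssubset_of_subset_of_ne hsub.2 hp)
          have hi₀A : i₀ ∉ A := fun h =>
            Finset.disjoint_right.mp hdisjE hi₀S (hsub.1 h)
          exact min_point hn hk hkn hdisj hshare hhigh hik hjk hij hsub.1 hsub.2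
            (Finset.mem_union_right _ hi₀S) hi₀A hi₀B
      obtain ⟨pt, hgpt, hp1, hp0⟩ := hpt
      have h1 : eval pt (psm n A B) ≠ 0 := eval_psm_ne_zero.mpr ⟨hp1, hp0⟩
      exact h1 (eval_zero_of_mem_span (goodPt_eval_gen hn hgpt) hqJ)
  refine ⟨hCF, ?_⟩
  rw [hCF]
  intro hEq
  -- the element x_0 (1 - x_{k-2}) G(k-2, 0) is in the RHS but not a generator
  have hmem : xv 0 * yv (k - 2) * G2 (k - 2) 0 ∈
      {f | ∃ i j : ℕ, i < k ∧ j < k ∧ i ≠ j ∧ f = xv j * yv i * G2 i j} :=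
    ⟨k - 2, 0, by omega, by omega, by omega, rfl⟩
  rw [← hEq, hGens] at hmem
  obtain ⟨m, hm, he⟩ := hmem
  rw [hgen_eq m hm, genP_eq_elemP hn hk hm,
    helem_eq (k - 2) 0 (by omega) (by omega) (by omega)] at he
  have hpkm : pk k m < k := pk_lt (by omega) m
  have hd1 := elemP_disj hn hkn hdisj hshare hhigh (i := k - 2) (j := 0)
    (by omega) (by omega) (by omega)
  have hd2 := elemP_disj hn hkn hdisj hshare hhigh (i := pk k m) (j := m)
    hpkm hm (hpk_ne m hm)
  obtain ⟨hE1, hE2⟩ := psm_inj hd1 hd2 he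
  -- from the x-part: m = 0
  have hm0 : m = 0 := by
    have h0mem : fm n hn 0 ∈ insert (fm n hn m) ((cycI k (pk k m) m).biUnion σ) := by
      rw [← hE1]; exact Finset.mem_insert_self _ _
    rcases Finset.mem_insert.mp h0mem with h | h
    · have := congrArg (fun x : Fin n => (x : ℕ)) h
      simp only [fm_val hn (show 0 < n by omega), fm_val hn (show m < n by omega)] at this
      omega
    · have := (biUnion_high hkn hhigh hm (i := pk k m) (v := fm n hn 0)).1 h
      rw [fm_val hn (by omega)] at this
      omega
  -- from the (1-x)-part: contradiction
  subst hm0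
  have hpk0 : pk k 0 = k - 1 := by rw [pk_eq (by omega) (by omega)]; simp
  have hkmem : fm n hn (k - 2) ∈
      insert (fm n hn (pk k 0)) ((cycI k (pk k 0) 0).biUnion τ) := by
    rw [← hE2]; exact Finset.mem_insert_self _ _
  rcases Finset.mem_insert.mp hkmem with h | h
  · have := congrArg (fun x : Fin n => (x : ℕ)) h
    rw [hpk0] at this
    simp only [fm_val hn (show k - 2 < n by omega), fm_val hn (show k - 1 < n by omega)] at this
    omega
  · have := (biUnion_high hkn hhigh (by omega) (i := pk k 0) (v := fm n hn (k - 2))).2 h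
    rw [fm_val hn (by omega)] at this
    omega
end

section
/- Let k > 2 with k ≤ n, and let J be the ideal of R generated by x₁(1−x_k) and by x_j(1−x_{j−1}) for 2 ≤ j ≤ k. Then CF(J) = {xᵢ·(1−x_j) : 1 ≤ i, j ≤ k, i ≠ j}. -/
open MvPolynomial

/-!
Write `J` for the ideal generated by the `x_{s(i)} (1 - x_i)`, `s` the cyclic shift of the first
`k` indices. Since `p (1 - r) = (1 - r) · p (1 - q) + p · q (1 - r)`, membership of `p (1 - q)`
in `J` is transitive, so following the cycle puts every `xᵢ (1 - x_j)`, `i ≠ j`, in `J`.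
Conversely `J` vanishes at every point of `F₂ⁿ` that is constant on the first `k` coordinates,
and evaluating at suitable such points shows that a pseudomonomial `∏_σ xᵢ ∏_τ (1 - xᵢ)` of `J`
meets these coordinates in both `σ` and `τ`, hence is divisible by some `xᵢ (1 - x_j)` of `J`.
-/

section Pseudomonomial

variable {n : ℕ}

lemma eval_psm (p : Fin n → ZMod 2) (σ τ : Finset (Fin n)) :
    eval p (psm n σ τ) = (∏ i ∈ σ, p i) * ∏ i ∈ τ, (1 - p i) := by
  simp [psm]

lemma eval_psm_eq_one {p : Fin n → ZMod 2} {σ τ : Finset (Fin n)}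
    (hσ : ∀ i ∈ σ, p i = 1) (hτ : ∀ i ∈ τ, p i = 0) : eval p (psm n σ τ) = 1 := by
  rw [eval_psm, Finset.prod_eq_one hσ, Finset.prod_eq_one fun i hi => by rw [hτ i hi, sub_zero],
    mul_one]

lemma isPseudomonomial_X_mul_one_sub_X {a b : Fin n} (hab : a ≠ b) :
    IsPseudomonomial (X a * (1 - X b) : MvPolynomial (Fin n) (ZMod 2)) :=
  ⟨{a}, {b}, Finset.disjoint_singleton.2 hab, by simp [psm]⟩

lemma subset_singleton_of_psm_dvd {σ τ : Finset (Fin n)} {a b : Fin n} (hab : a ≠ b)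
    (h : psm n σ τ ∣ X a * (1 - X b)) : σ ⊆ {a} ∧ τ ⊆ {b} := by
  have key : ∀ p : Fin n → ZMod 2, p a = 1 → p b = 0 → eval p (psm n σ τ) ≠ 0 := by
    intro p ha hb h0
    have := zero_dvd_iff.1 (h0 ▸ map_dvd (eval p) h)
    simp [ha, hb] at this
  constructor
  · intro c hc
    rw [Finset.mem_singleton]
    by_contra hca
    refine key (fun i => if i = a then 1 else 0) (by simp) (by simp [hab.symm]) ?_
    rw [eval_psm]
    exact mul_eq_zero_of_left (Finset.prod_eq_zero hc (if_neg hca)) _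
  · intro c hc
    rw [Finset.mem_singleton]
    by_contra hcb
    refine key (fun i => if i = b then 0 else 1) (by simp [hab]) (by simp) ?_
    rw [eval_psm]
    exact mul_eq_zero_of_right _ (Finset.prod_eq_zero hc (by rw [if_neg hcb, sub_self]))

variable {J : Ideal (MvPolynomial (Fin n) (ZMod 2))} {K : Set (Fin n)}

lemma exists_mem_of_psm_mem
    (hvan : ∀ (p : Fin n → ZMod 2) (v : ZMod 2), (∀ a ∈ K, p a = v) → J ≤ RingHom.ker (eval p))
    {σ τ : Finset (Fin n)} (hστ : Disjoint σ τ) (hJ : psm n σ τ ∈ J) :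
    (∃ a ∈ σ, a ∈ K) ∧ ∃ b ∈ τ, b ∈ K := by
  classical
  constructor
  · by_contra! h
    have hp := hvan (fun i => if i ∈ σ then 1 else 0) 0
      (fun a ha => if_neg fun haσ => h a haσ ha) hJ
    rw [RingHom.mem_ker, eval_psm_eq_one (by simp_all)
      (fun i hi => if_neg (Finset.disjoint_right.1 hστ hi))] at hp
    exact one_ne_zero hp
  · by_contra! h
    have hp := hvan (fun i => if i ∈ σ ∨ i ∈ K then 1 else 0) 1
      (fun a ha => if_pos (Or.inr ha)) hJ
    rw [RingHom.mem_ker, eval_psm_eq_one (by simp_all)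
      (fun i hi => if_neg (not_or.2 ⟨Finset.disjoint_right.1 hστ hi, h i hi⟩))] at hp
    exact one_ne_zero hp

theorem CF_eq_of_mem_of_le_ker_eval (hmem : ∀ a ∈ K, ∀ b ∈ K, a ≠ b → X a * (1 - X b) ∈ J)
    (hvan : ∀ (p : Fin n → ZMod 2) (v : ZMod 2), (∀ a ∈ K, p a = v) → J ≤ RingHom.ker (eval p)) :
    CF J = {f | ∃ a ∈ K, ∃ b ∈ K, a ≠ b ∧ f = X a * (1 - X b)} := by
  ext f
  constructor
  · rintro ⟨⟨σ, τ, hστ, rfl⟩, hfJ, hmin⟩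
    obtain ⟨⟨a, haσ, haK⟩, b, hbτ, hbK⟩ := exists_mem_of_psm_mem hvan hστ hfJ
    have hab : a ≠ b := fun h => Finset.disjoint_left.1 hστ haσ (h ▸ hbτ)
    refine ⟨a, haK, b, hbK, hab, ?_⟩
    by_contra hne
    exact hmin _ (isPseudomonomial_X_mul_one_sub_X hab)
      (mul_dvd_mul (Finset.dvd_prod_of_mem _ haσ) (Finset.dvd_prod_of_mem _ hbτ))
      (Ne.symm hne) (hmem a haK b hbK hab)
  · rintro ⟨a, haK, b, hbK, hab, rfl⟩
    refine ⟨isPseudomonomial_X_mul_one_sub_X hab, hmem a haK b hbK hab, ?_⟩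
    rintro _ ⟨σ, τ, hστ, rfl⟩ hdvd hne hJ
    obtain ⟨hσ, hτ⟩ := subset_singleton_of_psm_dvd hab hdvd
    obtain ⟨⟨a', ha'σ, -⟩, b', hb'τ, -⟩ := exists_mem_of_psm_mem hvan hστ hJ
    rw [Finset.Nonempty.subset_singleton_iff ⟨a', ha'σ⟩] at hσ
    rw [Finset.Nonempty.subset_singleton_iff ⟨b', hb'τ⟩] at hτ
    exact hne (by simp [hσ, hτ, psm])

end Pseudomonomial

section Cycle

lemma mul_one_sub_mem_trans {R : Type*} [CommRing R] {J : Ideal R} {p q r : R}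
    (hpq : p * (1 - q) ∈ J) (hqr : q * (1 - r) ∈ J) : p * (1 - r) ∈ J := by
  rw [show p * (1 - r) = (1 - r) * (p * (1 - q)) + p * (q * (1 - r)) by ring]
  exact J.add_mem (J.mul_mem_left _ hpq) (J.mul_mem_left _ hqr)

lemma mul_one_sub_mem_of_isCycle {R ι : Type*} [CommRing R] [Finite ι] {J : Ideal R}
    {s : Equiv.Perm ι} (hs : s.IsCycle) (x : ι → R) (hgen : ∀ i, x (s i) * (1 - x i) ∈ J)
    {i j : ι} (hi : s i ≠ i) (hj : s j ≠ j) (hij : i ≠ j) : x i * (1 - x j) ∈ J := by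
  have hpow : ∀ m : ℕ, x ((s ^ (m + 1)) j) * (1 - x j) ∈ J := by
    intro m
    induction m with
    | zero => simpa using hgen j
    | succ m ih => simpa [pow_succ'] using mul_one_sub_mem_trans (hgen _) ih
  obtain ⟨m, hm⟩ := hs.exists_pow_eq hj hi
  obtain ⟨m, rfl⟩ := Nat.exists_eq_add_one_of_ne_zero (n := m) (by rintro rfl; exact hij hm.symm)
  exact hm ▸ hpow m

lemma val_finRotate_symm {k : ℕ} (i : Fin k) : ((finRotate k).symm i : ℕ) = (i + k - 1) % k := by
  obtain ⟨m, rfl⟩ := Nat.exists_eq_add_one_of_ne_zero i.pos.ne'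
  rcases eq_or_ne i 0 with rfl | hi
  · rw [(Equiv.symm_apply_eq _).2 finRotate_last.symm]
    simp
  · rw [coe_finRotate_symm_of_ne_zero hi, show (i : ℕ) + (m + 1) - 1 = i - 1 + (m + 1) by
      have := Fin.val_ne_zero_iff.2 hi; omega, Nat.add_mod_right, Nat.mod_eq_of_lt (by omega)]

variable {n k : ℕ}

noncomputable def cycleIdeal (c : Fin k → Fin n) : Ideal (MvPolynomial (Fin n) (ZMod 2)) :=
  Ideal.span (Set.range fun i => X (c (finRotate k i)) * (1 - X (c i)))

lemma X_mul_one_sub_X_mem_cycleIdeal (c : Fin k → Fin n) {i j : Fin k} (hij : i ≠ j) :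
    X (c i) * (1 - X (c j)) ∈ cycleIdeal c := by
  obtain ⟨m, rfl⟩ : ∃ m, k = m + 2 := ⟨k - 2, by have := Fin.val_ne_of_ne hij; omega⟩
  have hmove : ∀ l, finRotate (m + 2) l ≠ l := fun l =>
    Equiv.Perm.mem_support.1 (support_finRotate ▸ Finset.mem_univ l)
  exact mul_one_sub_mem_of_isCycle isCycle_finRotate (fun l => X (c l))
    (fun l => Ideal.subset_span (Set.mem_range_self l)) (hmove i) (hmove j) hij

lemma cycleIdeal_le_ker_eval (c : Fin k → Fin n) {p : Fin n → ZMod 2} {v : ZMod 2}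
    (hp : ∀ i, p (c i) = v) : cycleIdeal c ≤ RingHom.ker (eval p) := by
  refine Ideal.span_le.2 ?_
  rintro _ ⟨i, rfl⟩
  have hv : v * (1 - v) = 0 := by fin_cases v <;> decide
  simpa [hp] using hv

theorem CF_cycleIdeal (c : Fin k → Fin n) :
    CF (cycleIdeal c) = {f | ∃ a ∈ Set.range c, ∃ b ∈ Set.range c, a ≠ b ∧ f = X a * (1 - X b)} :=
  CF_eq_of_mem_of_le_ker_eval
    (by
      rintro _ ⟨i, rfl⟩ _ ⟨j, rfl⟩ hij
      exact X_mul_one_sub_X_mem_cycleIdeal c (ne_of_apply_ne c hij))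
    (fun _ _ hp => cycleIdeal_le_ker_eval c fun i => hp _ ⟨i, rfl⟩)

lemma span_eq_cycleIdeal_castLE (hkn : k ≤ n)
    {xv yv : ℕ → MvPolynomial (Fin n) (ZMod 2)}
    (hxv : ∀ j (h : j < n), xv j = X (⟨j, h⟩ : Fin n))
    (hyv : ∀ j (h : j < n), yv j = 1 - X (⟨j, h⟩ : Fin n)) :
    Ideal.span {f | ∃ j < k, f = xv j * yv ((j + k - 1) % k)} = cycleIdeal (Fin.castLE hkn) := by
  refine congrArg Ideal.span ?_
  ext f
  constructor
  · rintro ⟨j, hj, rfl⟩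
    refine ⟨(finRotate k).symm ⟨j, hj⟩, ?_⟩
    dsimp only
    rw [Equiv.apply_symm_apply, hxv _ (hj.trans_le hkn),
      hyv _ ((Nat.mod_lt _ (by omega)).trans_le hkn)]
    congr 3
    exact Fin.ext (val_finRotate_symm (k := k) _)
  · rintro ⟨i, rfl⟩
    refine ⟨finRotate k i, (finRotate k i).isLt, ?_⟩
    rw [← val_finRotate_symm, Equiv.symm_apply_apply, hxv _ (by omega), hyv _ (by omega)]
    rfl

end Cycle

theorem stmt8_general {n k : ℕ} (hkn : k ≤ n)
    (xv yv : ℕ → MvPolynomial (Fin n) (ZMod 2))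
    (hxv : ∀ j (h : j < n), xv j = X (⟨j, h⟩ : Fin n))
    (hyv : ∀ j (h : j < n), yv j = 1 - X (⟨j, h⟩ : Fin n)) :
    CF (Ideal.span {f | ∃ j < k, f = xv j * yv ((j + k - 1) % k)}) =
      {f | ∃ i j : ℕ, i < k ∧ j < k ∧ i ≠ j ∧ f = xv i * yv j} := by
  rw [span_eq_cycleIdeal_castLE hkn hxv hyv, CF_cycleIdeal, Fin.range_castLE]
  ext f
  constructor
  · rintro ⟨a, ha, b, hb, hab, rfl⟩
    exact ⟨a, b, ha, hb, Fin.val_ne_of_ne hab, by rw [hxv, hyv]⟩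
  · rintro ⟨i, j, hi, hj, hij, rfl⟩
    exact ⟨⟨i, by omega⟩, hi, ⟨j, by omega⟩, hj, fun h => hij (congrArg Fin.val h),
      by rw [hxv, hyv]⟩

/-- Theorem 7.3, special case (0-based indices): the canonical form of
`(x₁(1-x_k), x₂(1-x₁), …, x_k(1-x_{k-1}))` is `{xᵢ(1-x_j) : i ≠ j, 1 ≤ i, j ≤ k}`. -/
theorem stmt8 {n k : ℕ} (hn : 0 < n) (hk : 2 < k) (hkn : k ≤ n)
    (xv yv : ℕ → MvPolynomial (Fin n) (ZMod 2))
    (hxv : ∀ j (h : j < n), xv j = X (⟨j, h⟩ : Fin n))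
    (hyv : ∀ j (h : j < n), yv j = 1 - X (⟨j, h⟩ : Fin n)) :
    CF (Ideal.span {f | ∃ j < k, f = xv j * yv ((j + k - 1) % k)}) =
      {f | ∃ i j : ℕ, i < k ∧ j < k ∧ i ≠ j ∧ f = xv i * yv j} :=
  stmt8_general hkn xv yv hxv hyv
end

section
/- Let k > 0 with k ≤ n, and let g, g₁,…,g_k be pseudomonomials, g = ∏_{i∈σ}xᵢ·∏_{i∈τ}(1−xᵢ) and g_j = ∏_{i∈σ_j}xᵢ·∏_{i∈τ_j}(1−xᵢ), with σ, τ, σ_j, τ_j ⊆ {k+1,…,n}, such that no two distinct members of the list g, g₁,…,g_k share an index. For T ⊆ {1,…,k} let m_T = (∏_{i∈{1,…,k}∖T} xᵢ) · ∏_{ℓ∈σ∪⋃_{i∈T}σ_i} x_ℓ · ∏_{ℓ∈τ∪⋃_{i∈T}τ_i} (1−x_ℓ). Let J be the ideal of R generated by x₁⋯x_k·g and by (1−xᵢ)·gᵢ for 1 ≤ i ≤ k, and let X = {(1−xᵢ)·gᵢ : 1 ≤ i ≤ k} ∪ {m_T : T ⊆ {1,…,k}}. Then CF(J) = {f ∈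 X : there is no f′ ∈ X with f′ ≠ f and f′ ∣ f}. -/
open MvPolynomial

lemma psm_dvd {n : ℕ} {σ' τ' σ τ : Finset (Fin n)} (h1 : σ' ⊆ σ) (h2 : τ' ⊆ τ) :
    psm n σ' τ' ∣ psm n σ τ :=
  mul_dvd_mul (Finset.prod_dvd_prod_of_subset _ _ _ h1) (Finset.prod_dvd_prod_of_subset _ _ _ h2)

lemma one_sub_X_ne_zero {n : ℕ} (i : Fin n) : (1 - X i : MvPolynomial (Fin n) (ZMod 2)) ≠ 0 := by
  intro h
  have h2 : (1 : MvPolynomial (Fin n) (ZMod 2)) = X i := by linear_combination h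
  have := congrArg (MvPolynomial.coeff 0) h2
  simp at this

lemma psm_ne_zero {n : ℕ} (σ τ : Finset (Fin n)) : psm n σ τ ≠ 0 := by
  apply mul_ne_zero
  · exact Finset.prod_ne_zero_iff.2 fun i _ => X_ne_zero i
  · exact Finset.prod_ne_zero_iff.2 fun i _ => one_sub_X_ne_zero i

lemma mv_isUnit_eq_one : ∀ {n : ℕ} (c : MvPolynomial (Fin n) (ZMod 2)), IsUnit c → c = 1 := by
  intro n
  induction n with
  | zero =>
    intro c hc
    let e := MvPolynomial.isEmptyRingEquiv (ZMod 2) (Fin 0)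
    have h1 : IsUnit (e c) := hc.map e
    have h2 : e c = 1 := by
      have : e c ≠ 0 := h1.ne_zero
      revert this
      generalize e c = a
      revert a; decide
    have := congrArg e.symm h2
    simpa using this
  | succ m ih =>
    intro c hc
    let e := MvPolynomial.finSuccEquiv (ZMod 2) m
    have h1 : IsUnit (e c) := hc.map e
    obtain ⟨r, hr, hCr⟩ := Polynomial.isUnit_iff.1 h1
    have hr1 : r = 1 := ih r hr
    have h2 : e c = 1 := by rw [← hCr, hr1, map_one]
    have := congrArg e.symm h2
    simpa using this

lemma dvd_dvd_eq {n : ℕ} {f g : MvPolynomial (Fin n) (ZMod 2)} (hf : f ≠ 0)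
    (hfg : f ∣ g) (hgf : g ∣ f) : f = g := by
  obtain ⟨c, hc⟩ := hfg
  obtain ⟨d, hd⟩ := hgf
  have h1 : f * 1 = f * (c * d) := by rw [mul_one]; nth_rewrite 1 [hd, hc]; ring
  have h2 : (1 : MvPolynomial (Fin n) (ZMod 2)) = c * d := mul_left_cancel₀ hf h1
  have hcu : IsUnit c := IsUnit.of_mul_eq_one (a := c) d h2.symm
  rw [hc, mv_isUnit_eq_one c hcu, mul_one]
section Main

open Finset in
lemma prod_attachFin {M : Type*} [CommMonoid M] {n : ℕ} (S : Finset ℕ)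
    (h : ∀ m ∈ S, m < n) (f : Fin n → M) (g : ℕ → M)
    (hfg : ∀ a : Fin n, (a : ℕ) ∈ S → f a = g a) :
    ∏ a ∈ S.attachFin h, f a = ∏ m ∈ S, g m := by
  refine Finset.prod_bij (fun a _ => (a : ℕ)) ?_ ?_ ?_ ?_
  · intro a ha; exact (Finset.mem_attachFin h).1 ha
  · intro a _ b _ hab; exact Fin.val_injective hab
  · intro b hb; exact ⟨⟨b, h b hb⟩, (Finset.mem_attachFin h).2 hb, rfl⟩
  · intro a ha; exact hfg a ((Finset.mem_attachFin h).1 ha)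

variable {n k : ℕ} (hn : 0 < n) (hk : 0 < k) (hkn : k ≤ n)
    (σ τ : Finset (Fin n)) (σf τf : ℕ → Finset (Fin n))
    (hd : Disjoint σ τ) (hdf : ∀ i < k, Disjoint (σf i) (τf i))
    (hhigh : ∀ i ∈ σ ∪ τ, k ≤ (i : ℕ))
    (hhighf : ∀ j < k, ∀ i ∈ σf j ∪ τf j, k ≤ (i : ℕ))
    (hshare1 : ∀ j < k, ∀ i : Fin n, i ∉ (σ ∩ τf j) ∪ (σf j ∩ τ))
    (hshare2 : ∀ j₁ < k, ∀ j₂ < k, j₁ ≠ j₂ →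
      ∀ i : Fin n, i ∉ (σf j₁ ∩ τf j₂) ∪ (σf j₂ ∩ τf j₁))
    (xv yv : ℕ → MvPolynomial (Fin n) (ZMod 2))
    (hxv : ∀ j (h : j < n), xv j = X (⟨j, h⟩ : Fin n))
    (hyv : ∀ j (h : j < n), yv j = 1 - X (⟨j, h⟩ : Fin n))

/-- the low-index part of `m_T` as a `Finset (Fin n)` -/
noncomputable def lowF (n k : ℕ) (hkn : k ≤ n) (T : Finset ℕ) : Finset (Fin n) :=
  (Finset.range k \ T).attachFin
    (fun m hm => lt_of_lt_of_le (Finset.mem_range.1 (Finset.mem_sdiff.1 hm).1) hkn)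

lemma mem_lowF {T : Finset ℕ} {a : Fin n} :
    a ∈ lowF n k hkn T ↔ (a : ℕ) < k ∧ (a : ℕ) ∉ T := by
  simp [lowF, Finset.mem_attachFin, Finset.mem_sdiff]

include hd hdf hshare1 hshare2 in
lemma conflict {T T' : Finset ℕ} (hT : T ⊆ Finset.range k) (hT' : T' ⊆ Finset.range k)
    {i : Fin n} (h1 : i ∈ σ ∪ T.biUnion σf) (h2 : i ∈ τ ∪ T'.biUnion τf) : False := by
  rcases Finset.mem_union.1 h1 with hs | hbs
  · rcases Finset.mem_union.1 h2 with ht | hbt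
    · exact Finset.disjoint_left.1 hd hs ht
    · obtain ⟨j, hjT, hja⟩ := Finset.mem_biUnion.1 hbt
      exact hshare1 j (Finset.mem_range.1 (hT' hjT)) i
        (Finset.mem_union_left _ (Finset.mem_inter.2 ⟨hs, hja⟩))
  · obtain ⟨j, hjT, hja⟩ := Finset.mem_biUnion.1 hbs
    have hjk := Finset.mem_range.1 (hT hjT)
    rcases Finset.mem_union.1 h2 with ht | hbt
    · exact hshare1 j hjk i (Finset.mem_union_right _ (Finset.mem_inter.2 ⟨hja, ht⟩))
    · obtain ⟨j', hj'T, hj'a⟩ := Finset.mem_biUnion.1 hbt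
      have hj'k := Finset.mem_range.1 (hT' hj'T)
      by_cases hjj : j = j'
      · subst hjj
        exact Finset.disjoint_left.1 (hdf j hjk) hja hj'a
      · exact hshare2 j hjk j' hj'k hjj i
          (Finset.mem_union_left _ (Finset.mem_inter.2 ⟨hja, hj'a⟩))

include hhigh hhighf in
lemma low_high {T T' : Finset ℕ} (hT : T ⊆ Finset.range k) (hT' : T' ⊆ Finset.range k)
    {i : Fin n} (h1 : i ∈ σ ∪ T.biUnion σf ∨ i ∈ τ ∪ T'.biUnion τf) : k ≤ (i : ℕ) := by
  rcases h1 with h | h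
  · rcases Finset.mem_union.1 h with hs | hbs
    · exact hhigh i (Finset.mem_union_left _ hs)
    · obtain ⟨j, hjT, hja⟩ := Finset.mem_biUnion.1 hbs
      exact hhighf j (Finset.mem_range.1 (hT hjT)) i (Finset.mem_union_left _ hja)
  · rcases Finset.mem_union.1 h with hs | hbs
    · exact hhigh i (Finset.mem_union_right _ hs)
    · obtain ⟨j, hjT, hja⟩ := Finset.mem_biUnion.1 hbs
      exact hhighf j (Finset.mem_range.1 (hT' hjT)) i (Finset.mem_union_right _ hja)

include hkn hxv hhigh hhighf in
lemma m_eq (T : Finset ℕ) (hT : T ⊆ Finset.range k) :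
    (∏ i ∈ Finset.range k \ T, xv i) * psm n (σ ∪ T.biUnion σf) (τ ∪ T.biUnion τf)
    = psm n (lowF n k hkn T ∪ (σ ∪ T.biUnion σf)) (τ ∪ T.biUnion τf) := by
  have hdisj : Disjoint (lowF n k hkn T) (σ ∪ T.biUnion σf) := by
    rw [Finset.disjoint_left]
    intro a ha hmem
    have h1 := ((mem_lowF (hkn := hkn)).1 ha).1
    have h2 := low_high σ τ σf τf hhigh hhighf hT hT (Or.inl hmem)
    omega
  rw [psm, psm, Finset.prod_union hdisj, ← mul_assoc]
  congr 2
  refine (prod_attachFin _ _ _ xv ?_).symm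
  intro a ha
  rw [hxv _ a.2]


include hd hdf hhigh hhighf hshare1 hshare2 in
lemma m_disj (T : Finset ℕ) (hT : T ⊆ Finset.range k) :
    Disjoint (lowF n k hkn T ∪ (σ ∪ T.biUnion σf)) (τ ∪ T.biUnion τf) := by
  rw [Finset.disjoint_left]
  intro a ha hmem
  rcases Finset.mem_union.1 ha with hl | hs
  · have h1 := ((mem_lowF (hkn := hkn)).1 hl).1
    have h2 := low_high σ τ σf τf hhigh hhighf hT hT (Or.inr hmem)
    omega
  · exact conflict σ τ σf τf hd hdf hshare1 hshare2 hT hT hs hmem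

include hkn hhighf hyv in
lemma q_eq (j : ℕ) (hj : j < k) :
    yv j * psm n (σf j) (τf j)
      = psm n (σf j) (insert (⟨j, lt_of_lt_of_le hj hkn⟩ : Fin n) (τf j)) := by
  have hnotmem : (⟨j, lt_of_lt_of_le hj hkn⟩ : Fin n) ∉ τf j := by
    intro hmem
    have := hhighf j hj _ (Finset.mem_union_right _ hmem)
    simp at this; omega
  rw [hyv j (lt_of_lt_of_le hj hkn), psm, psm, Finset.prod_insert hnotmem]
  ring

include hkn hdf hhighf in
lemma q_disj (j : ℕ) (hj : j < k) :
    Disjoint (σf j) (insert (⟨j, lt_of_lt_of_le hj hkn⟩ : Fin n) (τf j)) := by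
  rw [Finset.disjoint_left]
  intro a ha hmem
  rcases Finset.mem_insert.1 hmem with h | h
  · have := hhighf j hj a (Finset.mem_union_left _ ha)
    rw [h] at this; simp at this; omega
  · exact Finset.disjoint_left.1 (hdf j hj) ha h


include hkn hxv hyv in
lemma mT_mem (T : Finset ℕ) (hT : T ⊆ Finset.range k) :
    (∏ i ∈ Finset.range k \ T, xv i) * psm n (σ ∪ T.biUnion σf) (τ ∪ T.biUnion τf) ∈
      Ideal.span (({(∏ i ∈ Finset.range k, xv i) * psm n σ τ} :
          Set (MvPolynomial (Fin n) (ZMod 2))) ∪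
        {f | ∃ j < k, f = yv j * psm n (σf j) (τf j)}) := by
  induction T using Finset.induction_on with
  | empty =>
    simp only [Finset.sdiff_empty, Finset.biUnion_empty, Finset.union_empty]
    exact Ideal.subset_span (Or.inl rfl)
  | @insert j T hjT ih =>
    have hT' : T ⊆ Finset.range k := (Finset.subset_insert j T).trans hT
    have hjk : j < k := Finset.mem_range.1 (hT (Finset.mem_insert_self j T))
    have hjn : j < n := lt_of_lt_of_le hjk hkn
    have hmT := ih hT'
    set U' := σ ∪ (insert j T).biUnion σf with hU'
    set V' := τ ∪ (insert j T).biUnion τf with hV'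
    set m' := (∏ i ∈ Finset.range k \ insert j T, xv i) * psm n U' V' with hm'
    have hsum : m' = xv j * m' + yv j * m' := by
      rw [hxv j hjn, hyv j hjn]; ring
    rw [hsum]
    apply Ideal.add_mem
    · -- `xv j * m'` is a multiple of `m_T`
      have hjmem : j ∈ Finset.range k \ T :=
        Finset.mem_sdiff.2 ⟨Finset.mem_range.2 hjk, hjT⟩
      have heq : xv j * m' = (∏ i ∈ Finset.range k \ T, xv i) * psm n U' V' := by
        rw [hm', Finset.sdiff_insert, ← mul_assoc, Finset.mul_prod_erase _ xv hjmem]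
      have hsub1 : σ ∪ T.biUnion σf ⊆ U' := by
        intro x hx
        rcases Finset.mem_union.1 hx with h | h
        · exact Finset.mem_union_left _ h
        · obtain ⟨j', hj', hx'⟩ := Finset.mem_biUnion.1 h
          exact Finset.mem_union_right _
            (Finset.mem_biUnion.2 ⟨j', Finset.mem_insert_of_mem hj', hx'⟩)
      have hsub2 : τ ∪ T.biUnion τf ⊆ V' := by
        intro x hx
        rcases Finset.mem_union.1 hx with h | h
        · exact Finset.mem_union_left _ h
        · obtain ⟨j', hj', hx'⟩ := Finset.mem_biUnion.1 h
          exact Finset.mem_union_right _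
            (Finset.mem_biUnion.2 ⟨j', Finset.mem_insert_of_mem hj', hx'⟩)
      have hdvd : (∏ i ∈ Finset.range k \ T, xv i) *
          psm n (σ ∪ T.biUnion σf) (τ ∪ T.biUnion τf) ∣ xv j * m' := by
        rw [heq]
        exact mul_dvd_mul dvd_rfl (psm_dvd hsub1 hsub2)
      obtain ⟨c, hc⟩ := hdvd
      rw [hc]
      exact Ideal.mul_mem_right _ _ hmT
    · -- `yv j * m'` is a multiple of the generator `yv j * psm n (σf j) (τf j)`
      have hqmem : yv j * psm n (σf j) (τf j) ∈
          Ideal.span (({(∏ i ∈ Finset.range k, xv i) * psm n σ τ} :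
              Set (MvPolynomial (Fin n) (ZMod 2))) ∪
            {f | ∃ j < k, f = yv j * psm n (σf j) (τf j)}) :=
        Ideal.subset_span (Or.inr ⟨j, hjk, rfl⟩)
      have hsub1 : σf j ⊆ U' := fun x hx =>
        Finset.mem_union_right _ (Finset.mem_biUnion.2 ⟨j, Finset.mem_insert_self j T, hx⟩)
      have hsub2 : τf j ⊆ V' := fun x hx =>
        Finset.mem_union_right _ (Finset.mem_biUnion.2 ⟨j, Finset.mem_insert_self j T, hx⟩)
      have hdvd : yv j * psm n (σf j) (τf j) ∣ yv j * m' := by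
        rw [hm', mul_comm (∏ i ∈ Finset.range k \ insert j T, xv i) (psm n U' V'),
          ← mul_assoc]
        exact (mul_dvd_mul dvd_rfl (psm_dvd hsub1 hsub2)).mul_right _
      obtain ⟨c, hc⟩ := hdvd
      rw [hc]
      exact Ideal.mul_mem_right _ _ hqmem


include hkn hd hdf hhigh hhighf hshare1 hshare2 hxv hyv in
lemma psm_not_mem (α β : Finset (Fin n)) (hαβ : Disjoint α β)
    (hnd : ∀ j < k, ¬ (yv j * psm n (σf j) (τf j) ∣ psm n α β))
    (hnm : ∀ T ⊆ Finset.range k,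
      ¬ ((∏ i ∈ Finset.range k \ T, xv i) *
          psm n (σ ∪ T.biUnion σf) (τ ∪ T.biUnion τf) ∣ psm n α β)) :
    psm n α β ∉ Ideal.span (({(∏ i ∈ Finset.range k, xv i) * psm n σ τ} :
          Set (MvPolynomial (Fin n) (ZMod 2))) ∪
        {f | ∃ j < k, f = yv j * psm n (σf j) (τf j)}) := by
  classical
  have hq' : ∀ j, ∀ hj : j < k,
      ¬((⟨j, lt_of_lt_of_le hj hkn⟩ : Fin n) ∈ β ∧ σf j ⊆ α ∧ τf j ⊆ β) := by
    rintro j hj ⟨h1, h2, h3⟩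
    apply hnd j hj
    rw [q_eq hkn σf τf hhighf yv hyv j hj]
    exact psm_dvd h2 (Finset.insert_subset h1 h3)
  set T : Finset ℕ := (Finset.range k).filter (fun j => σf j ⊆ α ∧ τf j ⊆ β) with hTdef
  have hTsub : T ⊆ Finset.range k := Finset.filter_subset _ _
  have hmT := hnm T hTsub
  rw [m_eq hkn σ τ σf τf hhigh hhighf xv hxv T hTsub] at hmT
  have hmT' : ¬ ((lowF n k hkn T ∪ (σ ∪ T.biUnion σf)) ⊆ α ∧ (τ ∪ T.biUnion τf) ⊆ β) :=
    fun h => hmT (psm_dvd h.1 h.2)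
  obtain ⟨bad, hblow, hbα, hbT, hwit⟩ :
      ∃ bad : Finset (Fin n), (∀ a ∈ bad, (a : ℕ) < k) ∧ (∀ a ∈ bad, a ∉ α) ∧
        (∀ a ∈ bad, ¬(σf (a : ℕ) ⊆ α ∧ τf (a : ℕ) ⊆ β)) ∧
        (¬(σ ⊆ α ∧ τ ⊆ β) ∨ bad.Nonempty) := by
    by_cases hcase : σ ⊆ α ∧ τ ⊆ β
    · have hbU : T.biUnion σf ⊆ α := by
        intro x hx
        obtain ⟨j, hjT, hxj⟩ := Finset.mem_biUnion.1 hx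
        exact (Finset.mem_filter.1 hjT).2.1 hxj
      have hbV : T.biUnion τf ⊆ β := by
        intro x hx
        obtain ⟨j, hjT, hxj⟩ := Finset.mem_biUnion.1 hx
        exact (Finset.mem_filter.1 hjT).2.2 hxj
      have h2 : τ ∪ T.biUnion τf ⊆ β := Finset.union_subset hcase.2 hbV
      have h1 : ¬ (lowF n k hkn T ∪ (σ ∪ T.biUnion σf) ⊆ α) := fun h => hmT' ⟨h, h2⟩
      obtain ⟨a, ha, haα⟩ := Finset.not_subset.1 h1
      have haL : a ∈ lowF n k hkn T := by
        rcases Finset.mem_union.1 ha with h | h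
        · exact h
        · exact absurd (Finset.union_subset hcase.1 hbU h) haα
      have h3 := (mem_lowF (hkn := hkn)).1 haL
      refine ⟨{a}, ?_, ?_, ?_, Or.inr ⟨a, Finset.mem_singleton_self a⟩⟩
      · intro b hb; rw [Finset.mem_singleton.1 hb]; exact h3.1
      · intro b hb; rw [Finset.mem_singleton.1 hb]; exact haα
      · intro b hb hh
        rw [Finset.mem_singleton.1 hb] at hh
        exact h3.2 (Finset.mem_filter.2 ⟨Finset.mem_range.2 h3.1, hh⟩)
    · exact ⟨∅, by simp, by simp, by simp, Or.inl hcase⟩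
  set v : Fin n → ZMod 2 := fun i =>
    if i ∈ β ∨ i ∈ bad then 0
    else if i ∈ α ∨ i ∈ τ ∨ (∃ j, j < k ∧ i ∈ τf j) ∨ (i : ℕ) < k then 1 else 0 with hvdef
  have hv1 : ∀ i ∈ α, v i = 1 := by
    intro i hi
    have h1 : i ∉ β := Finset.disjoint_left.1 hαβ hi
    have h2 : i ∉ bad := fun h => hbα i h hi
    simp [hvdef, h1, h2, hi]
  have hv0 : ∀ i ∈ β, v i = 0 := by intro i hi; simp [hvdef, hi]
  have hvbad : ∀ i ∈ bad, v i = 0 := by intro i hi; simp [hvdef, hi]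
  have hvτf : ∀ j, j < k → ∀ i ∈ τf j, i ∉ β → v i = 1 := by
    intro j hj i hi hiβ
    have hbadni : i ∉ bad := by
      intro h
      have h1 := hblow i h
      have h2 := hhighf j hj i (Finset.mem_union_right _ hi)
      omega
    have hex : (∃ j', j' < k ∧ i ∈ τf j') := ⟨j, hj, hi⟩
    simp [hvdef, hiβ, hbadni, hex]
  have hvτ : ∀ i ∈ τ, i ∉ β → v i = 1 := by
    intro i hi hiβ
    have hbadni : i ∉ bad := by
      intro h
      have h1 := hblow i h
      have h2 := hhigh i (Finset.mem_union_right _ hi)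
      omega
    simp [hvdef, hiβ, hbadni, hi]
  have hvσf : ∀ j, j < k → ∀ i ∈ σf j, i ∉ α → v i = 0 := by
    intro j hj i hi hiα
    by_cases hib : i ∈ β ∨ i ∈ bad
    · simp [hvdef, hib]
    · have hik : ¬ ((i : ℕ) < k) := by
        have := hhighf j hj i (Finset.mem_union_left _ hi); omega
      have hiτ : i ∉ τ := fun h =>
        hshare1 j hj i (Finset.mem_union_right _ (Finset.mem_inter.2 ⟨hi, h⟩))
      have hiτf : ¬ ∃ j', j' < k ∧ i ∈ τf j' := by
        rintro ⟨j', hj', hij'⟩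
        by_cases hjj : j = j'
        · subst hjj
          exact Finset.disjoint_left.1 (hdf j hj) hi hij'
        · exact hshare2 j hj j' hj' hjj i
            (Finset.mem_union_left _ (Finset.mem_inter.2 ⟨hi, hij'⟩))
      simp [hvdef, hib, hiα, hiτ, hiτf, hik]
  have hvσ : ∀ i ∈ σ, i ∉ α → v i = 0 := by
    intro i hi hiα
    by_cases hib : i ∈ β ∨ i ∈ bad
    · simp [hvdef, hib]
    · have hik : ¬ ((i : ℕ) < k) := by
        have := hhigh i (Finset.mem_union_left _ hi); omega
      have hiτ : i ∉ τ := fun h => Finset.disjoint_left.1 hd hi h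
      have hiτf : ¬ ∃ j', j' < k ∧ i ∈ τf j' := by
        rintro ⟨j', hj', hij'⟩
        exact hshare1 j' hj' i
          (Finset.mem_union_left _ (Finset.mem_inter.2 ⟨hi, hij'⟩))
      simp [hvdef, hib, hiα, hiτ, hiτf, hik]
  have hevalpsm : ∀ s t : Finset (Fin n),
      MvPolynomial.eval v (psm n s t) = (∏ i ∈ s, v i) * ∏ i ∈ t, (1 - v i) := by
    intro s t
    simp [psm]
  have hgen1 : MvPolynomial.eval v ((∏ i ∈ Finset.range k, xv i) * psm n σ τ) = 0 := by
    rcases hwit with hc | ⟨a, ha⟩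
    · rcases not_and_or.1 hc with h | h
      · obtain ⟨i, hi, hiα⟩ := Finset.not_subset.1 h
        rw [map_mul, hevalpsm]
        have : ∏ x ∈ σ, v x = 0 := Finset.prod_eq_zero hi (hvσ i hi hiα)
        rw [this, zero_mul, mul_zero]
      · obtain ⟨i, hi, hiβ⟩ := Finset.not_subset.1 h
        rw [map_mul, hevalpsm]
        have : ∏ x ∈ τ, (1 - v x) = 0 :=
          Finset.prod_eq_zero hi (by rw [hvτ i hi hiβ]; ring)
        rw [this, mul_zero, mul_zero]
    · have hak := hblow a ha
      have h0 : MvPolynomial.eval v (∏ i ∈ Finset.range k, xv i) = 0 := by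
        rw [map_prod]
        apply Finset.prod_eq_zero (Finset.mem_range.2 hak)
        rw [hxv (a : ℕ) (lt_of_lt_of_le hak hkn)]
        have hfa : (⟨(a : ℕ), lt_of_lt_of_le hak hkn⟩ : Fin n) = a := Fin.ext rfl
        rw [hfa, MvPolynomial.eval_X]
        exact hvbad a ha
      rw [map_mul, h0, zero_mul]
  have hgen2 : ∀ j, j < k →
      MvPolynomial.eval v (yv j * psm n (σf j) (τf j)) = 0 := by
    intro j hj
    have hjn : j < n := lt_of_lt_of_le hj hkn
    by_cases hT2 : σf j ⊆ α ∧ τf j ⊆ β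
    · have hjβ : (⟨j, lt_of_lt_of_le hj hkn⟩ : Fin n) ∉ β := fun h => hq' j hj ⟨h, hT2⟩
      have hjbad : (⟨j, lt_of_lt_of_le hj hkn⟩ : Fin n) ∉ bad := fun h => hbT _ h hT2
      have hvj : v ⟨j, lt_of_lt_of_le hj hkn⟩ = 1 := by
        simp [hvdef, hjβ, hjbad, hj]
      rw [map_mul, hyv j hjn, map_sub, map_one, MvPolynomial.eval_X]
      have hpe : (⟨j, hjn⟩ : Fin n) = (⟨j, lt_of_lt_of_le hj hkn⟩ : Fin n) := rfl
      rw [hpe, hvj]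
      ring
    · rcases not_and_or.1 hT2 with h | h
      · obtain ⟨i, hi, hiα⟩ := Finset.not_subset.1 h
        rw [map_mul, hevalpsm]
        have : ∏ x ∈ σf j, v x = 0 := Finset.prod_eq_zero hi (hvσf j hj i hi hiα)
        rw [this, zero_mul, mul_zero]
      · obtain ⟨i, hi, hiβ⟩ := Finset.not_subset.1 h
        rw [map_mul, hevalpsm]
        have : ∏ x ∈ τf j, (1 - v x) = 0 :=
          Finset.prod_eq_zero hi (by rw [hvτf j hj i hi hiβ]; ring)
        rw [this, mul_zero, mul_zero]
  intro hmem
  have hker : Ideal.span (({(∏ i ∈ Finset.range k, xv i) * psm n σ τ} :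
          Set (MvPolynomial (Fin n) (ZMod 2))) ∪
        {f | ∃ j < k, f = yv j * psm n (σf j) (τf j)}) ≤
      RingHom.ker (MvPolynomial.eval v) := by
    rw [Ideal.span_le]
    rintro f (hf | ⟨j, hj, rfl⟩)
    · rw [Set.mem_singleton_iff.1 hf]
      exact hgen1
    · exact hgen2 j hj
  have h0 : MvPolynomial.eval v (psm n α β) = 0 := hker hmem
  have h1 : MvPolynomial.eval v (psm n α β) = 1 := by
    rw [hevalpsm]
    rw [Finset.prod_eq_one (fun i hi => hv1 i hi),
      Finset.prod_eq_one (fun i hi => by rw [hv0 i hi]; ring), one_mul]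
  rw [h0] at h1
  exact one_ne_zero h1.symm


include hkn hd hdf hhigh hhighf hshare1 hshare2 hxv hyv in
lemma X_mem_J (Xset : Set (MvPolynomial (Fin n) (ZMod 2)))
    (hX : Xset = {f | ∃ j < k, f = yv j * psm n (σf j) (τf j)} ∪
      {f | ∃ T : Finset ℕ, T ⊆ Finset.range k ∧
        f = (∏ i ∈ Finset.range k \ T, xv i) *
              psm n (σ ∪ T.biUnion σf) (τ ∪ T.biUnion τf)}) :
    ∀ f ∈ Xset, f ∈ Ideal.span (({(∏ i ∈ Finset.range k, xv i) * psm n σ τ} :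
          Set (MvPolynomial (Fin n) (ZMod 2))) ∪
        {f | ∃ j < k, f = yv j * psm n (σf j) (τf j)}) := by
  intro f hf
  rw [hX] at hf
  rcases hf with ⟨j, hj, rfl⟩ | ⟨T, hT, rfl⟩
  · exact Ideal.subset_span (Or.inr ⟨j, hj, rfl⟩)
  · exact mT_mem hkn σ τ σf τf xv yv hxv hyv T hT

include hkn hd hdf hhigh hhighf hshare1 hshare2 hxv hyv in
lemma X_psm (Xset : Set (MvPolynomial (Fin n) (ZMod 2)))
    (hX : Xset = {f | ∃ j < k, f = yv j * psm n (σf j) (τf j)} ∪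
      {f | ∃ T : Finset ℕ, T ⊆ Finset.range k ∧
        f = (∏ i ∈ Finset.range k \ T, xv i) *
              psm n (σ ∪ T.biUnion σf) (τ ∪ T.biUnion τf)}) :
    ∀ f ∈ Xset, IsPseudomonomial f := by
  intro f hf
  rw [hX] at hf
  rcases hf with ⟨j, hj, rfl⟩ | ⟨T, hT, rfl⟩
  · exact ⟨σf j, insert (⟨j, lt_of_lt_of_le hj hkn⟩ : Fin n) (τf j),
      q_disj hkn σf τf hdf hhighf j hj, q_eq hkn σf τf hhighf yv hyv j hj⟩
  · exact ⟨lowF n k hkn T ∪ (σ ∪ T.biUnion σf), τ ∪ T.biUnion τf,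
      m_disj hkn σ τ σf τf hd hdf hhigh hhighf hshare1 hshare2 T hT,
      m_eq hkn σ τ σf τf hhigh hhighf xv hxv T hT⟩

include hkn hd hdf hhigh hhighf hshare1 hshare2 hxv hyv in
lemma inJ_iff (Xset : Set (MvPolynomial (Fin n) (ZMod 2)))
    (hX : Xset = {f | ∃ j < k, f = yv j * psm n (σf j) (τf j)} ∪
      {f | ∃ T : Finset ℕ, T ⊆ Finset.range k ∧
        f = (∏ i ∈ Finset.range k \ T, xv i) *
              psm n (σ ∪ T.biUnion σf) (τ ∪ T.biUnion τf)})
    (α β : Finset (Fin n)) (hαβ : Disjoint α β) :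
    psm n α β ∈ Ideal.span (({(∏ i ∈ Finset.range k, xv i) * psm n σ τ} :
          Set (MvPolynomial (Fin n) (ZMod 2))) ∪
        {f | ∃ j < k, f = yv j * psm n (σf j) (τf j)}) ↔
      ∃ f' ∈ Xset, f' ∣ psm n α β := by
  constructor
  · intro hmem
    by_contra hnot
    push_neg at hnot
    refine psm_not_mem hkn σ τ σf τf hd hdf hhigh hhighf hshare1 hshare2 xv yv hxv hyv
      α β hαβ ?_ ?_ hmem
    · intro j hj
      exact hnot _ (by rw [hX]; exact Or.inl ⟨j, hj, rfl⟩)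
    · intro T hT
      exact hnot _ (by rw [hX]; exact Or.inr ⟨T, hT, rfl⟩)
  · rintro ⟨f', hf'X, c, hc⟩
    rw [hc]
    exact Ideal.mul_mem_right _ _
      (X_mem_J hkn σ τ σf τf hd hdf hhigh hhighf hshare1 hshare2 xv yv hxv hyv Xset hX f' hf'X)

end Main

/-- Proposition 7.5 (0-based indices: paper index `i` ↦ `i-1`): the canonical form of
`(x₁⋯x_k·g, (1-x₁)g₁, …, (1-x_k)g_k)` consists of the members of
`X = {(1-xᵢ)gᵢ} ∪ {m_T : T ⊆ {1,…,k}}` not properly divisible by another member of `X`. -/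
theorem stmt9 {n k : ℕ} (hn : 0 < n) (hk : 0 < k) (hkn : k ≤ n)
    (σ τ : Finset (Fin n)) (σf τf : ℕ → Finset (Fin n))
    (hd : Disjoint σ τ) (hdf : ∀ i < k, Disjoint (σf i) (τf i))
    (hhigh : ∀ i ∈ σ ∪ τ, k ≤ (i : ℕ))
    (hhighf : ∀ j < k, ∀ i ∈ σf j ∪ τf j, k ≤ (i : ℕ))
    (hshare1 : ∀ j < k, ∀ i : Fin n, i ∉ (σ ∩ τf j) ∪ (σf j ∩ τ))
    (hshare2 : ∀ j₁ < k, ∀ j₂ < k, j₁ ≠ j₂ →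
      ∀ i : Fin n, i ∉ (σf j₁ ∩ τf j₂) ∪ (σf j₂ ∩ τf j₁))
    (xv yv : ℕ → MvPolynomial (Fin n) (ZMod 2))
    (hxv : ∀ j (h : j < n), xv j = X (⟨j, h⟩ : Fin n))
    (hyv : ∀ j (h : j < n), yv j = 1 - X (⟨j, h⟩ : Fin n))
    (Xset : Set (MvPolynomial (Fin n) (ZMod 2)))
    (hX : Xset = {f | ∃ j < k, f = yv j * psm n (σf j) (τf j)} ∪
      {f | ∃ T : Finset ℕ, T ⊆ Finset.range k ∧
        f = (∏ i ∈ Finset.range k \ T, xv i) *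
              psm n (σ ∪ T.biUnion σf) (τ ∪ T.biUnion τf)}) :
    CF (Ideal.span (({(∏ i ∈ Finset.range k, xv i) * psm n σ τ} :
          Set (MvPolynomial (Fin n) (ZMod 2))) ∪
        {f | ∃ j < k, f = yv j * psm n (σf j) (τf j)})) =
      {f ∈ Xset | ¬∃ f' ∈ Xset, f' ≠ f ∧ f' ∣ f} := by
  have hXm := X_mem_J hkn σ τ σf τf hd hdf hhigh hhighf hshare1 hshare2 xv yv hxv hyv Xset hX
  have hXp := X_psm hkn σ τ σf τf hd hdf hhigh hhighf hshare1 hshare2 xv yv hxv hyv Xset hX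
  have hiff := inJ_iff hkn σ τ σf τf hd hdf hhigh hhighf hshare1 hshare2 xv yv hxv hyv Xset hX
  ext f
  simp only [Set.mem_setOf_eq]
  constructor
  · rintro ⟨⟨α, β, hαβ, rfl⟩, hfJ, hmin⟩
    obtain ⟨f', hf'X, hf'dvd⟩ := (hiff α β hαβ).1 hfJ
    by_cases he : f' = psm n α β
    · subst he
      refine ⟨hf'X, ?_⟩
      rintro ⟨f'', hf''X, hne, hdvd⟩
      exact hmin f'' (hXp f'' hf''X) hdvd hne (hXm f'' hf''X)
    · exact absurd (hXm f' hf'X) (hmin f' (hXp f' hf'X) hf'dvd he)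
  · rintro ⟨hfX, hnon⟩
    refine ⟨hXp f hfX, hXm f hfX, ?_⟩
    intro g hgpsm hgdvd hgne hgJ
    obtain ⟨α, β, hαβ, rfl⟩ := hgpsm
    obtain ⟨f', hf'X, hf'g⟩ := (hiff α β hαβ).1 hgJ
    by_cases he : f' = f
    · subst he
      have hfz : f' ≠ 0 := by
        obtain ⟨s, t, _, rfl⟩ := hXp f' hf'X
        exact psm_ne_zero s t
      exact hgne (dvd_dvd_eq hfz hf'g hgdvd).symm
    · exact hnon ⟨f', hf'X, he, hf'g.trans hgdvd⟩
end

section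
/- Let k₁, k₂, k₃ ≥ 0 and let g_{1,1},…,g_{1,k₁}, g_{2,1},…,g_{2,k₂}, g_{3,1},…,g_{3,k₃} be pseudomonomials none of which involves the index 1 (their defining sets σ, τ lie in {2,…,n}), and such that no two distinct pseudomonomials among all the g_{j,ℓ} share any index. Let J be the ideal of R generated by x₁·g_{1,j} for 1 ≤ j ≤ k₁, by (1−x₁)·g_{2,j} for 1 ≤ j ≤ k₂, and by g_{3,j} for 1 ≤ j ≤ k₃, and let X = {x₁·g_{1,j} : 1 ≤ j ≤ k₁} ∪ {(1−x₁)·g_{2,j} : 1 ≤ j ≤ k₂} ∪ {[g_{1,j₁}g_{2,j₂}] : 1 ≤ j₁ ≤ k₁, 1 ≤ j₂ ≤ k₂} ∪ {g_{3,j} : 1 ≤ j ≤ k₃}. Then CF(J) = {f ∈ X : there is no f′ ∈ X with f′ ≠ f and f′ ∣ f}. -/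
open MvPolynomial

lemma psm_eval {n : ℕ} (v : Fin n → ZMod 2) (σ τ : Finset (Fin n)) :
    eval v (psm n σ τ) = (∏ i ∈ σ, v i) * ∏ i ∈ τ, (1 - v i) := by
  simp [psm]

lemma psm_dvd_of_subset {n : ℕ} {σ' τ' σ τ : Finset (Fin n)} (hσ : σ' ⊆ σ) (hτ : τ' ⊆ τ) :
    psm n σ' τ' ∣ psm n σ τ := by
  refine ⟨psm n (σ \ σ') (τ \ τ'), ?_⟩
  unfold psm
  rw [← Finset.prod_sdiff hσ, ← Finset.prod_sdiff hτ]
  ring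

lemma subset_of_psm_dvd {n : ℕ} {σ' τ' σ τ : Finset (Fin n)} (hd : Disjoint σ τ)
    (h : psm n σ' τ' ∣ psm n σ τ) : σ' ⊆ σ ∧ τ' ⊆ τ := by
  classical
  obtain ⟨c, hc⟩ := h
  constructor
  · intro i hi
    by_contra hiσ
    set v : Fin n → ZMod 2 := fun j => if j ∈ σ then 1 else 0 with hv
    have h1 : eval v (psm n σ τ) = 1 := by
      rw [psm_eval]
      rw [Finset.prod_eq_one (fun j hj => by simp [hv, hj]),
        Finset.prod_eq_one (fun j hj => by
          have : j ∉ σ := fun hjs => (Finset.disjoint_left.mp hd hjs) hj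
          simp [hv, this]), mul_one]
    have h0 : eval v (psm n σ' τ') = 0 := by
      rw [psm_eval]
      rw [Finset.prod_eq_zero hi (by simp [hv, hiσ]), zero_mul]
    have := congrArg (eval v) hc
    rw [h1, map_mul, h0, zero_mul] at this
    exact one_ne_zero this
  · intro i hi
    by_contra hiτ
    set v : Fin n → ZMod 2 := fun j => if j ∈ σ ∨ j = i then 1 else 0 with hv
    have h1 : eval v (psm n σ τ) = 1 := by
      rw [psm_eval]
      rw [Finset.prod_eq_one (fun j hj => by simp [hv, hj]),
        Finset.prod_eq_one (fun j hj => by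
          have h2 : j ∉ σ := fun hjs => (Finset.disjoint_left.mp hd hjs) hj
          have h3 : j ≠ i := fun e => hiτ (e ▸ hj)
          simp [hv, h2, h3]), mul_one]
    have h0 : eval v (psm n σ' τ') = 0 := by
      rw [psm_eval]
      rw [Finset.prod_eq_zero hi (by simp [hv]), mul_zero]
    have := congrArg (eval v) hc
    rw [h1, map_mul, h0, zero_mul] at this
    exact one_ne_zero this

lemma X_mul_psm {n : ℕ} {z : Fin n} {σ τ : Finset (Fin n)} (hz : z ∉ σ) :
    X z * psm n σ τ = psm n (insert z σ) τ := by
  unfold psm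
  rw [Finset.prod_insert hz]
  ring

lemma one_sub_X_mul_psm {n : ℕ} {z : Fin n} {σ τ : Finset (Fin n)} (hz : z ∉ τ) :
    (1 - X z) * psm n σ τ = psm n σ (insert z τ) := by
  unfold psm
  rw [Finset.prod_insert hz]
  ring

lemma prod_union_eq {α M : Type*} [DecidableEq α] [CommMonoid M] (s t : Finset α) (F : α → M) :
    ∏ i ∈ s ∪ t, F i = (∏ i ∈ s, F i) * ∏ i ∈ t \ s, F i := by
  rw [← Finset.union_sdiff_self_eq_union, Finset.prod_union Finset.disjoint_sdiff]

lemma psm_union_eq {n : ℕ} (σ₁ τ₁ σ₂ τ₂ : Finset (Fin n)) :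
    psm n (σ₁ ∪ σ₂) (τ₁ ∪ τ₂) = psm n σ₁ τ₁ * psm n (σ₂ \ σ₁) (τ₂ \ τ₁) := by
  unfold psm
  rw [prod_union_eq, prod_union_eq]
  ring

lemma star_fwd {n k₁ k₂ k₃ : ℕ} (hn : 0 < n)
    (σ τ : (Fin k₁ ⊕ (Fin k₂ ⊕ Fin k₃)) → Finset (Fin n))
    (hdisj : ∀ a, Disjoint (σ a) (τ a))
    (hhigh : ∀ a, ∀ i ∈ σ a ∪ τ a, 1 ≤ (i : ℕ))
    (hshare : ∀ a b, a ≠ b → ∀ i : Fin n, i ∉ (σ a ∩ τ b) ∪ (σ b ∩ τ a))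
    {σf τf : Finset (Fin n)} (hdf : Disjoint σf τf)
    (hf : psm n σf τf ∈ Ideal.span (
      {f | ∃ j : Fin k₁, f = X (⟨0, hn⟩ : Fin n) * psm n (σ (.inl j)) (τ (.inl j))} ∪
      {f | ∃ j : Fin k₂, f = (1 - X (⟨0, hn⟩ : Fin n)) *
          psm n (σ (.inr (.inl j))) (τ (.inr (.inl j)))} ∪
      {f | ∃ j : Fin k₃, f = psm n (σ (.inr (.inr j))) (τ (.inr (.inr j)))})) :
    ∃ g ∈ (
      {f | ∃ j : Fin k₁, f = X (⟨0, hn⟩ : Fin n) * psm n (σ (.inl j)) (τ (.inl j))} ∪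
      {f | ∃ j : Fin k₂, f = (1 - X (⟨0, hn⟩ : Fin n)) *
          psm n (σ (.inr (.inl j))) (τ (.inr (.inl j)))} ∪
      {f | ∃ (j₁ : Fin k₁) (j₂ : Fin k₂),
        f = psm n (σ (.inl j₁) ∪ σ (.inr (.inl j₂))) (τ (.inl j₁) ∪ τ (.inr (.inl j₂)))} ∪
      {f | ∃ j : Fin k₃, f = psm n (σ (.inr (.inr j))) (τ (.inr (.inr j)))} :
        Set (MvPolynomial (Fin n) (ZMod 2))), g ∣ psm n σf τf := by
  classical
  by_contra hnd
  push_neg at hnd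
  set z : Fin n := ⟨0, hn⟩ with hz
  have hnotz : ∀ a, ∀ i ∈ σ a ∪ τ a, i ≠ z := by
    intro a i h e
    have := hhigh a i h
    rw [e, hz] at this
    simp at this
  -- non-divisibility facts, as non-subset facts
  have ha : ∀ j : Fin k₁, ¬ (insert z (σ (.inl j)) ⊆ σf ∧ τ (.inl j) ⊆ τf) := by
    rintro j ⟨h1, h2⟩
    refine hnd (X z * psm n (σ (.inl j)) (τ (.inl j)))
      (Or.inl (Or.inl (Or.inl ⟨j, rfl⟩))) ?_
    rw [X_mul_psm (fun h => (hnotz _ z (Finset.mem_union_left _ h)) rfl)]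
    exact psm_dvd_of_subset h1 h2
  have hb : ∀ j : Fin k₂, ¬ (σ (.inr (.inl j)) ⊆ σf ∧ insert z (τ (.inr (.inl j))) ⊆ τf) := by
    rintro j ⟨h1, h2⟩
    refine hnd ((1 - X z) * psm n (σ (.inr (.inl j))) (τ (.inr (.inl j))))
      (Or.inl (Or.inl (Or.inr ⟨j, rfl⟩))) ?_
    rw [one_sub_X_mul_psm (fun h => (hnotz _ z (Finset.mem_union_right _ h)) rfl)]
    exact psm_dvd_of_subset h1 h2
  have hc : ∀ (j₁ : Fin k₁) (j₂ : Fin k₂),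
      ¬ (σ (.inl j₁) ∪ σ (.inr (.inl j₂)) ⊆ σf ∧ τ (.inl j₁) ∪ τ (.inr (.inl j₂)) ⊆ τf) := by
    rintro j₁ j₂ ⟨h1, h2⟩
    exact hnd _ (Or.inl (Or.inr ⟨j₁, j₂, rfl⟩)) (psm_dvd_of_subset h1 h2)
  have hd3 : ∀ j : Fin k₃, ¬ (σ (.inr (.inr j)) ⊆ σf ∧ τ (.inr (.inr j)) ⊆ τf) := by
    rintro j ⟨h1, h2⟩
    exact hnd _ (Or.inr ⟨j, rfl⟩) (psm_dvd_of_subset h1 h2)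
  -- the witness point
  set K : (Fin k₁ ⊕ (Fin k₂ ⊕ Fin k₃)) → Prop :=
    fun a => ¬ (σ a ⊆ σf ∧ τ a ⊆ τf) with hK
  set b : ZMod 2 := if ∀ j : Fin k₁, K (.inl j) then 1 else 0 with hb0
  set v : Fin n → ZMod 2 := fun i =>
    if i ∈ σf then 1 else if i ∈ τf then 0 else if i = z then b
      else if ∃ a, i ∈ τ a then 1 else 0 with hv
  have hkill : ∀ a, K a → eval v (psm n (σ a) (τ a)) = 0 := by
    intro a hKa
    rw [psm_eval]
    rw [hK, not_and_or] at hKa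
    rcases hKa with h | h
    · obtain ⟨i, hiσ, hif⟩ := Finset.not_subset.mp h
      have hvi : v i = 0 := by
        have hiz : i ≠ z := hnotz a i (Finset.mem_union_left _ hiσ)
        have hnotτ : ¬ ∃ a', i ∈ τ a' := by
          rintro ⟨a', ha'⟩
          by_cases hab : a' = a
          · exact Finset.disjoint_left.mp (hdisj a) hiσ (hab ▸ ha')
          · exact hshare a a' (Ne.symm hab) i
              (Finset.mem_union_left _ (Finset.mem_inter.mpr ⟨hiσ, ha'⟩))
        have : v i = if i ∈ σf then 1 else if i ∈ τf then 0 else if i = z then b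
            else if ∃ a, i ∈ τ a then 1 else 0 := rfl
        rw [this, if_neg hif]
        by_cases hiτf : i ∈ τf
        · rw [if_pos hiτf]
        · rw [if_neg hiτf, if_neg hiz, if_neg hnotτ]
      exact mul_eq_zero_of_left (Finset.prod_eq_zero hiσ hvi) _
    · obtain ⟨i, hiτ, hif⟩ := Finset.not_subset.mp h
      have hvi : v i = 1 := by
        by_cases hiσf : i ∈ σf
        · have : v i = if i ∈ σf then 1 else if i ∈ τf then 0 else if i = z then b
              else if ∃ a, i ∈ τ a then 1 else 0 := rfl
          rw [this, if_pos hiσf]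
        · have hiz : i ≠ z := hnotz a i (Finset.mem_union_right _ hiτ)
          have he : ∃ a', i ∈ τ a' := ⟨a, hiτ⟩
          have : v i = if i ∈ σf then 1 else if i ∈ τf then 0 else if i = z then b
              else if ∃ a, i ∈ τ a then 1 else 0 := rfl
          rw [this, if_neg hiσf, if_neg hif, if_neg hiz, if_pos he]
      refine mul_eq_zero_of_right _ (Finset.prod_eq_zero hiτ ?_)
      rw [hvi, sub_self]
  have hvz : v z = if z ∈ σf then 1 else if z ∈ τf then 0 else b := by
    simp [hv]
  -- generators vanish
  have hgen1 : ∀ j : Fin k₁, eval v (X z * psm n (σ (.inl j)) (τ (.inl j))) = 0 := by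
    intro j
    rw [map_mul, eval_X]
    by_cases h1 : z ∈ σf
    · have hk : K (.inl j) := by
        rintro ⟨hs, ht⟩
        exact ha j ⟨Finset.insert_subset h1 hs, ht⟩
      rw [hkill _ hk, mul_zero]
    · by_cases h2 : z ∈ τf
      · have : v z = 0 := by rw [hvz, if_neg h1, if_pos h2]
        rw [this, zero_mul]
      · by_cases h3 : ∀ j' : Fin k₁, K (.inl j')
        · rw [hkill _ (h3 j), mul_zero]
        · have : v z = 0 := by rw [hvz, if_neg h1, if_neg h2, hb0, if_neg h3]
          rw [this, zero_mul]
  have hgen2 : ∀ j : Fin k₂,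
      eval v ((1 - X z) * psm n (σ (.inr (.inl j))) (τ (.inr (.inl j)))) = 0 := by
    intro j
    rw [map_mul, map_sub, map_one, eval_X]
    by_cases h2 : z ∈ τf
    · have hk : K (.inr (.inl j)) := by
        rintro ⟨hs, ht⟩
        exact hb j ⟨hs, Finset.insert_subset h2 ht⟩
      rw [hkill _ hk, mul_zero]
    · by_cases h1 : z ∈ σf
      · have : v z = 1 := by rw [hvz, if_pos h1]
        rw [this, sub_self, zero_mul]
      · by_cases h3 : ∀ j' : Fin k₁, K (.inl j')
        · have : v z = 1 := by rw [hvz, if_neg h1, if_neg h2, hb0, if_pos h3]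
          rw [this, sub_self, zero_mul]
        · rw [not_forall] at h3
          obtain ⟨j₁, hj₁⟩ := h3
          have hj₁ : σ (.inl j₁) ⊆ σf ∧ τ (.inl j₁) ⊆ τf := not_not.mp hj₁
          have hk : K (.inr (.inl j)) := by
            rintro ⟨hs, ht⟩
            exact hc j₁ j ⟨Finset.union_subset hj₁.1 hs, Finset.union_subset hj₁.2 ht⟩
          rw [hkill _ hk, mul_zero]
  have hgen3 : ∀ j : Fin k₃, eval v (psm n (σ (.inr (.inr j))) (τ (.inr (.inr j)))) = 0 := by
    intro j
    exact hkill _ (fun h => hd3 j h)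
  -- the evaluation kills the ideal
  have hker : Ideal.span (
      {f | ∃ j : Fin k₁, f = X (⟨0, hn⟩ : Fin n) * psm n (σ (.inl j)) (τ (.inl j))} ∪
      {f | ∃ j : Fin k₂, f = (1 - X (⟨0, hn⟩ : Fin n)) *
          psm n (σ (.inr (.inl j))) (τ (.inr (.inl j)))} ∪
      {f | ∃ j : Fin k₃, f = psm n (σ (.inr (.inr j))) (τ (.inr (.inr j)))}) ≤
      RingHom.ker (eval v) := by
    rw [Ideal.span_le]
    rintro g ((⟨j, rfl⟩ | ⟨j, rfl⟩) | ⟨j, rfl⟩)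
    · exact hgen1 j
    · exact hgen2 j
    · exact hgen3 j
  have h0 : eval v (psm n σf τf) = 0 := hker hf
  have h1 : eval v (psm n σf τf) = 1 := by
    rw [psm_eval]
    rw [Finset.prod_eq_one (fun i hi => by simp [hv, hi]),
      Finset.prod_eq_one (fun i hi => by
        have hns : i ∉ σf := fun hs => (Finset.disjoint_left.mp hdf hs) hi
        have : v i = 0 := by simp [hv, hns, hi]
        rw [this, sub_zero]), mul_one]
  rw [h0] at h1
  exact one_ne_zero h1.symm

/-- Lemma 4.8 / Lemma "lotsofsamexiyi": canonical form of
`(x₁g_{1,j}, (1-x₁)g_{2,j}, g_{3,j})` where no two of the `g`'s share an index and none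
involves the index 1. -/
theorem stmt10 {n k₁ k₂ k₃ : ℕ} (hn : 0 < n)
    (σ τ : (Fin k₁ ⊕ (Fin k₂ ⊕ Fin k₃)) → Finset (Fin n))
    (hdisj : ∀ a, Disjoint (σ a) (τ a))
    (hhigh : ∀ a, ∀ i ∈ σ a ∪ τ a, 1 ≤ (i : ℕ))
    (hshare : ∀ a b, a ≠ b → ∀ i : Fin n, i ∉ (σ a ∩ τ b) ∪ (σ b ∩ τ a))
    (Xset : Set (MvPolynomial (Fin n) (ZMod 2)))
    (hX : Xset =
      {f | ∃ j : Fin k₁, f = X (⟨0, hn⟩ : Fin n) * psm n (σ (.inl j)) (τ (.inl j))} ∪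
      {f | ∃ j : Fin k₂, f = (1 - X (⟨0, hn⟩ : Fin n)) *
          psm n (σ (.inr (.inl j))) (τ (.inr (.inl j)))} ∪
      {f | ∃ (j₁ : Fin k₁) (j₂ : Fin k₂),
        f = psm n (σ (.inl j₁) ∪ σ (.inr (.inl j₂))) (τ (.inl j₁) ∪ τ (.inr (.inl j₂)))} ∪
      {f | ∃ j : Fin k₃, f = psm n (σ (.inr (.inr j))) (τ (.inr (.inr j)))})
    (J : Ideal (MvPolynomial (Fin n) (ZMod 2)))
    (hJ : J = Ideal.span (
      {f | ∃ j : Fin k₁, f = X (⟨0, hn⟩ : Fin n) * psm n (σ (.inl j)) (τ (.inl j))} ∪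
      {f | ∃ j : Fin k₂, f = (1 - X (⟨0, hn⟩ : Fin n)) *
          psm n (σ (.inr (.inl j))) (τ (.inr (.inl j)))} ∪
      {f | ∃ j : Fin k₃, f = psm n (σ (.inr (.inr j))) (τ (.inr (.inr j)))})) :
    CF J = {f ∈ Xset | ¬∃ f' ∈ Xset, f' ≠ f ∧ f' ∣ f} := by
  classical
  set z : Fin n := ⟨0, hn⟩ with hz
  have hnotz : ∀ a, ∀ i ∈ σ a ∪ τ a, i ≠ z := by
    intro a i h e
    have := hhigh a i h
    rw [e, hz] at this
    simp at this
  -- every element of Xset is a pseudomonomial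
  have hXpsm : ∀ g ∈ Xset, IsPseudomonomial g := by
    rw [hX]
    rintro g (((⟨j, rfl⟩ | ⟨j, rfl⟩) | ⟨j₁, j₂, rfl⟩) | ⟨j, rfl⟩)
    · have hzσ : z ∉ σ (.inl j) := fun h => hnotz _ z (Finset.mem_union_left _ h) rfl
      have hzτ : z ∉ τ (.inl j) := fun h => hnotz _ z (Finset.mem_union_right _ h) rfl
      refine ⟨insert z (σ (.inl j)), τ (.inl j), ?_, X_mul_psm hzσ⟩
      rw [Finset.disjoint_insert_left]
      exact ⟨hzτ, hdisj _⟩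
    · have hzσ : z ∉ σ (.inr (.inl j)) := fun h => hnotz _ z (Finset.mem_union_left _ h) rfl
      have hzτ : z ∉ τ (.inr (.inl j)) := fun h => hnotz _ z (Finset.mem_union_right _ h) rfl
      refine ⟨σ (.inr (.inl j)), insert z (τ (.inr (.inl j))), ?_,
        one_sub_X_mul_psm hzτ⟩
      rw [Finset.disjoint_insert_right]
      exact ⟨hzσ, hdisj _⟩
    · refine ⟨_, _, ?_, rfl⟩
      rw [Finset.disjoint_union_left]
      constructor <;> rw [Finset.disjoint_union_right]
      · refine ⟨hdisj _, ?_⟩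
        rw [Finset.disjoint_left]
        intro i hi1 hi2
        exact hshare (.inl j₁) (.inr (.inl j₂)) (by simp) i
          (Finset.mem_union_left _ (Finset.mem_inter.mpr ⟨hi1, hi2⟩))
      · refine ⟨?_, hdisj _⟩
        rw [Finset.disjoint_left]
        intro i hi1 hi2
        exact hshare (.inr (.inl j₂)) (.inl j₁) (by simp) i
          (Finset.mem_union_left _ (Finset.mem_inter.mpr ⟨hi1, hi2⟩))
    · exact ⟨_, _, hdisj _, rfl⟩
  -- every element of Xset lies in J
  have hXJ : ∀ g ∈ Xset, g ∈ J := by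
    rw [hX, hJ]
    rintro g (((⟨j, rfl⟩ | ⟨j, rfl⟩) | ⟨j₁, j₂, rfl⟩) | ⟨j, rfl⟩)
    · exact Ideal.subset_span (Or.inl (Or.inl ⟨j, rfl⟩))
    · exact Ideal.subset_span (Or.inl (Or.inr ⟨j, rfl⟩))
    · set σ₁ := σ (.inl j₁); set τ₁ := τ (.inl j₁)
      set σ₂ := σ (.inr (.inl j₂)); set τ₂ := τ (.inr (.inl j₂))
      have e1 : psm n (σ₁ ∪ σ₂) (τ₁ ∪ τ₂) = psm n σ₁ τ₁ * psm n (σ₂ \ σ₁) (τ₂ \ τ₁) :=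
        psm_union_eq _ _ _ _
      have e2 : psm n (σ₁ ∪ σ₂) (τ₁ ∪ τ₂) = psm n σ₂ τ₂ * psm n (σ₁ \ σ₂) (τ₁ \ τ₂) := by
        rw [Finset.union_comm σ₁ σ₂, Finset.union_comm τ₁ τ₂]
        exact psm_union_eq _ _ _ _
      have key : psm n (σ₁ ∪ σ₂) (τ₁ ∪ τ₂) =
          (X z * psm n σ₁ τ₁) * psm n (σ₂ \ σ₁) (τ₂ \ τ₁) +
          ((1 - X z) * psm n σ₂ τ₂) * psm n (σ₁ \ σ₂) (τ₁ \ τ₂) := by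
        rw [mul_assoc, mul_assoc, ← e1, ← e2]
        ring
      rw [key]
      exact Ideal.add_mem _
        (Ideal.mul_mem_right _ _ (Ideal.subset_span (Or.inl (Or.inl ⟨j₁, rfl⟩))))
        (Ideal.mul_mem_right _ _ (Ideal.subset_span (Or.inl (Or.inr ⟨j₂, rfl⟩))))
    · exact Ideal.subset_span (Or.inr ⟨j, rfl⟩)
  ext f
  simp only [CF, Set.mem_setOf_eq, Set.mem_sep_iff]
  constructor
  · rintro ⟨⟨σf, τf, hdf, rfl⟩, hfJ, hmin⟩
    obtain ⟨g, hgX, hgd⟩ := star_fwd hn σ τ hdisj hhigh hshare hdf (hJ ▸ hfJ)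
    rw [← hX] at hgX
    have hgf : g = psm n σf τf := by
      by_contra h
      exact hmin g (hXpsm g hgX) hgd h (hXJ g hgX)
    constructor
    · rwa [← hgf]
    · rintro ⟨f', hf'X, hne, hdvd⟩
      exact hmin f' (hXpsm f' hf'X) hdvd hne (hXJ f' hf'X)
  · rintro ⟨hfX, hnd⟩
    obtain ⟨σf, τf, hdf, hfe⟩ := hXpsm f hfX
    refine ⟨⟨σf, τf, hdf, hfe⟩, hXJ f hfX, ?_⟩
    intro g hgp hgd hgne hgJ
    obtain ⟨σg, τg, hdg, rfl⟩ := hgp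
    obtain ⟨g', hg'X, hg'd⟩ := star_fwd hn σ τ hdisj hhigh hshare hdg (hJ ▸ hgJ)
    rw [← hX] at hg'X
    by_cases h : g' = f
    · rw [h, hfe] at hg'd
      rw [hfe] at hgd
      obtain ⟨hs1, ht1⟩ := subset_of_psm_dvd hdg hg'd
      obtain ⟨hs2, ht2⟩ := subset_of_psm_dvd hdf hgd
      apply hgne
      rw [hfe, Finset.Subset.antisymm hs2 hs1, Finset.Subset.antisymm ht2 ht1]
    · exact hnd ⟨g', hg'X, h, dvd_trans hg'd hgd⟩
end

section
/- Let m ≥ 1 and for each 1 ≤ j ≤ m let g_{j,1},…,g_{j,k_j} be pseudomonomials, such that for all j₁ ≠ j₂ and all t₁, t₂, the pseudomonomials g_{j₁,t₁} and g_{j₂,t₂} share no index. Let J be the ideal of R generated by all the g_{j,t}, and for each j let J_j be the ideal of R generated by g_{j,1},…,g_{j,k_j}. Set X = ⋃_{j=1}^m CF(J_j). Then CF(J) = {f ∈ X : there is no f′ ∈ X with f′ ≠ f and f′ ∣ f}. -/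
open MvPolynomial

namespace PsmAux

variable {n : ℕ}

lemma zmod2_eq_one {x : ZMod 2} (h : x ≠ 0) : x = 1 := by revert h; revert x; decide

lemma eval_psm (p : Fin n → ZMod 2) (σ τ : Finset (Fin n)) :
    eval p (psm n σ τ) = (∏ i ∈ σ, p i) * ∏ i ∈ τ, (1 - p i) := by
  simp [psm]

lemma eval_psm_ne_zero_iff (p : Fin n → ZMod 2) (σ τ : Finset (Fin n)) :
    eval p (psm n σ τ) ≠ 0 ↔ (∀ i ∈ σ, p i = 1) ∧ (∀ i ∈ τ, p i = 0) := by
  rw [eval_psm, mul_ne_zero_iff, Finset.prod_ne_zero_iff, Finset.prod_ne_zero_iff]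
  constructor
  · rintro ⟨h1, h2⟩
    refine ⟨fun i hi => zmod2_eq_one (h1 i hi), fun i hi => ?_⟩
    have h3 : (1 : ZMod 2) - p i = 1 := zmod2_eq_one (h2 i hi)
    have : ∀ y : ZMod 2, (1 : ZMod 2) - y = 1 → y = 0 := by decide
    exact this _ h3
  · rintro ⟨h1, h2⟩
    exact ⟨fun i hi => by rw [h1 i hi]; decide, fun i hi => by rw [h2 i hi]; decide⟩

lemma eval_psm_eq_zero_iff (p : Fin n → ZMod 2) (σ τ : Finset (Fin n)) :
    eval p (psm n σ τ) = 0 ↔ (∃ i ∈ σ, p i = 0) ∨ (∃ i ∈ τ, p i = 1) := by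
  rw [← not_ne_iff, eval_psm_ne_zero_iff]
  push_neg
  constructor
  · intro h
    by_cases h1 : ∀ i ∈ σ, p i = 1
    · obtain ⟨i, hi, hpi⟩ := h h1
      exact Or.inr ⟨i, hi, zmod2_eq_one hpi⟩
    · push_neg at h1
      obtain ⟨i, hi, hpi⟩ := h1
      refine Or.inl ⟨i, hi, ?_⟩
      by_contra h0
      exact hpi (zmod2_eq_one h0)
  · rintro (⟨i, hi, hpi⟩ | ⟨i, hi, hpi⟩) h1
    · rw [h1 i hi] at hpi; exact absurd hpi (by decide)
    · exact ⟨i, hi, by rw [hpi]; decide⟩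

lemma indicator_eval (σ τ : Finset (Fin n)) (hd : Disjoint σ τ) :
    eval (fun i => if i ∈ σ then (1 : ZMod 2) else 0) (psm n σ τ) ≠ 0 := by
  rw [eval_psm_ne_zero_iff]
  exact ⟨fun i hi => if_pos hi, fun i hi => if_neg (Finset.disjoint_right.mp hd hi)⟩

lemma psm_dvd {σ' σ τ' τ : Finset (Fin n)} (hσ : σ' ⊆ σ) (hτ : τ' ⊆ τ) :
    psm n σ' τ' ∣ psm n σ τ := by
  refine ⟨psm n (σ \ σ') (τ \ τ'), ?_⟩
  rw [psm, psm, psm, ← Finset.prod_sdiff hσ, ← Finset.prod_sdiff hτ]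
  ring

/-- Membership of a pseudomonomial in a span of pseudomonomials is detected by `F₂`-points. -/
lemma memA (S : Set (MvPolynomial (Fin n) (ZMod 2)))
    (hS : ∀ g ∈ S, ∃ σg τg : Finset (Fin n), g = psm n σg τg)
    {σ τ : Finset (Fin n)} (hd : Disjoint σ τ) :
    psm n σ τ ∈ Ideal.span S ↔
      ∀ p : Fin n → ZMod 2, (∀ g ∈ S, eval p g = 0) → eval p (psm n σ τ) = 0 := by
  constructor
  · intro hmem p hp
    have hker : Ideal.span S ≤ RingHom.ker (eval p) :=
      Ideal.span_le.mpr (fun g hg => hp g hg)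
    exact hker hmem
  · have key : ∀ (c : ℕ) (σ τ : Finset (Fin n)), Disjoint σ τ → (σ ∪ τ)ᶜ.card ≤ c →
        (∀ p : Fin n → ZMod 2, (∀ g ∈ S, eval p g = 0) → eval p (psm n σ τ) = 0) →
        psm n σ τ ∈ Ideal.span S := by
      intro c
      induction c with
      | zero =>
        intro σ τ hd hcard hvan
        have hcov : σ ∪ τ = Finset.univ := by
          have : (σ ∪ τ)ᶜ = ∅ := Finset.card_eq_zero.mp (Nat.le_zero.mp hcard)
          rwa [Finset.compl_eq_empty_iff] at this
        set p : Fin n → ZMod 2 := fun i => if i ∈ σ then 1 else 0 with hp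
        have hf : eval p (psm n σ τ) ≠ 0 := indicator_eval σ τ hd
        have : ¬ ∀ g ∈ S, eval p g = 0 := fun h => hf (hvan p h)
        push_neg at this
        obtain ⟨g, hgS, hgne⟩ := this
        obtain ⟨σg, τg, rfl⟩ := hS g hgS
        rw [eval_psm_ne_zero_iff] at hgne
        have hσg : σg ⊆ σ := by
          intro i hi
          have := hgne.1 i hi
          by_contra hc
          rw [hp] at this; simp only [if_neg hc] at this
          exact absurd this (by decide)
        have hτg : τg ⊆ τ := by
          intro i hi
          have := hgne.2 i hi
          have hiσ : i ∉ σ := by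
            intro hc
            rw [hp] at this; simp only [if_pos hc] at this
            exact absurd this (by decide)
          have : i ∈ σ ∪ τ := hcov ▸ Finset.mem_univ i
          rcases Finset.mem_union.mp this with h | h
          · exact absurd h hiσ
          · exact h
        obtain ⟨r, hr⟩ := psm_dvd hσg hτg
        rw [hr]
        exact Ideal.mul_mem_right _ _ (Ideal.subset_span hgS)
      | succ c ih =>
        intro σ τ hd hcard hvan
        by_cases hemp : (σ ∪ τ)ᶜ = ∅
        · exact ih σ τ hd (by rw [hemp]; simp) hvan
        · obtain ⟨i, hi⟩ := Finset.nonempty_of_ne_empty hemp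
          have hiσ : i ∉ σ := fun h => (Finset.mem_compl.mp hi) (Finset.mem_union_left _ h)
          have hiτ : i ∉ τ := fun h => (Finset.mem_compl.mp hi) (Finset.mem_union_right _ h)
          have h1 : psm n (insert i σ) τ = X i * psm n σ τ := by
            rw [psm, psm, Finset.prod_insert hiσ]; ring
          have h2 : psm n σ (insert i τ) = (1 - X i) * psm n σ τ := by
            rw [psm, psm, Finset.prod_insert hiτ]; ring
          have hcard1 : ((insert i σ ∪ τ)ᶜ).card ≤ c := by
            have : (insert i σ ∪ τ)ᶜ = ((σ ∪ τ)ᶜ).erase i := by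
              ext x
              simp [Finset.mem_compl, Finset.mem_erase, Finset.mem_insert, not_or, and_comm,
                and_assoc]
            rw [this, Finset.card_erase_of_mem hi]
            omega
          have hcard2 : ((σ ∪ insert i τ)ᶜ).card ≤ c := by
            have : (σ ∪ insert i τ)ᶜ = ((σ ∪ τ)ᶜ).erase i := by
              ext x
              simp [Finset.mem_compl, Finset.mem_erase, Finset.mem_insert, not_or, and_comm,
                and_assoc]
            rw [this, Finset.card_erase_of_mem hi]
            omega
          have m1 : psm n (insert i σ) τ ∈ Ideal.span S := by
            refine ih _ _ (Finset.disjoint_insert_left.mpr ⟨hiτ, hd⟩) hcard1 ?_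
            intro p hp
            rw [h1, map_mul, hvan p hp, mul_zero]
          have m2 : psm n σ (insert i τ) ∈ Ideal.span S := by
            refine ih _ _ (Finset.disjoint_left.mpr
              (fun a ha hb => by
                rcases Finset.mem_insert.mp hb with h | h
                · exact hiσ (h ▸ ha)
                · exact Finset.disjoint_left.mp hd ha h)) hcard2 ?_
            intro p hp
            rw [h2, map_mul, hvan p hp, mul_zero]
          have : psm n σ τ = psm n (insert i σ) τ + psm n σ (insert i τ) := by
            rw [h1, h2]; ring
          rw [this]
          exact Ideal.add_mem _ m1 m2
    exact fun h => key _ σ τ hd le_rfl h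

/-- If a pseudomonomial divides a pseudomonomial, the index sets are contained. -/
lemma psm_dvd_inv {σg τg σ τ : Finset (Fin n)} (hd : Disjoint σ τ)
    (hdvd : psm n σg τg ∣ psm n σ τ) : σg ⊆ σ ∧ τg ⊆ τ := by
  have key : ∀ p : Fin n → ZMod 2, eval p (psm n σ τ) ≠ 0 → eval p (psm n σg τg) ≠ 0 := by
    intro p hp hz
    obtain ⟨h, hh⟩ := hdvd
    rw [hh, map_mul, hz, zero_mul] at hp
    exact hp rfl
  constructor
  · intro i hi
    by_contra hiσ
    set p : Fin n → ZMod 2 := fun j => if j ∈ σ then 1 else 0 with hpdef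
    have h1 : eval p (psm n σ τ) ≠ 0 := indicator_eval σ τ hd
    have h2 := (eval_psm_ne_zero_iff p σg τg).mp (key p h1)
    have := h2.1 i hi
    rw [hpdef] at this; simp only [if_neg hiσ] at this
    exact absurd this (by decide)
  · intro i hi
    by_contra hiτ
    set p : Fin n → ZMod 2 := fun j => if j ∈ σ ∨ j = i then 1 else 0 with hpdef
    have h1 : eval p (psm n σ τ) ≠ 0 := by
      rw [eval_psm_ne_zero_iff]
      refine ⟨fun j hj => if_pos (Or.inl hj), fun j hj => ?_⟩
      have : ¬ (j ∈ σ ∨ j = i) := by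
        rintro (h | rfl)
        · exact Finset.disjoint_right.mp hd hj h
        · exact hiτ hj
      exact if_neg this
    have h2 := (eval_psm_ne_zero_iff p σg τg).mp (key p h1)
    have h3 := h2.2 i hi
    have hpi : p i = 1 := by rw [hpdef]; simp
    rw [hpi] at h3
    exact absurd h3 (by decide)

lemma psm_dvd_antisymm {f g : MvPolynomial (Fin n) (ZMod 2)}
    (hf : IsPseudomonomial f) (hg : IsPseudomonomial g)
    (h1 : g ∣ f) (h2 : f ∣ g) : g = f := by
  obtain ⟨σ, τ, hd, rfl⟩ := hf
  obtain ⟨σg, τg, hdg, rfl⟩ := hg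
  obtain ⟨ha, hb⟩ := psm_dvd_inv hd h1
  obtain ⟨hc, he⟩ := psm_dvd_inv hdg h2
  rw [Finset.Subset.antisymm ha hc, Finset.Subset.antisymm hb he]

/-- Every pseudomonomial of an ideal is divisible by an element of the canonical form. -/
lemma exists_cf_dvd (I : Ideal (MvPolynomial (Fin n) (ZMod 2))) :
    ∀ (c : ℕ) (σ τ : Finset (Fin n)), Disjoint σ τ → σ.card + τ.card ≤ c →
      psm n σ τ ∈ I → ∃ g ∈ CF I, g ∣ psm n σ τ := by
  intro c
  induction c with
  | zero =>
    intro σ τ hd hc hm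
    by_cases hcf : psm n σ τ ∈ CF I
    · exact ⟨_, hcf, dvd_refl _⟩
    · exfalso
      rw [CF, Set.mem_setOf_eq] at hcf
      push_neg at hcf
      obtain ⟨g, hgp, hgdvd, hgne, hgI⟩ := hcf ⟨σ, τ, hd, rfl⟩ hm
      obtain ⟨σg, τg, hdg, rfl⟩ := hgp
      obtain ⟨ha, hb⟩ := psm_dvd_inv hd hgdvd
      have h0 : σ.card = 0 ∧ τ.card = 0 := by omega
      have hσe : σ = ∅ := Finset.card_eq_zero.mp h0.1
      have hτe : τ = ∅ := Finset.card_eq_zero.mp h0.2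
      have hσg : σg = ∅ := Finset.subset_empty.mp (hσe ▸ ha)
      have hτg : τg = ∅ := Finset.subset_empty.mp (hτe ▸ hb)
      exact hgne (by rw [hσg, hτg, hσe, hτe])
  | succ c ih =>
    intro σ τ hd hc hm
    by_cases hcf : psm n σ τ ∈ CF I
    · exact ⟨_, hcf, dvd_refl _⟩
    · rw [CF, Set.mem_setOf_eq] at hcf
      push_neg at hcf
      obtain ⟨g, hgp, hgdvd, hgne, hgI⟩ := hcf ⟨σ, τ, hd, rfl⟩ hm
      obtain ⟨σg, τg, hdg, rfl⟩ := hgp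
      obtain ⟨ha, hb⟩ := psm_dvd_inv hd hgdvd
      have hlt : σg.card + τg.card ≤ c := by
        have h1 : σg.card ≤ σ.card := Finset.card_le_card ha
        have h2 : τg.card ≤ τ.card := Finset.card_le_card hb
        have : σg ≠ σ ∨ τg ≠ τ := by
          by_contra hcon
          push_neg at hcon
          exact hgne (by rw [hcon.1, hcon.2])
        rcases this with h | h
        · have := Finset.card_lt_card (HasSubset.Subset.ssubset_of_ne ha h)
          omega
        · have := Finset.card_lt_card (HasSubset.Subset.ssubset_of_ne hb h)
          omega
      obtain ⟨h, hhcf, hhdvd⟩ := ih σg τg hdg hlt hgI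
      exact ⟨h, hhcf, dvd_trans hhdvd hgdvd⟩

/-- A pseudomonomial in the big ideal lies in one of the group ideals. -/
lemma lemB {m : ℕ} (k : Fin m → ℕ) (σ τ : (j : Fin m) → Fin (k j) → Finset (Fin n))
    (hshare : ∀ j₁ j₂ : Fin m, j₁ ≠ j₂ → ∀ t₁ t₂ (i : Fin n),
      i ∉ (σ j₁ t₁ ∩ τ j₂ t₂) ∪ (σ j₂ t₂ ∩ τ j₁ t₁))
    {σf τf : Finset (Fin n)} (hdf : Disjoint σf τf)
    (hf : psm n σf τf ∈ Ideal.span {f | ∃ j t, f = psm n (σ j t) (τ j t)}) :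
    ∃ j, psm n σf τf ∈ Ideal.span {f | ∃ t, f = psm n (σ j t) (τ j t)} := by
  classical
  by_contra hcon
  push_neg at hcon
  have share : ∀ j₁ j₂ t₁ t₂ (i : Fin n), i ∈ σ j₁ t₁ → i ∈ τ j₂ t₂ → j₁ = j₂ := by
    intro j₁ j₂ t₁ t₂ i h1 h2
    by_contra hne
    exact hshare j₁ j₂ hne t₁ t₂ i (Finset.mem_union_left _ (Finset.mem_inter.mpr ⟨h1, h2⟩))
  have hpts : ∀ j, ∃ p : Fin n → ZMod 2,
      (∀ t, eval p (psm n (σ j t) (τ j t)) = 0) ∧ eval p (psm n σf τf) ≠ 0 := by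
    intro j
    have hmm := (memA {f | ∃ t, f = psm n (σ j t) (τ j t)}
        (by rintro g ⟨t, rfl⟩; exact ⟨_, _, rfl⟩) hdf).not.mp (hcon j)
    push_neg at hmm
    obtain ⟨p, hp1, hp2⟩ := hmm
    exact ⟨p, fun t => hp1 _ ⟨t, rfl⟩, hp2⟩
  choose p hpk hpf using hpts
  have hpσ : ∀ j i, i ∈ σf → p j i = 1 :=
    fun j i hi => ((eval_psm_ne_zero_iff _ _ _).mp (hpf j)).1 i hi
  have hpτ : ∀ j i, i ∈ τf → p j i = 0 :=
    fun j i hi => ((eval_psm_ne_zero_iff _ _ _).mp (hpf j)).2 i hi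
  set q : Fin n → ZMod 2 := fun i =>
    if i ∈ σf then 1 else if i ∈ τf then 0
    else if hτ : ∃ j t, i ∈ τ j t then
      (if ∃ j t, i ∈ σ j t then p hτ.choose i else 1)
    else 0 with hqdef
  have qσf : ∀ i, i ∈ σf → q i = 1 := by
    intro i hi; rw [hqdef]; simp only [if_pos hi]
  have qτf : ∀ i, i ∈ τf → q i = 0 := by
    intro i hi
    have hiσ : i ∉ σf := Finset.disjoint_right.mp hdf hi
    rw [hqdef]; simp only [if_neg hiσ, if_pos hi]
  have qspec : ∀ i, i ∉ σf → i ∉ τf → (∃ j t, i ∈ τ j t) →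
      ∀ j'' t'', i ∈ σ j'' t'' → q i = p j'' i := by
    intro i h1 h2 hτs j'' t'' hσi
    have hσs : ∃ j t, i ∈ σ j t := ⟨j'', t'', hσi⟩
    have hjj : j'' = hτs.choose := by
      obtain ⟨t', ht'⟩ := hτs.choose_spec
      exact share j'' hτs.choose t'' t' i hσi ht'
    rw [hqdef]
    simp only [if_neg h1, if_neg h2, dif_pos hτs, if_pos hσs]
    rw [hjj]
  have qτonly : ∀ i, i ∉ σf → i ∉ τf → (∃ j t, i ∈ τ j t) → (¬ ∃ j t, i ∈ σ j t) → q i = 1 := by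
    intro i h1 h2 hτs hσs
    rw [hqdef]
    simp only [if_neg h1, if_neg h2, dif_pos hτs, if_neg hσs]
  have qnoτ : ∀ i, i ∉ σf → i ∉ τf → (¬ ∃ j t, i ∈ τ j t) → q i = 0 := by
    intro i h1 h2 hτs
    rw [hqdef]
    simp only [if_neg h1, if_neg h2, dif_neg hτs]
  have hq : ∀ j t, eval q (psm n (σ j t) (τ j t)) = 0 := by
    intro j t
    rw [eval_psm_eq_zero_iff]
    have h0 := hpk j t
    rw [eval_psm_eq_zero_iff] at h0
    rcases h0 with ⟨i, hi, hpi⟩ | ⟨i, hi, hpi⟩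
    · -- i ∈ σ j t and p j i = 0
      left
      refine ⟨i, hi, ?_⟩
      have hiσf : i ∉ σf := by
        intro h
        rw [hpσ j i h] at hpi
        exact absurd hpi (by decide)
      by_cases hiτf : i ∈ τf
      · exact qτf i hiτf
      · by_cases hτs : ∃ j' t', i ∈ τ j' t'
        · rw [qspec i hiσf hiτf hτs j t hi]; exact hpi
        · exact qnoτ i hiσf hiτf hτs
    · -- i ∈ τ j t and p j i = 1
      right
      refine ⟨i, hi, ?_⟩
      have hiτf : i ∉ τf := by
        intro h
        rw [hpτ j i h] at hpi
        exact absurd hpi (by decide)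
      by_cases hiσf : i ∈ σf
      · exact qσf i hiσf
      · have hτs : ∃ j' t', i ∈ τ j' t' := ⟨j, t, hi⟩
        by_cases hσs : ∃ j' t', i ∈ σ j' t'
        · obtain ⟨j'', t'', h''⟩ := hσs
          have hjeq : j'' = j := share j'' j t'' t i h'' hi
          rw [qspec i hiσf hiτf hτs j'' t'' h'', hjeq]
          exact hpi
        · exact qτonly i hiσf hiτf hτs hσs
  -- contradiction: q is a common zero of all generators but not of f
  have hker : Ideal.span {f | ∃ j t, f = psm n (σ j t) (τ j t)} ≤ RingHom.ker (eval q) := by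
    refine Ideal.span_le.mpr ?_
    rintro g ⟨j, t, rfl⟩
    exact hq j t
  have : eval q (psm n σf τf) = 0 := hker hf
  have hne : eval q (psm n σf τf) ≠ 0 := by
    rw [eval_psm_ne_zero_iff]
    exact ⟨qσf, qτf⟩
  exact hne this

end PsmAux

open PsmAux in
/-- Lemma "decomp": if the families `g_{j,·}` pairwise (across different `j`) share no index,
then the canonical form of the ideal generated by all of them is obtained from the union of the
canonical forms of the subideals by removing multiples. -/
theorem stmt11 {n m : ℕ} (hn : 0 < n) (hm : 1 ≤ m)
    (k : Fin m → ℕ)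
    (σ τ : (j : Fin m) → Fin (k j) → Finset (Fin n))
    (hdisj : ∀ j t, Disjoint (σ j t) (τ j t))
    (hshare : ∀ j₁ j₂ : Fin m, j₁ ≠ j₂ → ∀ t₁ t₂ (i : Fin n),
      i ∉ (σ j₁ t₁ ∩ τ j₂ t₂) ∪ (σ j₂ t₂ ∩ τ j₁ t₁))
    (J : Ideal (MvPolynomial (Fin n) (ZMod 2)))
    (hJ : J = Ideal.span {f | ∃ j t, f = psm n (σ j t) (τ j t)})
    (Jj : Fin m → Ideal (MvPolynomial (Fin n) (ZMod 2)))
    (hJj : ∀ j, Jj j = Ideal.span {f | ∃ t, f = psm n (σ j t) (τ j t)})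
    (Xset : Set (MvPolynomial (Fin n) (ZMod 2)))
    (hX : Xset = ⋃ j, CF (Jj j)) :
    CF J = {f ∈ Xset | ¬∃ f' ∈ Xset, f' ≠ f ∧ f' ∣ f} := by
  classical
  have hsub : ∀ j, Jj j ≤ J := by
    intro j
    rw [hJ, hJj]
    exact Ideal.span_mono (by rintro g ⟨t, ht⟩; exact ⟨j, t, ht⟩)
  have lemBJ : ∀ f, IsPseudomonomial f → f ∈ J → ∃ j, f ∈ Jj j := by
    intro f hfp hfJ
    obtain ⟨σf, τf, hdf, rfl⟩ := hfp
    rw [hJ] at hfJ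
    obtain ⟨j, hj⟩ := lemB k σ τ hshare hdf hfJ
    exact ⟨j, by rw [hJj]; exact hj⟩
  ext f
  constructor
  · rintro ⟨hfp, hfJ, hmin⟩
    obtain ⟨j0, hj0⟩ := lemBJ f hfp hfJ
    have hfX : f ∈ Xset := by
      obtain ⟨σf, τf, hdf, hfe⟩ := hfp
      subst hfe
      obtain ⟨g, hgcf, hgdvd⟩ :=
        exists_cf_dvd (Jj j0) (σf.card + τf.card) σf τf hdf le_rfl hj0
      have hgf : g = psm n σf τf := by
        by_contra hne
        exact hmin g hgcf.1 hgdvd hne (hsub j0 hgcf.2.1)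
      rw [hX]
      exact Set.mem_iUnion.mpr ⟨j0, hgf ▸ hgcf⟩
    refine ⟨hfX, ?_⟩
    rintro ⟨f', hf'X, hne, hdvd⟩
    rw [hX] at hf'X
    obtain ⟨j1, hf'cf⟩ := Set.mem_iUnion.mp hf'X
    exact hmin f' hf'cf.1 hdvd hne (hsub j1 hf'cf.2.1)
  · rintro ⟨hfX, hnomin⟩
    rw [hX] at hfX
    obtain ⟨j0, hfcf⟩ := Set.mem_iUnion.mp hfX
    have hfp : IsPseudomonomial f := hfcf.1
    have hfJ : f ∈ J := hsub j0 hfcf.2.1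
    refine ⟨hfp, hfJ, ?_⟩
    intro g hgp hgdvd hgne hgJ
    obtain ⟨j1, hgj1⟩ := lemBJ g hgp hgJ
    obtain ⟨σg, τg, hdg, hge⟩ := hgp
    subst hge
    obtain ⟨h, hhcf, hhdvd⟩ :=
      exists_cf_dvd (Jj j1) (σg.card + τg.card) σg τg hdg le_rfl hgj1
    have hhX : h ∈ Xset := by
      rw [hX]; exact Set.mem_iUnion.mpr ⟨j1, hhcf⟩
    have hhf : h = f := by
      by_contra hne2
      exact hnomin ⟨h, hhX, hne2, dvd_trans hhdvd hgdvd⟩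
    have hfdvdg : f ∣ psm n σg τg := hhf ▸ hhdvd
    exact hgne (psm_dvd_antisymm hfcf.1 ⟨σg, τg, hdg, rfl⟩ hgdvd hfdvdg)
end

section
/- Let A be a neural ideal of R and let p be a minimal prime of A (an element of Ideal.minimalPrimes A). Then 𝒫(p) is a minimal prime of 𝒫(A) (an element of Ideal.minimalPrimes 𝒫(A)). -/
open MvPolynomial

/-- The polarization `𝒫(f) = ∏_{i∈σ} xᵢ · ∏_{i∈τ} yᵢ` in `S = F₂[x₁,…,xₙ,y₁,…,yₙ]`
(the `x`-variables are indexed by `Sum.inl`, the `y`-variables by `Sum.inr`). -/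
noncomputable def polMon (n : ℕ) (σ τ : Finset (Fin n)) :
    MvPolynomial (Fin n ⊕ Fin n) (ZMod 2) :=
  (∏ i ∈ σ, X (Sum.inl i)) * ∏ i ∈ τ, X (Sum.inr i)

/-- The polarization `𝒫(A)` of an ideal `A` of `R`: the ideal of `S` generated by the
polarizations of all pseudomonomials lying in `A`. -/
noncomputable def polIdeal {n : ℕ} (A : Ideal (MvPolynomial (Fin n) (ZMod 2))) :
    Ideal (MvPolynomial (Fin n ⊕ Fin n) (ZMod 2)) :=
  Ideal.span {m | ∃ σ τ : Finset (Fin n), Disjoint σ τ ∧ psm n σ τ ∈ A ∧ m = polMon n σ τ}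

/-- A neural ideal: an ideal of `R` generated by finitely many pseudomonomials. -/
def IsNeuralIdeal {n : ℕ} (A : Ideal (MvPolynomial (Fin n) (ZMod 2))) : Prop :=
  ∃ G : Finset (MvPolynomial (Fin n) (ZMod 2)),
    (∀ f ∈ G, IsPseudomonomial f) ∧ A = Ideal.span (G : Set (MvPolynomial (Fin n) (ZMod 2)))

/-- The depolarization map `d : S → R`, `xᵢ ↦ xᵢ`, `yᵢ ↦ 1 - xᵢ`. -/
noncomputable def depol (n : ℕ) :
    MvPolynomial (Fin n ⊕ Fin n) (ZMod 2) →+* MvPolynomial (Fin n) (ZMod 2) :=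
  (MvPolynomial.aeval (R := ZMod 2) (Sum.elim X (fun i => 1 - X i))).toRingHom
section Helpers

lemma sub_aeval_mem_span {ι : Type*} (g : ι → MvPolynomial ι (ZMod 2))
    (f : MvPolynomial ι (ZMod 2)) :
    f - aeval g f ∈ Ideal.span (Set.range fun i => X i - g i) := by
  induction f using MvPolynomial.induction_on with
  | C a => simpa using Ideal.zero_mem _
  | add p q hp hq =>
      have h : p + q - aeval g (p + q) = (p - aeval g p) + (q - aeval g q) := by
        rw [map_add]; ring
      rw [h]; exact Ideal.add_mem _ hp hq
  | mul_X p i hp =>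
      have h : p * X i - aeval g (p * X i) =
          p * (X i - g i) + (p - aeval g p) * g i := by
        rw [map_mul, aeval_X]; ring
      rw [h]
      exact Ideal.add_mem _ (Ideal.mul_mem_left _ _ (Ideal.subset_span ⟨i, rfl⟩))
        (Ideal.mul_mem_right _ _ hp)

lemma ker_aeval_eq_span {ι : Type*} (g : ι → MvPolynomial ι (ZMod 2))
    (hg : ∀ i, aeval g (g i) = g i) :
    RingHom.ker (aeval g : MvPolynomial ι (ZMod 2) →ₐ[ZMod 2] MvPolynomial ι (ZMod 2)) =
      Ideal.span (Set.range fun i => X i - g i) := by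
  apply le_antisymm
  · intro f hf
    have h := sub_aeval_mem_span g f
    rw [show aeval g f = 0 from hf, sub_zero] at h
    exact h
  · rw [Ideal.span_le]
    rintro _ ⟨i, rfl⟩
    simp only [SetLike.mem_coe, RingHom.mem_ker, map_sub, aeval_X, hg, sub_self]

variable {n : ℕ}

noncomputable def gst (σ τ : Finset (Fin n)) : Fin n → MvPolynomial (Fin n) (ZMod 2) :=
  fun i => if i ∈ σ then 0 else if i ∈ τ then 1 else X i

noncomputable def Pst (σ τ : Finset (Fin n)) : Ideal (MvPolynomial (Fin n) (ZMod 2)) :=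
  Ideal.span ((fun i => (X i : MvPolynomial (Fin n) (ZMod 2))) '' ↑σ ∪
    (fun j => 1 - X j) '' ↑τ)

lemma Pst_eq_ker {σ τ : Finset (Fin n)} (h : Disjoint σ τ) :
    Pst σ τ = RingHom.ker (aeval (gst σ τ) :
      MvPolynomial (Fin n) (ZMod 2) →ₐ[ZMod 2] MvPolynomial (Fin n) (ZMod 2)) := by
  have hg : ∀ i, aeval (gst σ τ) (gst σ τ i) = gst σ τ i := by
    intro i
    unfold gst
    split_ifs with h1 h2
    · simp
    · simp
    · simp [gst, h1, h2]
  apply le_antisymm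
  · rw [Pst, Ideal.span_le]
    rintro _ (⟨i, hi, rfl⟩ | ⟨j, hj, rfl⟩)
    · have hi' : i ∈ σ := hi
      simp only [SetLike.mem_coe, RingHom.mem_ker, aeval_X, gst, if_pos hi']
    · have hj' : j ∈ τ := hj
      have hjσ : j ∉ σ := fun hc => (Finset.disjoint_left.1 h hc) hj'
      simp only [SetLike.mem_coe, RingHom.mem_ker, map_sub, map_one, aeval_X, gst,
        if_neg hjσ, if_pos hj', sub_self]
  · rw [ker_aeval_eq_span _ hg, Ideal.span_le]
    rintro _ ⟨i, rfl⟩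
    show X i - gst σ τ i ∈ Pst σ τ
    unfold gst
    by_cases h1 : i ∈ σ
    · rw [if_pos h1, sub_zero]
      exact Ideal.subset_span (Or.inl ⟨i, Finset.mem_coe.2 h1, rfl⟩)
    · rw [if_neg h1]
      by_cases h2 : i ∈ τ
      · rw [if_pos h2, show (X i : MvPolynomial (Fin n) (ZMod 2)) - 1 = -(1 - X i) by ring]
        exact neg_mem (Ideal.subset_span (Or.inr ⟨i, Finset.mem_coe.2 h2, rfl⟩))
      · rw [if_neg h2, sub_self]
        exact Ideal.zero_mem _

lemma Pst_isPrime {σ τ : Finset (Fin n)} (h : Disjoint σ τ) : (Pst σ τ).IsPrime := by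
  rw [Pst_eq_ker h]; exact RingHom.ker_isPrime _

lemma mem_Pst_iff {σ τ : Finset (Fin n)} (h : Disjoint σ τ)
    (f : MvPolynomial (Fin n) (ZMod 2)) :
    f ∈ Pst σ τ ↔ aeval (gst σ τ) f = 0 := by
  rw [Pst_eq_ker h]; rfl

lemma oneSubX_ne_zero (j : Fin n) : (1 - X j : MvPolynomial (Fin n) (ZMod 2)) ≠ 0 := by
  intro h
  have := congrArg (coeff 0) h
  simp at this

lemma X_mem_Pst {σ τ : Finset (Fin n)} (h : Disjoint σ τ) {i : Fin n} :
    (X i : MvPolynomial (Fin n) (ZMod 2)) ∈ Pst σ τ ↔ i ∈ σ := by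
  rw [mem_Pst_iff h, aeval_X]
  unfold gst
  split_ifs with h1 h2
  · simp [h1]
  · simp [h1, one_ne_zero]
  · simp [h1, X_ne_zero]

lemma oneSubX_mem_Pst {σ τ : Finset (Fin n)} (h : Disjoint σ τ) {j : Fin n} :
    (1 - X j : MvPolynomial (Fin n) (ZMod 2)) ∈ Pst σ τ ↔ j ∈ τ := by
  rw [mem_Pst_iff h, map_sub, map_one, aeval_X]
  unfold gst
  split_ifs with h1 h2
  · have hjt : j ∉ τ := fun hc => (Finset.disjoint_left.1 h h1) hc
    simp [hjt]
  · simp [h2]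
  · simp only [h2, iff_false]
    exact oneSubX_ne_zero j

lemma psm_mem_Pst {σ τ σ' τ' : Finset (Fin n)} (h : Disjoint σ τ) :
    psm n σ' τ' ∈ Pst σ τ ↔ (∃ i ∈ σ', i ∈ σ) ∨ ∃ j ∈ τ', j ∈ τ := by
  rw [mem_Pst_iff h, psm, map_mul, map_prod, map_prod]
  simp only [map_sub, map_one, aeval_X]
  constructor
  · intro h0
    by_contra hc
    push_neg at hc
    obtain ⟨hc1, hc2⟩ := hc
    rcases mul_eq_zero.1 h0 with h0 | h0
    · obtain ⟨i, hi, hiz⟩ := Finset.prod_eq_zero_iff.1 h0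
      have hiσ : i ∉ σ := hc1 i hi
      unfold gst at hiz
      rw [if_neg hiσ] at hiz
      split_ifs at hiz with h2
      · exact one_ne_zero hiz
      · exact X_ne_zero i hiz
    · obtain ⟨j, hj, hjz⟩ := Finset.prod_eq_zero_iff.1 h0
      have hjτ : j ∉ τ := hc2 j hj
      unfold gst at hjz
      rw [sub_eq_zero] at hjz
      by_cases h1 : j ∈ σ
      · rw [if_pos h1] at hjz
        simp at hjz
      · rw [if_neg h1, if_neg hjτ] at hjz
        exact oneSubX_ne_zero j (by rw [sub_eq_zero]; exact hjz)
  · rintro (⟨i, hi, his⟩ | ⟨j, hj, hjt⟩)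
    · rw [Finset.prod_eq_zero hi (by simp [gst, if_pos his]), zero_mul]
    · have hjσ : j ∉ σ := fun hc => (Finset.disjoint_left.1 h hc) hjt
      rw [Finset.prod_eq_zero hj (by simp [gst, if_neg hjσ, if_pos hjt]), mul_zero]

end Helpers

section Helpers2

variable {n : ℕ}

lemma psm_mem_of_X_mem {I : Ideal (MvPolynomial (Fin n) (ZMod 2))} {σ' τ' : Finset (Fin n)}
    {i : Fin n} (hi : i ∈ σ') (h : (X i : MvPolynomial (Fin n) (ZMod 2)) ∈ I) :
    psm n σ' τ' ∈ I := by
  rw [psm, ← Finset.mul_prod_erase σ' _ hi, mul_assoc]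
  exact Ideal.mul_mem_right _ _ h

lemma psm_mem_of_oneSubX_mem {I : Ideal (MvPolynomial (Fin n) (ZMod 2))} {σ' τ' : Finset (Fin n)}
    {j : Fin n} (hj : j ∈ τ') (h : (1 - X j : MvPolynomial (Fin n) (ZMod 2)) ∈ I) :
    psm n σ' τ' ∈ I := by
  rw [psm, ← Finset.mul_prod_erase τ' _ hj]
  exact Ideal.mul_mem_left _ _ (Ideal.mul_mem_right _ _ h)

lemma polMon_mem_of_inl_mem {I : Ideal (MvPolynomial (Fin n ⊕ Fin n) (ZMod 2))}
    {σ' τ' : Finset (Fin n)} {i : Fin n} (hi : i ∈ σ')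
    (h : (X (Sum.inl i) : MvPolynomial (Fin n ⊕ Fin n) (ZMod 2)) ∈ I) :
    polMon n σ' τ' ∈ I := by
  rw [polMon, ← Finset.mul_prod_erase σ' _ hi, mul_assoc]
  exact Ideal.mul_mem_right _ _ h

lemma polMon_mem_of_inr_mem {I : Ideal (MvPolynomial (Fin n ⊕ Fin n) (ZMod 2))}
    {σ' τ' : Finset (Fin n)} {j : Fin n} (hj : j ∈ τ')
    (h : (X (Sum.inr j) : MvPolynomial (Fin n ⊕ Fin n) (ZMod 2)) ∈ I) :
    polMon n σ' τ' ∈ I := by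
  rw [polMon, ← Finset.mul_prod_erase τ' _ hj]
  exact Ideal.mul_mem_left _ _ (Ideal.mul_mem_right _ _ h)

/-- The substitution on `S` killing the variables `xᵢ, i ∈ σ` and `yⱼ, j ∈ τ`. -/
noncomputable def gq (σ τ : Finset (Fin n)) :
    Fin n ⊕ Fin n → MvPolynomial (Fin n ⊕ Fin n) (ZMod 2) :=
  Sum.elim (fun i => if i ∈ σ then 0 else X (Sum.inl i))
    (fun j => if j ∈ τ then 0 else X (Sum.inr j))

/-- The prime of `S` generated by the variables `xᵢ, i ∈ σ` and `yⱼ, j ∈ τ`. -/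
noncomputable def Qst (σ τ : Finset (Fin n)) : Ideal (MvPolynomial (Fin n ⊕ Fin n) (ZMod 2)) :=
  Ideal.span ((fun i => (X (Sum.inl i) : MvPolynomial (Fin n ⊕ Fin n) (ZMod 2))) '' ↑σ ∪
    (fun j => X (Sum.inr j)) '' ↑τ)

lemma Qst_eq_ker (σ τ : Finset (Fin n)) :
    Qst σ τ = RingHom.ker (aeval (gq σ τ) : MvPolynomial (Fin n ⊕ Fin n) (ZMod 2) →ₐ[ZMod 2]
      MvPolynomial (Fin n ⊕ Fin n) (ZMod 2)) := by
  have hg : ∀ v, aeval (gq σ τ) (gq σ τ v) = gq σ τ v := by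
    rintro (i | j)
    · simp only [gq, Sum.elim_inl]
      split_ifs with h1
      · simp
      · simp [gq, h1]
    · simp only [gq, Sum.elim_inr]
      split_ifs with h1
      · simp
      · simp [gq, h1]
  apply le_antisymm
  · rw [Qst, Ideal.span_le]
    rintro _ (⟨i, hi, rfl⟩ | ⟨j, hj, rfl⟩)
    · have hi' : i ∈ σ := hi
      simp only [SetLike.mem_coe, RingHom.mem_ker, aeval_X, gq, Sum.elim_inl, if_pos hi']
    · have hj' : j ∈ τ := hj
      simp only [SetLike.mem_coe, RingHom.mem_ker, aeval_X, gq, Sum.elim_inr, if_pos hj']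
  · rw [ker_aeval_eq_span _ hg, Ideal.span_le]
    rintro _ ⟨v, rfl⟩
    show X v - gq σ τ v ∈ Qst σ τ
    rcases v with i | j
    · simp only [gq, Sum.elim_inl]
      by_cases h1 : i ∈ σ
      · rw [if_pos h1, sub_zero]
        exact Ideal.subset_span (Or.inl ⟨i, Finset.mem_coe.2 h1, rfl⟩)
      · rw [if_neg h1, sub_self]
        exact Ideal.zero_mem _
    · simp only [gq, Sum.elim_inr]
      by_cases h1 : j ∈ τ
      · rw [if_pos h1, sub_zero]
        exact Ideal.subset_span (Or.inr ⟨j, Finset.mem_coe.2 h1, rfl⟩)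
      · rw [if_neg h1, sub_self]
        exact Ideal.zero_mem _

lemma Qst_isPrime (σ τ : Finset (Fin n)) : (Qst σ τ).IsPrime := by
  rw [Qst_eq_ker]; exact RingHom.ker_isPrime _

lemma Xinl_mem_Qst {σ τ : Finset (Fin n)} {i : Fin n} :
    (X (Sum.inl i) : MvPolynomial (Fin n ⊕ Fin n) (ZMod 2)) ∈ Qst σ τ ↔ i ∈ σ := by
  rw [Qst_eq_ker]
  show aeval (gq σ τ) (X (Sum.inl i)) = 0 ↔ _
  rw [aeval_X]
  simp only [gq, Sum.elim_inl, Sum.elim_inr]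
  split_ifs with h1
  · simp [h1]
  · simp [h1, X_ne_zero]

lemma Xinr_mem_Qst {σ τ : Finset (Fin n)} {j : Fin n} :
    (X (Sum.inr j) : MvPolynomial (Fin n ⊕ Fin n) (ZMod 2)) ∈ Qst σ τ ↔ j ∈ τ := by
  rw [Qst_eq_ker]
  show aeval (gq σ τ) (X (Sum.inr j)) = 0 ↔ _
  rw [aeval_X]
  simp only [gq, Sum.elim_inl, Sum.elim_inr]
  split_ifs with h1
  · simp [h1]
  · simp [h1, X_ne_zero]

lemma polIdeal_mono {A B : Ideal (MvPolynomial (Fin n) (ZMod 2))} (h : A ≤ B) :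
    polIdeal A ≤ polIdeal B := by
  apply Ideal.span_mono
  rintro m ⟨σ', τ', hd, hm, rfl⟩
  exact ⟨σ', τ', hd, h hm, rfl⟩

lemma polIdeal_Pst {σ τ : Finset (Fin n)} (h : Disjoint σ τ) :
    polIdeal (Pst σ τ) = Qst σ τ := by
  apply le_antisymm
  · rw [polIdeal, Ideal.span_le]
    rintro _ ⟨σ', τ', hd, hmem, rfl⟩
    rcases (psm_mem_Pst h).1 hmem with ⟨i, hi, his⟩ | ⟨j, hj, hjt⟩
    · exact polMon_mem_of_inl_mem hi (Ideal.subset_span (Or.inl ⟨i, Finset.mem_coe.2 his, rfl⟩))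
    · exact polMon_mem_of_inr_mem hj (Ideal.subset_span (Or.inr ⟨j, Finset.mem_coe.2 hjt, rfl⟩))
  · rw [Qst, Ideal.span_le]
    rintro _ (⟨i, hi, rfl⟩ | ⟨j, hj, rfl⟩)
    · apply Ideal.subset_span
      refine ⟨{i}, ∅, Finset.disjoint_empty_right _, ?_, ?_⟩
      · have : psm n {i} ∅ = X i := by simp [psm]
        rw [this]
        exact Ideal.subset_span (Or.inl ⟨i, hi, rfl⟩)
      · simp [polMon]
    · apply Ideal.subset_span
      refine ⟨∅, {j}, Finset.disjoint_empty_left _, ?_, ?_⟩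
      · have : psm n ∅ {j} = 1 - X j := by simp [psm]
        rw [this]
        exact Ideal.subset_span (Or.inr ⟨j, hj, rfl⟩)
      · simp [polMon]

lemma Pst_mono {σ₀ τ₀ σ τ : Finset (Fin n)} (hσ : σ₀ ⊆ σ) (hτ : τ₀ ⊆ τ) :
    Pst σ₀ τ₀ ≤ Pst σ τ := by
  apply Ideal.span_mono
  exact Set.union_subset_union (Set.image_mono (by exact_mod_cast hσ))
    (Set.image_mono (by exact_mod_cast hτ))

lemma minimalPrime_structure {A : Ideal (MvPolynomial (Fin n) (ZMod 2))}
    (hA : IsNeuralIdeal A) {p : Ideal (MvPolynomial (Fin n) (ZMod 2))}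
    (hp : p ∈ A.minimalPrimes) :
    ∃ σ τ : Finset (Fin n), Disjoint σ τ ∧ p = Pst σ τ := by
  classical
  obtain ⟨G, hG1, hG2⟩ := hA
  have hprime : p.IsPrime := hp.1.1
  have hle : A ≤ p := hp.1.2
  set σ₁ : Finset (Fin n) := Finset.univ.filter (fun i => (X i : MvPolynomial (Fin n) (ZMod 2)) ∈ p) with hσ₁
  set τ₁ : Finset (Fin n) := Finset.univ.filter (fun j => (1 - X j : MvPolynomial (Fin n) (ZMod 2)) ∈ p) with hτ₁
  have hdisj : Disjoint σ₁ τ₁ := by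
    rw [Finset.disjoint_left]
    intro i hi1 hi2
    rw [hσ₁, Finset.mem_filter] at hi1
    rw [hτ₁, Finset.mem_filter] at hi2
    have : (1 : MvPolynomial (Fin n) (ZMod 2)) ∈ p := by
      have := Ideal.add_mem p hi1.2 hi2.2
      rwa [show (X i : MvPolynomial (Fin n) (ZMod 2)) + (1 - X i) = 1 by ring] at this
    exact hprime.ne_top (Ideal.eq_top_iff_one p |>.2 this)
  have hAle : A ≤ Pst σ₁ τ₁ := by
    rw [hG2, Ideal.span_le]
    intro g hg
    obtain ⟨σg, τg, hdg, rfl⟩ := hG1 g hg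
    have hgp : psm n σg τg ∈ p := hle (by rw [hG2]; exact Ideal.subset_span hg)
    rw [psm] at hgp
    rcases hprime.mem_or_mem hgp with h0 | h0
    · obtain ⟨i, hi, hXi⟩ := (Ideal.IsPrime.prod_mem_iff (hp := hprime)).1 h0
      refine psm_mem_of_X_mem hi (Ideal.subset_span (Or.inl ⟨i, ?_, rfl⟩))
      simp [hσ₁, hXi]
    · obtain ⟨j, hj, hXj⟩ := (Ideal.IsPrime.prod_mem_iff (hp := hprime)).1 h0
      refine psm_mem_of_oneSubX_mem hj (Ideal.subset_span (Or.inr ⟨j, ?_, rfl⟩))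
      simp [hτ₁, hXj]
  have hP1le : Pst σ₁ τ₁ ≤ p := by
    rw [Pst, Ideal.span_le]
    rintro _ (⟨i, hi, rfl⟩ | ⟨j, hj, rfl⟩)
    · have : i ∈ σ₁ := hi
      rw [hσ₁, Finset.mem_filter] at this
      exact this.2
    · have : j ∈ τ₁ := hj
      rw [hτ₁, Finset.mem_filter] at this
      exact this.2
  refine ⟨σ₁, τ₁, hdisj, le_antisymm (hp.2 ⟨Pst_isPrime hdisj, hAle⟩ hP1le) hP1le⟩

end Helpers2


/-- Lemma "primarydecomp", Claim 1: if `p` is a minimal prime of a neural ideal `A`, then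
`𝒫(p)` is a minimal prime of `𝒫(A)`. -/
theorem stmt13 {n : ℕ} (hn : 0 < n)
    (A : Ideal (MvPolynomial (Fin n) (ZMod 2))) (hA : IsNeuralIdeal A)
    (p : Ideal (MvPolynomial (Fin n) (ZMod 2))) (hp : p ∈ A.minimalPrimes) :
    polIdeal p ∈ (polIdeal A).minimalPrimes := by
  classical
  obtain ⟨σ, τ, hd, hpe⟩ := minimalPrime_structure hA hp
  subst hpe
  rw [polIdeal_Pst hd]
  have hAQ : polIdeal A ≤ Qst σ τ := by
    have := polIdeal_mono (n := n) hp.1.2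
    rwa [polIdeal_Pst hd] at this
  refine ⟨⟨Qst_isPrime σ τ, hAQ⟩, ?_⟩
  rintro q ⟨hq, hAq⟩ hqle
  obtain ⟨G, hG1, hG2⟩ := hA
  set σ₀ : Finset (Fin n) := σ.filter (fun i => (X (Sum.inl i) : MvPolynomial (Fin n ⊕ Fin n) (ZMod 2)) ∈ q) with hσ₀
  set τ₀ : Finset (Fin n) := τ.filter (fun j => (X (Sum.inr j) : MvPolynomial (Fin n ⊕ Fin n) (ZMod 2)) ∈ q) with hτ₀
  have hd₀ : Disjoint σ₀ τ₀ := hd.mono (Finset.filter_subset _ _) (Finset.filter_subset _ _)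
  have hA0 : A ≤ Pst σ₀ τ₀ := by
    rw [hG2, Ideal.span_le]
    intro g hg
    obtain ⟨σg, τg, hdg, rfl⟩ := hG1 g hg
    have hmon : polMon n σg τg ∈ q := by
      apply hAq
      exact Ideal.subset_span ⟨σg, τg, hdg, by rw [hG2]; exact Ideal.subset_span hg, rfl⟩
    rw [polMon] at hmon
    rcases hq.mem_or_mem hmon with h0 | h0
    · obtain ⟨i, hi, hXi⟩ := (Ideal.IsPrime.prod_mem_iff (hp := hq)).1 h0
      have hiσ : i ∈ σ := Xinl_mem_Qst.1 (hqle hXi)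
      refine psm_mem_of_X_mem hi (Ideal.subset_span (Or.inl ⟨i, ?_, rfl⟩))
      simp [hσ₀, hiσ, hXi]
    · obtain ⟨j, hj, hXj⟩ := (Ideal.IsPrime.prod_mem_iff (hp := hq)).1 h0
      have hjτ : j ∈ τ := Xinr_mem_Qst.1 (hqle hXj)
      refine psm_mem_of_oneSubX_mem hj (Ideal.subset_span (Or.inr ⟨j, ?_, rfl⟩))
      simp [hτ₀, hjτ, hXj]
  have hle0 : Pst σ₀ τ₀ ≤ Pst σ τ := Pst_mono (Finset.filter_subset _ _) (Finset.filter_subset _ _)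
  have heq : Pst σ τ ≤ Pst σ₀ τ₀ := hp.2 ⟨Pst_isPrime hd₀, hA0⟩ hle0
  have hσ : σ ⊆ σ₀ := by
    intro i hi
    have : (X i : MvPolynomial (Fin n) (ZMod 2)) ∈ Pst σ₀ τ₀ :=
      heq (Ideal.subset_span (Or.inl ⟨i, Finset.mem_coe.2 hi, rfl⟩))
    exact (X_mem_Pst hd₀).1 this
  have hτ : τ ⊆ τ₀ := by
    intro j hj
    have : (1 - X j : MvPolynomial (Fin n) (ZMod 2)) ∈ Pst σ₀ τ₀ :=
      heq (Ideal.subset_span (Or.inr ⟨j, Finset.mem_coe.2 hj, rfl⟩))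
    exact (oneSubX_mem_Pst hd₀).1 this
  rw [Qst, Ideal.span_le]
  rintro _ (⟨i, hi, rfl⟩ | ⟨j, hj, rfl⟩)
  · have : i ∈ σ₀ := hσ hi
    rw [hσ₀, Finset.mem_filter] at this
    exact this.2
  · have : j ∈ τ₀ := hτ hj
    rw [hτ₀, Finset.mem_filter] at this
    exact this.2
end

section
/- Let A be a neural ideal of R and let q be a minimal prime of 𝒫(A) (an element of Ideal.minimalPrimes 𝒫(A)) such that there is no index 1 ≤ i ≤ n with both xᵢ ∈ q and yᵢ ∈ q. Then the image ideal d(q) (in Lean, Ideal.map d q) is a minimal prime of A (an element of Ideal.minimalPrimes A). -/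
open MvPolynomial

/-!
A minimal prime `q` of the squarefree monomial ideal `𝒫(A)` is generated by the variables it
contains. If it contains no pair `xᵢ, yᵢ`, then `d(q)` is generated by some `xᵢ` and some
`1 - xᵢ` with distinct indices, i.e. it is the kernel of the substitution sending these `xᵢ`
to `0` resp. `1`; hence it is prime, and it contains `A` because `d(𝒫(f)) = f`.
Minimality of `q` provides, for each variable `z ∈ q`, a pseudomonomial `f ∈ A` whose
polarization contains no variable of `q` other than `z`. If `A ⊆ b ⊆ d(q)` with `b` prime, some
factor `d(w)` of `f = ∏ d(w)` lies in `b ⊆ d(q)`, and `d(w) ∉ d(q)` unless `w = z`; so `d(z) ∈ b`.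
-/

namespace MvPolynomial

variable {R ι : Type*} [CommRing R]

theorem sub_aeval_mem_of_forall_X_sub_mem {g : ι → MvPolynomial ι R}
    {J : Ideal (MvPolynomial ι R)} (h : ∀ i, X i - g i ∈ J) (f : MvPolynomial ι R) :
    f - aeval g f ∈ J := by
  induction f using MvPolynomial.induction_on with
  | C a => simp [algebraMap_eq]
  | add p r hp hr => simpa [sub_add_sub_comm] using J.add_mem hp hr
  | mul_X p i hp =>
    have : p * X i - aeval g (p * X i) = p * (X i - g i) + (p - aeval g p) * g i := by
      rw [map_mul, aeval_X]; ring
    rw [this]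
    exact J.add_mem (J.mul_mem_left _ (h i)) (J.mul_mem_right _ hp)

theorem span_eq_ker_aeval {g : ι → MvPolynomial ι R} {T : Set (MvPolynomial ι R)}
    (hT : ∀ t ∈ T, aeval g t = 0) (hX : ∀ i, X i - g i ∈ Ideal.span T) :
    Ideal.span T = RingHom.ker (aeval g) := by
  refine le_antisymm (Ideal.span_le.2 hT) fun f hf => ?_
  have := sub_aeval_mem_of_forall_X_sub_mem hX f
  rwa [(RingHom.mem_ker).1 hf, sub_zero] at this

theorem X_mem_span_X_image_iff [Nontrivial R] {W : Set ι} {i : ι} :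
    X i ∈ Ideal.span (X '' W : Set (MvPolynomial ι R)) ↔ i ∈ W := by
  classical
  simp [mem_ideal_span_X_image, support_X, Finsupp.single_apply]

variable [IsDomain R]

theorem isPrime_span_X_image (W : Set ι) :
    (Ideal.span (X '' W : Set (MvPolynomial ι R))).IsPrime := by
  classical
  rw [span_eq_ker_aeval (g := fun i => if i ∈ W then 0 else X i)]
  · exact RingHom.ker_isPrime _
  · rintro _ ⟨i, hi, rfl⟩
    simp [hi]
  · intro i
    by_cases hi : i ∈ W
    · simpa [hi] using Ideal.subset_span (Set.mem_image_of_mem X hi)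
    · simp [hi]

theorem prod_X_mem_span_X_image_iff {W : Set ι} {s : Finset ι} :
    ∏ i ∈ s, X i ∈ Ideal.span (X '' W : Set (MvPolynomial ι R)) ↔ ∃ i ∈ s, i ∈ W := by
  simp [(isPrime_span_X_image W).prod_mem_iff, X_mem_span_X_image_iff]

variable {T : Set (Finset ι)} {q : Ideal (MvPolynomial ι R)}

theorem eq_span_X_of_mem_minimalPrimes
    (hq : q ∈ (Ideal.span ((fun s => ∏ i ∈ s, X i) '' T)).minimalPrimes) :
    q = Ideal.span (X '' {i | X i ∈ q}) := by
  obtain ⟨⟨hqp, hTq⟩, hmin⟩ := hq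
  have hle : Ideal.span (X '' {i | X i ∈ q}) ≤ q :=
    Ideal.span_le.2 (by rintro _ ⟨i, hi, rfl⟩; exact hi)
  refine le_antisymm (hmin ⟨isPrime_span_X_image _, ?_⟩ hle) hle
  rw [Ideal.span_le]
  rintro _ ⟨s, hs, rfl⟩
  exact prod_X_mem_span_X_image_iff.2 (hqp.prod_mem_iff.1 (hTq (Ideal.subset_span ⟨s, hs, rfl⟩)))

theorem exists_mem_forall_X_mem_eq_of_mem_minimalPrimes
    (hq : q ∈ (Ideal.span ((fun s => ∏ i ∈ s, X i) '' T)).minimalPrimes) {v : ι}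
    (hv : X v ∈ q) : ∃ s ∈ T, v ∈ s ∧ ∀ i ∈ s, X i ∈ q → i = v := by
  by_contra! h
  set W : Set ι := {i | X i ∈ q} \ {v}
  have hWq : Ideal.span (X '' W) ≤ q := by
    rw [eq_span_X_of_mem_minimalPrimes hq]
    exact Ideal.span_mono (Set.image_mono Set.sdiff_subset)
  have hTW :
      Ideal.span ((fun s => ∏ i ∈ s, (X i : MvPolynomial ι R)) '' T) ≤ Ideal.span (X '' W) := by
    rw [Ideal.span_le]
    rintro _ ⟨s, hs, rfl⟩
    obtain ⟨i, his, hiq⟩ := hq.1.1.prod_mem_iff.1 (hq.1.2 (Ideal.subset_span ⟨s, hs, rfl⟩))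
    refine prod_X_mem_span_X_image_iff.2 ?_
    by_cases hiv : i = v
    · subst hiv
      obtain ⟨j, hjs, hjq, hji⟩ := h s hs his
      exact ⟨j, hjs, hjq, hji⟩
    · exact ⟨i, his, hiq, hiv⟩
  exact (X_mem_span_X_image_iff.1 (hq.2 ⟨isPrime_span_X_image W, hTW⟩ hWq hv)).2 rfl

end MvPolynomial

section Depolarization

variable {K ι : Type*} [CommRing K]

noncomputable def depolVar : ι ⊕ ι → MvPolynomial ι K :=
  Sum.elim X fun i => 1 - X i

noncomputable def zeroOneSubst (V : Set (ι ⊕ ι)) : ι → MvPolynomial ι K := by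
  classical
  exact fun i => if Sum.inl i ∈ V then 0 else if Sum.inr i ∈ V then 1 else X i

variable {V : Set (ι ⊕ ι)}

theorem span_depolVar_image_eq_ker (hV : ∀ i, ¬(Sum.inl i ∈ V ∧ Sum.inr i ∈ V)) :
    Ideal.span (depolVar (K := K) '' V) = RingHom.ker (aeval (zeroOneSubst (K := K) V)) := by
  classical
  apply span_eq_ker_aeval
  · rintro _ ⟨v | v, hv, rfl⟩
    · simp [depolVar, zeroOneSubst, hv]
    · have h0 : Sum.inl v ∉ V := fun h => hV v ⟨h, hv⟩
      simp [depolVar, zeroOneSubst, hv, h0]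
  · intro i
    by_cases h0 : Sum.inl i ∈ V
    · have : depolVar (K := K) (Sum.inl i) ∈ Ideal.span (depolVar '' V) :=
        Ideal.subset_span ⟨_, h0, rfl⟩
      simpa [zeroOneSubst, depolVar, h0] using this
    by_cases h1 : Sum.inr i ∈ V
    · have : -depolVar (K := K) (Sum.inr i) ∈ Ideal.span (depolVar '' V) :=
        (Ideal.neg_mem_iff _).2 (Ideal.subset_span ⟨_, h1, rfl⟩)
      simpa [zeroOneSubst, depolVar, h0, h1] using this
    · simp [zeroOneSubst, h0, h1]

theorem aeval_zeroOneSubst_depolVar_ne_zero [Nontrivial K] {w : ι ⊕ ι} (hw : w ∉ V) :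
    aeval (zeroOneSubst (K := K) V) (depolVar (K := K) w) ≠ 0 := by
  classical
  rcases w with i | i
  · simp only [depolVar, Sum.elim_inl, aeval_X, zeroOneSubst, if_neg hw]
    split_ifs <;> simp [X_ne_zero]
  · simp only [depolVar, Sum.elim_inr, map_sub, map_one, aeval_X, zeroOneSubst, if_neg hw]
    split_ifs
    · simp
    · exact fun h => by simpa using congrArg constantCoeff h

end Depolarization

section Polarization

variable {n : ℕ}

theorem depol_X (v : Fin n ⊕ Fin n) : depol n (X v) = depolVar v :=
  aeval_X _ _

theorem depol_polMon (σ τ : Finset (Fin n)) : depol n (polMon n σ τ) = psm n σ τ := by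
  simp [polMon, psm, depol_X, depolVar]

theorem polMon_eq_prod_X (σ τ : Finset (Fin n)) : polMon n σ τ = ∏ v ∈ σ.disjSum τ, X v :=
  (Finset.prod_disjSum σ τ X).symm

def polSupports (A : Ideal (MvPolynomial (Fin n) (ZMod 2))) : Set (Finset (Fin n ⊕ Fin n)) :=
  {s | ∃ σ τ, Disjoint σ τ ∧ psm n σ τ ∈ A ∧ s = σ.disjSum τ}

theorem polIdeal_eq_span_prod_X (A : Ideal (MvPolynomial (Fin n) (ZMod 2))) :
    polIdeal A = Ideal.span ((fun s => ∏ v ∈ s, X v) '' polSupports A) := by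
  simp only [polIdeal, polSupports, polMon_eq_prod_X]
  congr 1
  ext m
  simp only [Set.mem_ofPred_eq, Set.mem_image]
  grind

theorem IsNeuralIdeal.le_map_depol_polIdeal {A : Ideal (MvPolynomial (Fin n) (ZMod 2))}
    (hA : IsNeuralIdeal A) : A ≤ (polIdeal A).map (depol n) := by
  obtain ⟨G, hG, hAG⟩ := hA
  conv_lhs => rw [hAG]
  rw [Ideal.span_le]
  intro f hf
  obtain ⟨σ, τ, hστ, rfl⟩ := hG f hf
  have hfA : psm n σ τ ∈ A := hAG ▸ Ideal.subset_span hf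
  rw [← depol_polMon]
  exact Ideal.mem_map_of_mem _ (Ideal.subset_span ⟨σ, τ, hστ, hfA, rfl⟩)

end Polarization

theorem stmt14_general {n : ℕ}
    (A : Ideal (MvPolynomial (Fin n) (ZMod 2))) (hA : IsNeuralIdeal A)
    (q : Ideal (MvPolynomial (Fin n ⊕ Fin n) (ZMod 2)))
    (hq : q ∈ (polIdeal A).minimalPrimes)
    (hno : ¬∃ i : Fin n, X (Sum.inl i) ∈ q ∧ X (Sum.inr i) ∈ q) :
    Ideal.map (depol n) q ∈ A.minimalPrimes := by
  set V : Set (Fin n ⊕ Fin n) := {v | X v ∈ q}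
  have hAq : A ≤ q.map (depol n) := hA.le_map_depol_polIdeal.trans (Ideal.map_mono hq.1.2)
  rw [polIdeal_eq_span_prod_X] at hq
  have hqV : q.map (depol n) = Ideal.span (depolVar '' V) := by
    conv_lhs => rw [eq_span_X_of_mem_minimalPrimes hq]
    simp only [Ideal.map_span, Set.image_image, depol_X]
    rfl
  have hker : q.map (depol n) = RingHom.ker (aeval (zeroOneSubst V)) :=
    hqV.trans (span_depolVar_image_eq_ker fun i h => hno ⟨i, h⟩)
  refine ⟨⟨hker ▸ RingHom.ker_isPrime _, hAq⟩, fun b hb hbq => ?_⟩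
  rw [hqV, Ideal.span_le]
  rintro _ ⟨v, hv, rfl⟩
  obtain ⟨_, ⟨σ, τ, -, hστ, rfl⟩, -, hvonly⟩ :=
    exists_mem_forall_X_mem_eq_of_mem_minimalPrimes hq hv
  have hprod : ∏ w ∈ σ.disjSum τ, depolVar w ∈ b := by
    simpa [← depol_polMon, polMon_eq_prod_X, depol_X] using hb.2 hστ
  obtain ⟨w, hws, hwb⟩ := hb.1.prod_mem_iff.1 hprod
  by_cases hwV : w ∈ V
  · rwa [hvonly w hws hwV] at hwb
  · exact absurd (hker ▸ hbq hwb) (aeval_zeroOneSubst_depolVar_ne_zero hwV)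

/-- Lemma "primarydecomp", Claim 2: if `q` is a minimal prime of `𝒫(A)` containing no pair
`xᵢ, yᵢ`, then `d(q)` is a minimal prime of `A`. -/
theorem stmt14 {n : ℕ} (hn : 0 < n)
    (A : Ideal (MvPolynomial (Fin n) (ZMod 2))) (hA : IsNeuralIdeal A)
    (q : Ideal (MvPolynomial (Fin n ⊕ Fin n) (ZMod 2)))
    (hq : q ∈ (polIdeal A).minimalPrimes)
    (hno : ¬∃ i : Fin n, X (Sum.inl i) ∈ q ∧ X (Sum.inr i) ∈ q) :
    Ideal.map (depol n) q ∈ A.minimalPrimes :=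
  stmt14_general A hA q hq hno
end

section
/- Let 𝔞 be a squarefree monomial ideal of S, and suppose 𝔞 = 𝔞₀ ∩ 𝔞₁ ∩ ⋯ ∩ 𝔞_t (t ≥ 0), where 𝔞₀ is an intersection of finitely many monomial primes none of which contains both xᵢ and yᵢ for any 1 ≤ i ≤ n, and where for each 1 ≤ j ≤ t there is an index i_j such that 𝔞_j is an intersection of finitely many monomial primes each of which contains both x_{i_j} and y_{i_j}. Then the recomposition of 𝔞 equals 𝔞₀; moreover, for any 1 ≤ s ≤ t, the recomposition of 𝔞₀ ∩ 𝔞_s ∩ ⋯ ∩ 𝔞_t also equals 𝔞₀. Consequently, if 𝔞 = 𝔟 ∩ 𝔠 for squarefree monomial ideals 𝔟, 𝔠 of S with xᵢ ∈ 𝔟 and yᵢ ∈ 𝔟 for some 1 ≤ i ≤ n, then the recomposition of 𝔞 equals the recomposition of 𝔠. -/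
open MvPolynomial

/-- A squarefree monomial ideal of `S = F₂[x₁,…,xₙ,y₁,…,yₙ]` (the `x`-variables indexed by
`Sum.inl`, the `y`-variables by `Sum.inr`): an ideal generated by finitely many squarefree
monomials. -/
def IsSqfreeMonomialIdeal {n : ℕ}
    (a : Ideal (MvPolynomial (Fin n ⊕ Fin n) (ZMod 2))) : Prop :=
  ∃ G : Finset (Finset (Fin n ⊕ Fin n)),
    a = Ideal.span ((fun s => ∏ i ∈ s, X i) '' (G : Set (Finset (Fin n ⊕ Fin n))))

/-- A monomial prime of `S`: an ideal generated by a subset of the variables. -/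
def IsMonomialPrime {n : ℕ}
    (p : Ideal (MvPolynomial (Fin n ⊕ Fin n) (ZMod 2))) : Prop :=
  ∃ V : Set (Fin n ⊕ Fin n), p = Ideal.span (X '' V)

/-- The recomposition of `a`: the intersection of those minimal primes `p` of `a` such that
there is no index `i` with both `xᵢ ∈ p` and `yᵢ ∈ p` (`⊤` if there is no such prime). -/
noncomputable def recomp {n : ℕ} (a : Ideal (MvPolynomial (Fin n ⊕ Fin n) (ZMod 2))) :
    Ideal (MvPolynomial (Fin n ⊕ Fin n) (ZMod 2)) :=
  sInf {p ∈ a.minimalPrimes | ¬∃ i : Fin n, X (Sum.inl i) ∈ p ∧ X (Sum.inr i) ∈ p}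

/-- The recomposition of `a` with respect to the index `i`: the intersection of those minimal
primes `p` of `a` such that not both `xᵢ ∈ p` and `yᵢ ∈ p` (`⊤` if there is no such prime). -/
noncomputable def recompAt {n : ℕ} (i : Fin n)
    (a : Ideal (MvPolynomial (Fin n ⊕ Fin n) (ZMod 2))) :
    Ideal (MvPolynomial (Fin n ⊕ Fin n) (ZMod 2)) :=
  sInf {p ∈ a.minimalPrimes | ¬(X (Sum.inl i) ∈ p ∧ X (Sum.inr i) ∈ p)}

/-- The span of a set of variables is a prime ideal. -/
lemma span_X_isPrime {σ : Type*} (V : Set σ) :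
    (Ideal.span (X '' V) : Ideal (MvPolynomial σ (ZMod 2))).IsPrime := by
  classical
  set π : MvPolynomial σ (ZMod 2) →+* MvPolynomial σ (ZMod 2) :=
    (aeval (fun i => if i ∈ V then 0 else X i) : MvPolynomial σ (ZMod 2) →ₐ[ZMod 2] _).toRingHom
    with hπ
  have hgen : ∀ i ∈ V, π (X i) = 0 := by
    intro i hi; simp [hπ, hi]
  have hker : Ideal.span (X '' V) ≤ RingHom.ker π := by
    rw [Ideal.span_le]
    rintro _ ⟨i, hi, rfl⟩
    simpa [RingHom.mem_ker] using hgen i hi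
  have hsub : ∀ f, f - π f ∈ Ideal.span (X '' V) := by
    intro f
    induction f using MvPolynomial.induction_on with
    | C a => simp [hπ]
    | add f g hf hg =>
        have := Ideal.add_mem _ hf hg
        convert this using 1
        simp only [map_add]
        ring
    | mul_X f i hf =>
        rw [map_mul]
        by_cases hi : i ∈ V
        · rw [hgen i hi, mul_zero, sub_zero]
          exact Ideal.mul_mem_left _ f (Ideal.subset_span ⟨i, hi, rfl⟩)
        · have hXi : π (X i) = X i := by simp [hπ, hi]
          rw [hXi]
          have : f * X i - π f * X i = (f - π f) * X i := by ring
          rw [this]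
          exact Ideal.mul_mem_right _ _ hf
  have hmem : ∀ f, π f = 0 → f ∈ Ideal.span (X '' V) := by
    intro f h
    have := hsub f
    rwa [h, sub_zero] at this
  constructor
  · intro h
    have : (1 : MvPolynomial σ (ZMod 2)) ∈ Ideal.span (X '' V) := h ▸ Submodule.mem_top
    have h1 : π 1 = 0 := hker this
    rw [map_one] at h1
    exact one_ne_zero h1
  · intro f g hfg
    have h0 : π f * π g = 0 := by
      have := hker hfg
      rwa [RingHom.mem_ker, map_mul] at this
    rcases mul_eq_zero.mp h0 with h | h
    · exact Or.inl (hmem f h)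
    · exact Or.inr (hmem g h)

/-- The "good" predicate: `p` contains no pair `xᵢ, yᵢ`. -/
def NoPair {n : ℕ} (p : Ideal (MvPolynomial (Fin n ⊕ Fin n) (ZMod 2))) : Prop :=
  ¬∃ i : Fin n, X (Sum.inl i) ∈ p ∧ X (Sum.inr i) ∈ p

lemma key_recomp {n : ℕ} (a a₀ : Ideal (MvPolynomial (Fin n ⊕ Fin n) (ZMod 2)))
    (P₀ P₁ : Finset (Ideal (MvPolynomial (Fin n ⊕ Fin n) (ZMod 2))))
    (hP₀ : ∀ p ∈ P₀, p.IsPrime ∧ NoPair p)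
    (hP₁ : ∀ p ∈ P₁, p.IsPrime ∧ ¬NoPair p)
    (ha₀ : a₀ = P₀.inf id) (haeq : a = P₀.inf id ⊓ P₁.inf id) :
    sInf {p ∈ a.minimalPrimes | NoPair p} = a₀ := by
  classical
  have haP : a = (P₀ ∪ P₁).inf id := by
    rw [haeq, Finset.inf_union]
  apply le_antisymm
  · rw [ha₀, Finset.le_inf_iff]
    intro q hq
    have hqP : q.IsPrime := (hP₀ q hq).1
    have haq : a ≤ q := haP ▸ le_trans (Finset.inf_le (Finset.mem_union_left _ hq))
      (le_refl (id q))
    obtain ⟨p, hp, hpq⟩ := Ideal.exists_minimalPrimes_le haq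
    have hpgood : NoPair p := by
      intro ⟨i, hxi, hyi⟩
      exact (hP₀ q hq).2 ⟨i, hpq hxi, hpq hyi⟩
    exact le_trans (sInf_le ⟨hp, hpgood⟩) hpq
  · apply le_sInf
    rintro p ⟨hp, hpgood⟩
    have hpprime : p.IsPrime := hp.1.1
    have hap : a ≤ p := hp.1.2
    have : (P₀ ∪ P₁).inf id ≤ p := haP ▸ hap
    obtain ⟨q, hq, hqp⟩ := (hpprime.inf_le').mp this
    have hqprime : q.IsPrime := by
      rcases Finset.mem_union.mp hq with h | h
      · exact (hP₀ q h).1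
      · exact (hP₁ q h).1
    have haq : a ≤ q := haP ▸ le_trans (Finset.inf_le hq) (le_refl (id q))
    have hpq : p ≤ q := hp.2 ⟨hqprime, haq⟩ hqp
    have hpe : p = q := le_antisymm hpq hqp
    rcases Finset.mem_union.mp hq with h | h
    · exact ha₀ ▸ le_trans (Finset.inf_le h) (le_of_eq hpe.symm)
    · exact absurd (hpe ▸ (hP₁ q h).2) (not_not.mpr hpgood)

lemma key_inter {n : ℕ} (a b c : Ideal (MvPolynomial (Fin n ⊕ Fin n) (ZMod 2)))
    (hab : a = b ⊓ c) (hb : ∃ i : Fin n, X (Sum.inl i) ∈ b ∧ X (Sum.inr i) ∈ b) :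
    {p ∈ a.minimalPrimes | NoPair p} = {p ∈ c.minimalPrimes | NoPair p} := by
  have forward : ∀ p, p ∈ a.minimalPrimes → NoPair p → p ∈ c.minimalPrimes := by
    intro p hp hpgood
    have hpprime : p.IsPrime := hp.1.1
    have hcp : c ≤ p := by
      rcases hpprime.inf_le.mp (hab ▸ hp.1.2) with h | h
      · obtain ⟨i, hxi, hyi⟩ := hb
        exact absurd ⟨i, h hxi, h hyi⟩ hpgood
      · exact h
    refine ⟨⟨hpprime, hcp⟩, ?_⟩
    intro q hq hqp
    exact hp.2 ⟨hq.1, hab ▸ le_trans inf_le_right hq.2⟩ hqp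
  ext p
  simp only [Set.mem_setOf_eq, Set.mem_sep_iff]
  constructor
  · rintro ⟨hp, hpgood⟩
    exact ⟨forward p hp hpgood, hpgood⟩
  · rintro ⟨hp, hpgood⟩
    have hpprime : p.IsPrime := hp.1.1
    have hap : a ≤ p := hab ▸ le_trans inf_le_right hp.1.2
    obtain ⟨q, hq, hqp⟩ := Ideal.exists_minimalPrimes_le hap
    have hqgood : NoPair q := by
      intro ⟨i, hxi, hyi⟩
      exact hpgood ⟨i, hqp hxi, hqp hyi⟩
    have hqc : q ∈ c.minimalPrimes := forward q hq hqgood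
    have hpq : p ≤ q := hp.2 ⟨hqc.1.1, hqc.1.2⟩ hqp
    have : p = q := le_antisymm hpq hqp
    exact ⟨this ▸ hq, hpgood⟩

lemma recomp_eq_sInf {n : ℕ} (a : Ideal (MvPolynomial (Fin n ⊕ Fin n) (ZMod 2))) :
    recomp a = sInf {p ∈ a.minimalPrimes | NoPair p} := rfl

/-- Lemma "oneatatime": if `𝔞 = 𝔞₀ ⊓ 𝔞₁ ⊓ ⋯ ⊓ 𝔞_t` where `𝔞₀` is an intersection of monomial
primes containing no pair `xᵢ, yᵢ` and each `𝔞_j` is an intersection of monomial primes all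
containing some fixed pair `x_{i_j}, y_{i_j}`, then recomposing `𝔞` (or any partial
intersection `𝔞₀ ∩ 𝔞_s ∩ ⋯ ∩ 𝔞_t`) yields `𝔞₀`; consequently if `𝔞 = 𝔟 ∩ 𝔠` with
`xᵢ, yᵢ ∈ 𝔟` for some `i`, then recomposing `𝔞` yields the recomposition of `𝔠`. -/
theorem stmt15 {n t : ℕ} (hn : 0 < n)
    (a : Ideal (MvPolynomial (Fin n ⊕ Fin n) (ZMod 2)))
    (a₀ : Ideal (MvPolynomial (Fin n ⊕ Fin n) (ZMod 2)))
    (aj : Fin t → Ideal (MvPolynomial (Fin n ⊕ Fin n) (ZMod 2)))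
    (ha : IsSqfreeMonomialIdeal a)
    (ha₀ : ∃ P : Finset (Ideal (MvPolynomial (Fin n ⊕ Fin n) (ZMod 2))),
      (∀ p ∈ P, IsMonomialPrime p ∧
        ¬∃ i : Fin n, X (Sum.inl i) ∈ p ∧ X (Sum.inr i) ∈ p) ∧
      a₀ = P.inf id)
    (haj : ∀ j : Fin t, ∃ (i : Fin n)
        (P : Finset (Ideal (MvPolynomial (Fin n ⊕ Fin n) (ZMod 2)))),
      (∀ p ∈ P, IsMonomialPrime p ∧ X (Sum.inl i) ∈ p ∧ X (Sum.inr i) ∈ p) ∧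
      aj j = P.inf id)
    (heq : a = a₀ ⊓ ⨅ j : Fin t, aj j) :
    recomp a = a₀ ∧
      (∀ s : Fin t, recomp (a₀ ⊓ ⨅ (j : Fin t) (_ : s ≤ j), aj j) = a₀) ∧
      (∀ b c : Ideal (MvPolynomial (Fin n ⊕ Fin n) (ZMod 2)),
        IsSqfreeMonomialIdeal b → IsSqfreeMonomialIdeal c → a = b ⊓ c →
        (∃ i : Fin n, X (Sum.inl i) ∈ b ∧ X (Sum.inr i) ∈ b) →
        recomp a = recomp c) := by
  classical
  obtain ⟨P₀, hP₀, ha₀'⟩ := ha₀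
  choose ij Pj hPj hajeq using haj
  have hP₀' : ∀ p ∈ P₀, p.IsPrime ∧ NoPair p := by
    intro p hp
    obtain ⟨V, hV⟩ := (hP₀ p hp).1
    exact ⟨hV ▸ span_X_isPrime V, (hP₀ p hp).2⟩
  have hPj' : ∀ j : Fin t, ∀ p ∈ Pj j, p.IsPrime ∧ ¬NoPair p := by
    intro j p hp
    obtain ⟨V, hV⟩ := (hPj j p hp).1
    exact ⟨hV ▸ span_X_isPrime V,
      not_not.mpr ⟨ij j, (hPj j p hp).2.1, (hPj j p hp).2.2⟩⟩
  have main : ∀ s : Finset (Fin t),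
      sInf {p ∈ (a₀ ⊓ ⨅ j ∈ s, aj j).minimalPrimes | NoPair p} = a₀ := by
    intro s
    refine key_recomp _ _ P₀ (s.biUnion Pj) hP₀' ?_ ha₀' ?_
    · intro p hp
      obtain ⟨j, _, hpj⟩ := Finset.mem_biUnion.mp hp
      exact hPj' j p hpj
    · rw [← ha₀']
      congr 1
      rw [Finset.inf_biUnion]
      have : ∀ j : Fin t, (Pj j).inf id = aj j := fun j => (hajeq j).symm
      simp_rw [this]
      rw [Finset.inf_eq_iInf]
  refine ⟨?_, ?_, ?_⟩
  · rw [recomp_eq_sInf]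
    have h1 : a = a₀ ⊓ ⨅ j ∈ (Finset.univ : Finset (Fin t)), aj j := by
      rw [heq]; congr 1; simp
    rw [h1]
    exact main Finset.univ
  · intro s
    rw [recomp_eq_sInf]
    have h1 : (⨅ (j : Fin t) (_ : s ≤ j), aj j)
        = ⨅ j ∈ Finset.univ.filter (fun j => s ≤ j), aj j := by
      simp
    rw [h1]
    exact main _
  · intro b c _ _ habc hb
    rw [recomp_eq_sInf, recomp_eq_sInf, key_inter a b c habc hb]
end
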